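/- arXiv:math/0106171 — 10 statements merged into one kernel-verified Lean document; each statement's English description precedes it below -/
import Mathlib

section
/- Let the pair (ν, B_g) be arbitrary. Then (ν, B_g) is of super Lie type if and only if ν_*(Cas_{g0}) is a constant in the Weyl algebra W(V); that is, if and only if the component of ν_*(Cas_{g0}) in S^4(V) vanishes. -/
/-  Kostant, "The Weyl algebra and the structure of all Lie superalgebras of Riemannian type",
    Theorem 0.1 / Theorem 2.8 (main criterion):  the pair `(ν, B_g)` is of super Lie type if and
    only if `ν_*(Cas_{g₀})` is a constant in the Weyl algebra `W(V)`, i.e. iff the component of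
    `ν_*(Cas_{g₀})` in `S⁴(V)` vanishes. -/

/-- The data of a Lie superalgebra structure on `g = g₀ ⊕ V` extending the bracket of `g₀`
and the action `ν` of `g₀` on `V`, and making the supersymmetric form `B_g = B_{g₀} ⊕ B_V`
invariant; it is given by the odd-odd bracket `m : V × V → g₀`.  The four conditions are:
super skew-symmetry on odd elements, the super Jacobi identity with one even and two odd
entries, the super Jacobi identity with three odd entries, and invariance of `B_g`
(the remaining Jacobi identities and invariance conditions hold automatically since `g₀` is a
Lie algebra, `ν` is a Lie algebra homomorphism, `B_{g₀}` is invariant and `ν` is symplectic). -/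
def IsSuperBracket {V L : Type} [AddCommGroup V] [Module ℂ V] [LieRing L] [LieAlgebra ℂ L]
    (B : LinearMap.BilinForm ℂ V) (B0 : LinearMap.BilinForm ℂ L)
    (ν : L →ₗ[ℂ] Module.End ℂ V) (m : V →ₗ[ℂ] V →ₗ[ℂ] L) : Prop :=
  (∀ y yp : V, m y yp = m yp y) ∧
  (∀ (x : L) (y yp : V), ⁅x, m y yp⁆ = m (ν x y) yp + m y (ν x yp)) ∧
  (∀ y yp ypp : V, ν (m y yp) ypp + ν (m yp ypp) y + ν (m ypp y) yp = 0) ∧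
  (∀ (y yp : V) (x : L), B0 (m y yp) x = - B yp (ν x y))

set_option maxHeartbeats 4000000 in
theorem super_lie_type_iff_casimir_constant
    (V : Type) [AddCommGroup V] [Module ℂ V] [FiniteDimensional ℂ V]
    (hdim : Even (Module.finrank ℂ V))
    (B : LinearMap.BilinForm ℂ V)
    (hBalt : ∀ v : V, B v v = 0)
    (hBnd : B.Nondegenerate)
    -- the symmetric algebra `S(V)`, given by its universal property
    (S : Type) [CommRing S] [Algebra ℂ S]
    (ιS : V →ₗ[ℂ] S)
    (hSuniv : ∀ (A : Type) [CommRing A] [Algebra ℂ A] (f : V →ₗ[ℂ] A),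
      ∃! g : S →ₐ[ℂ] A, ∀ v : V, g (ιS v) = f v)
    -- the grading `S(V) = ⊕ₙ Sⁿ(V)`
    (𝒜 : ℕ → Submodule ℂ S) [GradedAlgebra 𝒜]
    (h𝒜 : ∀ n : ℕ, 𝒜 n = LinearMap.range ιS ^ n)
    -- the contraction operators `ι_S(u)`: degree `-1` derivations of `S(V)`
    (DS : V →ₗ[ℂ] Module.End ℂ S)
    (hDSder : ∀ (u : V) (a b : S), DS u (a * b) = DS u a * b + a * DS u b)
    (hDSgen : ∀ u v : V, DS u (ιS v) = algebraMap ℂ S (B u v))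
    (hDSdeg : ∀ (u : V) (n : ℕ), ∀ s ∈ 𝒜 (n + 1), DS u s ∈ 𝒜 n)
    -- the Weyl algebra `W(V)`, given by its universal property
    (W : Type) [Ring W] [Algebra ℂ W]
    (ιW : V →ₗ[ℂ] W)
    (hWrel : ∀ u v : V, ιW u * ιW v - ιW v * ιW u = algebraMap ℂ W (2 * B u v))
    (hWuniv : ∀ (A : Type) [Ring A] [Algebra ℂ A] (f : V →ₗ[ℂ] A),
      (∀ u v : V, f u * f v - f v * f u = algebraMap ℂ A (2 * B u v)) →
      ∃! g : W →ₐ[ℂ] A, ∀ v : V, g (ιW v) = f v)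
    -- the identification `η : W(V) ≃ S(V)`, `η(w) = γ(w)1`
    (η : W ≃ₗ[ℂ] S)
    (hη1 : η 1 = 1)
    (hηγ : ∀ (u : V) (w : W), η (ιW u * w) = ιS u * η w + DS u (η w))
    -- the Lie algebra `g₀` with invariant form `B_{g₀}` and symplectic representation `ν`
    (L : Type) [LieRing L] [LieAlgebra ℂ L] [FiniteDimensional ℂ L]
    (B0 : LinearMap.BilinForm ℂ L)
    (hB0symm : ∀ x y : L, B0 x y = B0 y x)
    (hB0nd : B0.Nondegenerate)
    (hB0inv : ∀ x y z : L, B0 ⁅x, y⁆ z + B0 y ⁅x, z⁆ = 0)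
    (ν : L →ₗ[ℂ] Module.End ℂ V)
    (hνlie : ∀ x y : L, ν ⁅x, y⁆ = ν x * ν y - ν y * ν x)
    (hνsp : ∀ (x : L) (u v : V), B (ν x u) v + B u (ν x v) = 0)
    -- the lift `ν_* : g₀ → S²(V) ⊂ W(V)` of `ν`
    (νs : L →ₗ[ℂ] W)
    (hνs2 : ∀ x : L, η (νs x) ∈ 𝒜 2)
    (hνsad : ∀ (x : L) (v : V), νs x * ιW v - ιW v * νs x = ιW (ν x v))
    -- an orthonormal basis of `g₀`, defining the Casimir element
    (k : ℕ) (bx : Module.Basis (Fin k) ℂ L)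
    (hbx : ∀ i j, B0 (bx i) (bx j) = if i = j then (1:ℂ) else 0) :
    ((∃ m : V →ₗ[ℂ] V →ₗ[ℂ] L, IsSuperBracket B B0 ν m) ↔
      (∃ c : ℂ, η (∑ i, νs (bx i) * νs (bx i)) = algebraMap ℂ S c)) ∧
    ((∃ m : V →ₗ[ℂ] V →ₗ[ℂ] L, IsSuperBracket B B0 ν m) ↔
      DirectSum.decompose 𝒜 (η (∑ i, νs (bx i) * νs (bx i))) 4 = 0) := by
  -- basic facts about B
  have hBskew : ∀ u v : V, B u v = - B v u := by
    intro u v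
    have h := hBalt (u + v)
    simp only [map_add, LinearMap.add_apply, hBalt] at h
    linear_combination h
  have hBsym2 : ∀ (x : L) (u v : V), B u (ν x v) = B v (ν x u) := by
    intro x u v
    have h1 := hνsp x u v
    have h2 := hBskew (ν x u) v
    linear_combination h1 - h2
  -- S is nontrivial, algebraMap is injective
  have hSnt : Nontrivial S := by
    obtain ⟨g, -, -⟩ := hSuniv ℂ 0
    exact g.toRingHom.domain_nontrivial
  have halg : Function.Injective (algebraMap ℂ S) := (algebraMap ℂ S).injective
  -- DS kills constants
  have hDS1 : ∀ u : V, DS u 1 = 0 := by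
    intro u
    have h := hDSder u 1 1
    simp only [mul_one, one_mul] at h
    exact (left_eq_add.mp h)
  have hDSc : ∀ (u : V) (c : ℂ), DS u (algebraMap ℂ S c) = 0 := by
    intro u c
    rw [Algebra.algebraMap_eq_smul_one, map_smul, hDS1, smul_zero]
  -- injectivity of ιS
  have hιS0 : ∀ v : V, ιS v = 0 → v = 0 := by
    intro v hv
    apply hBnd.1
    intro w
    have h := hDSgen w v
    rw [hv, map_zero] at h
    have hb : B w v = 0 := halg (by rw [← h, map_zero])
    rw [hBskew]
    simp [hb]
  -- η facts
  have hηalg : ∀ c : ℂ, η (algebraMap ℂ W c) = algebraMap ℂ S c := by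
    intro c
    rw [Algebra.algebraMap_eq_smul_one, map_smul, hη1, Algebra.algebraMap_eq_smul_one]
  have hηι : ∀ u : V, η (ιW u) = ιS u := by
    intro u
    have h := hηγ u 1
    rw [mul_one, hη1, mul_one, hDS1, add_zero] at h
    exact h
  have hηιι : ∀ u v : V, η (ιW u * ιW v) = ιS u * ιS v + algebraMap ℂ S (B u v) := by
    intro u v
    rw [hηγ u (ιW v), hηι, hDSgen]
  have hιW0 : ∀ v : V, ιW v = 0 → v = 0 := by
    intro v hv
    apply hιS0
    rw [← hηι, hv, map_zero]
  have hιWinj : ∀ u v : V, ιW u = ιW v → u = v := by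
    intro u v huv
    have h := hιW0 (u - v) (by rw [map_sub, huv, sub_self])
    exact sub_eq_zero.mp h
  -- degree facts
  have hA0 : ∀ s ∈ 𝒜 0, ∃ c : ℂ, s = algebraMap ℂ S c := by
    intro s hs
    rw [h𝒜 0, pow_zero] at hs
    obtain ⟨c, hc⟩ := Submodule.mem_one.mp hs
    exact ⟨c, hc.symm⟩
  -- a basis and its B-dual
  set e : Module.Basis (Fin (Module.finrank ℂ V)) ℂ V := Module.finBasis ℂ V with he
  set f : Fin (Module.finrank ℂ V) → V :=
    fun a => (LinearMap.BilinForm.toDual B hBnd).symm (e.coord a) with hf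
  have hfB : ∀ (a) (w : V), B (f a) w = e.repr w a := by
    intro a w
    have h : LinearMap.BilinForm.toDual B hBnd (f a) = e.coord a :=
      (LinearMap.BilinForm.toDual B hBnd).apply_symm_apply _
    rw [← LinearMap.BilinForm.toDual_def hBnd, h, Module.Basis.coord_apply]
  have hfsum : ∀ v : V, ∑ a, B (f a) v • e a = v := by
    intro v
    simp_rw [hfB]
    exact e.sum_repr v
  -- Euler identity
  have euler : ∀ (nn : ℕ) (t : S), t ∈ LinearMap.range ιS ^ nn →
      ∑ a, ιS (e a) * DS (f a) t = (nn : ℂ) • t := by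
    intro nn t ht
    refine Submodule.pow_induction_on_left' (LinearMap.range ιS)
      (C := fun n x _ => ∑ a, ιS (e a) * DS (f a) x = (n : ℂ) • x) ?_ ?_ ?_ ht
    · intro r
      simp [hDSc]
    · intro x y i hx hy ihx ihy
      simp only [map_add, mul_add, Finset.sum_add_distrib, ihx, ihy, smul_add]
    · rintro mm ⟨v, rfl⟩ i x hx ih
      have step : ∀ a, ιS (e a) * DS (f a) (ιS v * x)
          = B (f a) v • (ιS (e a) * x) + ιS v * (ιS (e a) * DS (f a) x) := by
        intro a
        rw [hDSder, hDSgen, mul_add, Algebra.smul_def]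
        ring
      calc ∑ a, ιS (e a) * DS (f a) (ιS v * x)
          = ∑ a, (B (f a) v • (ιS (e a) * x) + ιS v * (ιS (e a) * DS (f a) x)) :=
            Finset.sum_congr rfl fun a _ => step a
        _ = (∑ a, B (f a) v • ιS (e a)) * x + ιS v * ∑ a, ιS (e a) * DS (f a) x := by
            rw [Finset.sum_add_distrib, Finset.sum_mul, ← Finset.mul_sum]
            congr 1
            exact Finset.sum_congr rfl fun a _ => (smul_mul_assoc _ _ _).symm
        _ = ιS v * x + (i : ℂ) • (ιS v * x) := by
            rw [ih, mul_smul_comm]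
            have hv : (∑ a, B (f a) v • ιS (e a)) = ιS v := by
              have h2 := congrArg ιS (hfsum v)
              rw [map_sum] at h2
              simpa [map_smul] using h2
            rw [hv]
        _ = ((i + 1 : ℕ) : ℂ) • (ιS v * x) := by
            push_cast
            rw [add_smul, one_smul, add_comm]
  -- nondegeneracy of single contraction in positive degree
  have nondeg1 : ∀ (nn : ℕ) (t : S), t ∈ 𝒜 (nn + 1) → (∀ u : V, DS u t = 0) → t = 0 := by
    intro nn t ht hD
    have h := euler (nn + 1) t (by rwa [h𝒜] at ht)
    simp only [hD, mul_zero, Finset.sum_const_zero] at h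
    have hc : ((nn + 1 : ℕ) : ℂ) ≠ 0 := Nat.cast_ne_zero.mpr (Nat.succ_ne_zero nn)
    exact (smul_eq_zero.mp h.symm).resolve_left hc
  have nondeg2 : ∀ t : S, t ∈ 𝒜 2 → (∀ u v : V, DS u (DS v t) = 0) → t = 0 := by
    intro t ht hD
    refine nondeg1 1 t ht fun u => nondeg1 0 _ (hDSdeg u 1 t ht) fun w => hD w u
  have nondeg4 : ∀ t : S, t ∈ 𝒜 4 →
      (∀ u1 u2 u3 u4 : V, DS u1 (DS u2 (DS u3 (DS u4 t))) = 0) → t = 0 := by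
    intro t ht hD
    refine nondeg1 3 t ht fun u4 => nondeg1 2 _ (hDSdeg u4 3 t ht) fun u3 =>
      nondeg1 1 _ (hDSdeg u3 2 _ (hDSdeg u4 3 t ht)) fun u2 =>
      nondeg1 0 _ (hDSdeg u2 1 _ (hDSdeg u3 2 _ (hDSdeg u4 3 t ht))) fun u1 => hD u1 u2 u3 u4
  -- representation of degree-2 elements
  have hrep : ∀ s ∈ 𝒜 2, ∃ (N : ℕ) (p q : Fin N → V), s = ∑ j, ιS (p j) * ιS (q j) := by
    intro s hs
    rw [h𝒜 2, pow_two] at hs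
    refine Submodule.mul_induction_on hs ?_ ?_
    · rintro _ ⟨pp, rfl⟩ _ ⟨qq, rfl⟩
      exact ⟨1, fun _ => pp, fun _ => qq, by simp⟩
    · rintro _ _ ⟨N1, p1, q1, rfl⟩ ⟨N2, p2, q2, rfl⟩
      refine ⟨N1 + N2, Fin.append p1 p2, Fin.append q1 q2, ?_⟩
      rw [Fin.sum_univ_add]
      simp [Fin.append_left, Fin.append_right]
  -- commutator of a quadratic monomial with a generator
  have hwcomm : ∀ pp qq y : V, (ιW pp * ιW qq) * ιW y - ιW y * (ιW pp * ιW qq)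
      = ιW ((2 * B pp y) • qq + (2 * B qq y) • pp) := by
    intro pp qq y
    have h1 := hWrel qq y
    have h2 := hWrel pp y
    have hsplit : (ιW pp * ιW qq) * ιW y - ιW y * (ιW pp * ιW qq)
        = ιW pp * (ιW qq * ιW y - ιW y * ιW qq) + (ιW pp * ιW y - ιW y * ιW pp) * ιW qq := by
      noncomm_ring
    rw [hsplit, h1, h2, map_add, map_smul, map_smul, ← Algebra.commutes, ← Algebra.smul_def,
      ← Algebra.smul_def, add_comm]
  -- the key per-element computation
  have KEY : ∀ x : L,
      (∀ u v : V, DS u (DS v (η (νs x))) = algebraMap ℂ S (-(1/2) * B u (ν x v))) ∧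
      (∃ κ : ℂ, η (νs x * νs x) = η (νs x) * η (νs x) + algebraMap ℂ S κ) := by
    intro x
    obtain ⟨N, p, q, hl⟩ := hrep (η (νs x)) (hνs2 x)
    set wl : W := ∑ j, ιW (p j) * ιW (q j) with hwl
    set c0 : ℂ := ∑ j, B (p j) (q j) with hc0
    have hηwl : η wl = η (νs x) + algebraMap ℂ S c0 := by
      rw [hwl, map_sum]
      simp_rw [hηιι]
      rw [Finset.sum_add_distrib, ← hl, hc0, map_sum]
    have hνsx : νs x = wl - algebraMap ℂ W c0 := by
      apply η.injective
      rw [map_sub, hηwl, hηalg]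
      ring
    -- the action of x on V in terms of the quadratic representation
    have hν : ∀ y : V, ν x y = ∑ j, ((2 * B (p j) y) • q j + (2 * B (q j) y) • p j) := by
      intro y
      apply hιWinj
      have h1 : ιW (ν x y) = wl * ιW y - ιW y * wl := by
        rw [← hνsad x y, hνsx]
        have hcen : algebraMap ℂ W c0 * ιW y = ιW y * algebraMap ℂ W c0 := Algebra.commutes _ _
        rw [sub_mul, mul_sub, hcen]
        abel
      rw [h1, hwl, Finset.sum_mul, Finset.mul_sum, ← Finset.sum_sub_distrib, map_sum]
      exact Finset.sum_congr rfl fun j _ => hwcomm (p j) (q j) y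
    -- first contraction of the symbol
    have hDsum : ∀ u : V, DS u (η (νs x))
        = ∑ j, (B u (p j) • ιS (q j) + B u (q j) • ιS (p j)) := by
      intro u
      rw [hl, map_sum]
      refine Finset.sum_congr rfl fun j _ => ?_
      rw [hDSder, hDSgen, hDSgen, Algebra.smul_def, Algebra.smul_def, ← Algebra.commutes]
    have hDs : ∀ u : V, DS u (η (νs x)) = ιS ((-(1/2) : ℂ) • ν x u) := by
      intro u
      rw [map_smul, hν u, map_sum, Finset.smul_sum, hDsum]
      refine Finset.sum_congr rfl fun j _ => ?_
      rw [map_add, map_smul, map_smul, smul_add, smul_smul, smul_smul]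
      rw [hBskew u (p j), hBskew u (q j)]
      ring_nf
    -- double contraction of the symbol
    have hDDs : ∀ u v : V, DS u (DS v (η (νs x))) = algebraMap ℂ S (-(1/2) * B u (ν x v)) := by
      intro u v
      rw [hDs v, map_smul, map_smul, hDSgen, Algebra.smul_def, ← map_mul]
    -- the scalar pairing identity
    have hpair : ∀ a b : V, (∑ j, (B a (p j) * B b (q j) + B a (q j) * B b (p j)))
        = -(1/2) * B b (ν x a) := by
      intro a b
      apply halg
      rw [← hDDs b a, hDsum a, map_sum, map_sum]
      refine (Finset.sum_congr rfl fun j _ => ?_).symm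
      rw [map_add, map_smul, map_smul, hDSgen, hDSgen, Algebra.smul_def, Algebra.smul_def,
        ← map_mul, ← map_mul, ← map_add]
    -- the degree-2 remainder
    set R2 : S := ∑ j, (ιS (p j) * DS (q j) (η (νs x)) + ιS (q j) * DS (p j) (η (νs x)))
      with hR2
    have hR2mem : R2 ∈ 𝒜 2 := by
      rw [hR2, h𝒜 2, pow_two]
      refine Submodule.sum_mem _ fun j _ => Submodule.add_mem _ ?_ ?_
      · refine Submodule.mul_mem_mul ⟨p j, rfl⟩ ?_
        have h := hDSdeg (q j) 1 (η (νs x)) (hνs2 x)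
        rwa [h𝒜 1, pow_one] at h
      · refine Submodule.mul_mem_mul ⟨q j, rfl⟩ ?_
        have h := hDSdeg (p j) 1 (η (νs x)) (hνs2 x)
        rwa [h𝒜 1, pow_one] at h
    have hterm : ∀ (j : Fin N) (u v : V),
        DS u (DS v (ιS (p j) * DS (q j) (η (νs x)) + ιS (q j) * DS (p j) (η (νs x))))
        = algebraMap ℂ S (B v (p j) * (-(1/2) * B u (ν x (q j)))
            + B u (p j) * (-(1/2) * B v (ν x (q j)))
            + (B v (q j) * (-(1/2) * B u (ν x (p j)))
            + B u (q j) * (-(1/2) * B v (ν x (p j))))) := by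
      intro j u v
      simp only [map_add, hDSder, hDSgen, hDDs, hDSc, zero_mul, mul_zero, add_zero, zero_add,
        map_zero]
      simp only [← map_mul, ← map_add]
    have hR2contr : ∀ u v : V, DS u (DS v R2) = 0 := by
      intro u v
      rw [hR2, map_sum, map_sum]
      have h1 : ∀ j ∈ Finset.univ, DS u (DS v (ιS (p j) * DS (q j) (η (νs x))
          + ιS (q j) * DS (p j) (η (νs x))))
          = algebraMap ℂ S (B v (p j) * (-(1/2) * B u (ν x (q j)))
            + B u (p j) * (-(1/2) * B v (ν x (q j)))
            + (B v (q j) * (-(1/2) * B u (ν x (p j)))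
            + B u (q j) * (-(1/2) * B v (ν x (p j))))) := fun j _ => hterm j u v
      rw [Finset.sum_congr rfl h1, ← map_sum, ← map_zero (algebraMap ℂ S)]
      congr 1
      have hx1 : ∀ j : Fin N, B v (p j) * (-(1/2) * B u (ν x (q j)))
            + B u (p j) * (-(1/2) * B v (ν x (q j)))
            + (B v (q j) * (-(1/2) * B u (ν x (p j)))
            + B u (q j) * (-(1/2) * B v (ν x (p j))))
          = (1/2) * ((B v (p j) * B (ν x u) (q j) + B v (q j) * B (ν x u) (p j))
            + (B u (p j) * B (ν x v) (q j) + B u (q j) * B (ν x v) (p j))) := by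
        intro j
        have e1 : B u (ν x (q j)) = - B (ν x u) (q j) := by
          rw [hBsym2 x u (q j), hBskew]
        have e2 : B u (ν x (p j)) = - B (ν x u) (p j) := by
          rw [hBsym2 x u (p j), hBskew]
        have e3 : B v (ν x (q j)) = - B (ν x v) (q j) := by
          rw [hBsym2 x v (q j), hBskew]
        have e4 : B v (ν x (p j)) = - B (ν x v) (p j) := by
          rw [hBsym2 x v (p j), hBskew]
        rw [e1, e2, e3, e4]
        ring
      rw [Finset.sum_congr rfl fun j _ => hx1 j, ← Finset.mul_sum, Finset.sum_add_distrib,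
        hpair v (ν x u), hpair u (ν x v), hBskew (ν x u) (ν x v)]
      ring
    have hR2zero : R2 = 0 := nondeg2 R2 hR2mem hR2contr
    -- the constant term
    set κ : ℂ := ∑ j, (-(1/2) * B (p j) (ν x (q j))) with hκ
    have hR0 : ∑ j, DS (p j) (DS (q j) (η (νs x))) = algebraMap ℂ S κ := by
      rw [hκ, map_sum]
      exact Finset.sum_congr rfl fun j _ => hDDs (p j) (q j)
    -- the product formula
    have hterm2 : ∀ j : Fin N, η (ιW (p j) * (ιW (q j) * νs x))
        = ιS (p j) * ιS (q j) * η (νs x) + algebraMap ℂ S (B (p j) (q j)) * η (νs x)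
          + (ιS (p j) * DS (q j) (η (νs x)) + ιS (q j) * DS (p j) (η (νs x)))
          + DS (p j) (DS (q j) (η (νs x))) := by
      intro j
      rw [hηγ, hηγ, map_add, hDSder, hDSgen]
      ring
    have hwlprod : η (wl * νs x) = η (νs x) * η (νs x) + algebraMap ℂ S c0 * η (νs x)
        + R2 + algebraMap ℂ S κ := by
      have hsplit : wl * νs x = ∑ j, ιW (p j) * (ιW (q j) * νs x) := by
        rw [hwl, Finset.sum_mul]
        exact Finset.sum_congr rfl fun j _ => mul_assoc _ _ _
      rw [hsplit, map_sum, Finset.sum_congr rfl fun j _ => hterm2 j]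
      rw [Finset.sum_add_distrib, Finset.sum_add_distrib, Finset.sum_add_distrib, hR0]
      congr 2
      · congr 1
        · rw [← Finset.sum_mul, ← hl]
        · rw [← Finset.sum_mul, ← map_sum, ← hc0]
    have hprodsplit : νs x * νs x = wl * νs x - algebraMap ℂ W c0 * νs x := by
      rw [← sub_mul, ← hνsx]
    have hprod : η (νs x * νs x) = η (νs x) * η (νs x) + algebraMap ℂ S κ := by
      rw [hprodsplit, map_sub, hwlprod, hR2zero]
      have hcs : η (algebraMap ℂ W c0 * νs x) = algebraMap ℂ S c0 * η (νs x) := by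
        rw [← Algebra.smul_def, map_smul, Algebra.smul_def]
      rw [hcs]
      ring
    exact ⟨hDDs, κ, hprod⟩
  -- expanding in the orthonormal basis of L
  have hB0basis : ∀ (i : Fin k) (z : L), B0 (bx i) z = bx.repr z i := by
    intro i z
    conv_lhs => rw [← bx.sum_repr z]
    rw [map_sum]
    simp [hbx, mul_ite]
  have hνz : ∀ (z : L) (y : V), ν z y = ∑ i, bx.repr z i • ν (bx i) y := by
    intro z y
    conv_lhs => rw [← bx.sum_repr z]
    rw [map_sum, LinearMap.sum_apply]
    exact Finset.sum_congr rfl fun i _ => by rw [map_smul, LinearMap.smul_apply]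
  -- the odd-odd bracket m
  set m : V →ₗ[ℂ] V →ₗ[ℂ] L := LinearMap.mk₂ ℂ
      (fun y yp => ∑ i, (-(B yp (ν (bx i) y))) • bx i)
      (by
        intro y1 y2 yp
        rw [← Finset.sum_add_distrib]
        exact Finset.sum_congr rfl fun i _ => by rw [map_add, map_add, neg_add, add_smul])
      (by
        intro c y yp
        rw [Finset.smul_sum]
        exact Finset.sum_congr rfl fun i _ => by
          rw [map_smul, map_smul, smul_eq_mul, smul_smul, mul_neg])
      (by
        intro y yp1 yp2
        rw [← Finset.sum_add_distrib]
        exact Finset.sum_congr rfl fun i _ => by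
          rw [map_add, LinearMap.add_apply, neg_add, add_smul])
      (by
        intro c y yp
        rw [Finset.smul_sum]
        exact Finset.sum_congr rfl fun i _ => by
          rw [map_smul, LinearMap.smul_apply, smul_eq_mul, smul_smul, mul_neg])
    with hmdef
  have hmapp : ∀ y yp : V, m y yp = ∑ i, (-(B yp (ν (bx i) y))) • bx i := fun y yp => rfl
  have hm0 : ∀ (y yp : V) (z : L), B0 (m y yp) z = - B yp (ν z y) := by
    intro y yp z
    rw [hmapp, map_sum, LinearMap.sum_apply]
    simp only [map_smul, LinearMap.smul_apply, smul_eq_mul, hB0basis]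
    rw [hνz z y, map_sum, ← Finset.sum_neg_distrib]
    refine Finset.sum_congr rfl fun i _ => ?_
    rw [map_smul, smul_eq_mul]
    ring
  have hmsym : ∀ y yp, m y yp = m yp y := by
    intro y yp
    rw [hmapp, hmapp]
    exact Finset.sum_congr rfl fun i _ => by rw [hBsym2]
  have hmeq : ∀ m' : V →ₗ[ℂ] V →ₗ[ℂ] L,
      (∀ (y yp : V) (z : L), B0 (m' y yp) z = - B yp (ν z y)) → m' = m := by
    intro m' hm'
    ext y yp
    have hz : ∀ z, B0 (m' y yp - m y yp) z = 0 := by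
      intro z
      rw [map_sub, LinearMap.sub_apply, hm' y yp z, hm0 y yp z]
      ring
    exact sub_eq_zero.mp (hB0nd.1 _ hz)
  -- Gram identity
  have hgram : ∀ a b c d : V, (∑ i, B a (ν (bx i) b) * B c (ν (bx i) d)) = B0 (m b a) (m d c) := by
    intro a b c d
    rw [hm0 b a (m d c), hmapp d c, map_sum, LinearMap.sum_apply, map_sum,
      ← Finset.sum_neg_distrib]
    refine Finset.sum_congr rfl fun i _ => ?_
    rw [map_smul, LinearMap.smul_apply, map_smul, smul_eq_mul]
    ring
  -- fourfold contraction of a square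
  have hq4 : ∀ (x : L) (u1 u2 u3 u4 : V),
      DS u1 (DS u2 (DS u3 (DS u4 (η (νs x) * η (νs x)))))
      = algebraMap ℂ S ((1/2) * (B u2 (ν x u3) * B u1 (ν x u4)
          + B u2 (ν x u4) * B u1 (ν x u3) + B u3 (ν x u4) * B u1 (ν x u2))) := by
    intro x u1 u2 u3 u4
    have hDD := (KEY x).1
    have h3 : ∀ a b c : V, DS a (DS b (DS c (η (νs x)))) = 0 := by
      intro a b c
      rw [hDD b c, hDSc]
    simp only [hDSder, map_add, hDD, hDSc, h3, zero_mul, mul_zero, add_zero, zero_add, map_zero]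
    simp only [← map_mul, ← map_add]
    try exact congrArg (algebraMap ℂ S) (by ring)
  -- the degree-4 component of the image of the Casimir element
  have hκi : ∀ i : Fin k, ∃ κ : ℂ, η (νs (bx i) * νs (bx i))
      = η (νs (bx i)) * η (νs (bx i)) + algebraMap ℂ S κ := fun i => (KEY (bx i)).2
  choose κf hκf using hκi
  set q : S := ∑ i, η (νs (bx i)) * η (νs (bx i)) with hqdef
  have hCas : η (∑ i, νs (bx i) * νs (bx i)) = q + algebraMap ℂ S (∑ i, κf i) := by
    rw [map_sum, Finset.sum_congr rfl fun i _ => hκf i, Finset.sum_add_distrib, ← map_sum]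
  have hqmem : q ∈ 𝒜 4 := by
    rw [h𝒜 4, hqdef]
    refine Submodule.sum_mem _ fun i _ => ?_
    have h2 := hνs2 (bx i)
    rw [h𝒜 2] at h2
    have h4 := Submodule.mul_mem_mul h2 h2
    rwa [← pow_add] at h4
  -- fourfold contraction of q in terms of the super Jacobi expression
  have hqcontr : ∀ u1 u2 u3 u4 : V, DS u1 (DS u2 (DS u3 (DS u4 q)))
      = algebraMap ℂ S ((1/2)
          * B (ν (m u1 u2) u3 + ν (m u2 u3) u1 + ν (m u3 u1) u2) u4) := by
    intro u1 u2 u3 u4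
    have hpairing : ∀ y1 y2 y3 y4 : V, B (ν (m y1 y2) y3) y4 = B0 (m y3 y4) (m y1 y2) := by
      intro y1 y2 y3 y4
      rw [hm0 y3 y4 (m y1 y2), hBskew (ν (m y1 y2) y3) y4]
    have hscal : (∑ i, (1/2 : ℂ) * (B u2 (ν (bx i) u3) * B u1 (ν (bx i) u4)
          + B u2 (ν (bx i) u4) * B u1 (ν (bx i) u3)
          + B u3 (ν (bx i) u4) * B u1 (ν (bx i) u2)))
        = (1/2) * B (ν (m u1 u2) u3 + ν (m u2 u3) u1 + ν (m u3 u1) u2) u4 := by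
      rw [← Finset.mul_sum]
      congr 1
      rw [Finset.sum_add_distrib, Finset.sum_add_distrib,
        hgram u2 u3 u1 u4, hgram u2 u4 u1 u3, hgram u3 u4 u1 u2]
      rw [map_add, map_add, LinearMap.add_apply, LinearMap.add_apply,
        hpairing u1 u2 u3 u4, hpairing u2 u3 u1 u4, hpairing u3 u1 u2 u4]
      rw [hmsym u3 u2, hmsym u4 u1, hmsym u4 u2, hmsym u4 u3, hmsym u2 u1,
        hB0symm (m u2 u3) (m u1 u4)]
      ring
    rw [hqdef, map_sum, map_sum, map_sum, map_sum,
      Finset.sum_congr rfl fun i _ => hq4 (bx i) u1 u2 u3 u4, ← map_sum, hscal]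
  -- main equivalence with the vanishing of q
  have hJiff : (∃ m' : V →ₗ[ℂ] V →ₗ[ℂ] L, IsSuperBracket B B0 ν m') ↔ q = 0 := by
    constructor
    · rintro ⟨m', h1, h2, h3, h4⟩
      have hm'm : m' = m := hmeq m' (fun y yp z => h4 y yp z)
      refine nondeg4 q hqmem fun u1 u2 u3 u4 => ?_
      rw [hqcontr u1 u2 u3 u4]
      have hJ : ν (m u1 u2) u3 + ν (m u2 u3) u1 + ν (m u3 u1) u2 = 0 := by
        have h := h3 u1 u2 u3
        rwa [hm'm] at h
      rw [hJ, map_zero, LinearMap.zero_apply, mul_zero, map_zero]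
    · intro hq0
      refine ⟨m, hmsym, ?_, ?_, fun y yp z => hm0 y yp z⟩
      · intro x y yp
        have hz : ∀ z, B0 (⁅x, m y yp⁆ - (m (ν x y) yp + m y (ν x yp))) z = 0 := by
          intro z
          rw [map_sub, LinearMap.sub_apply, map_add, LinearMap.add_apply]
          have e0 : B0 ⁅x, m y yp⁆ z = - B0 (m y yp) ⁅x, z⁆ := by
            linear_combination hB0inv x (m y yp) z
          rw [e0, hm0, hm0, hm0]
          have e1 : ν ⁅x, z⁆ y = ν x (ν z y) - ν z (ν x y) := by
            rw [hνlie x z]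
            simp [LinearMap.sub_apply, Module.End.mul_apply]
          rw [e1, map_sub]
          have e2 : B (ν x yp) (ν z y) = - B yp (ν x (ν z y)) := by
            linear_combination hνsp x yp (ν z y)
          rw [e2]
          ring
        exact sub_eq_zero.mp (hB0nd.1 _ hz)
      · intro y yp ypp
        have hcontr0 : ∀ u4 : V, B (ν (m y yp) ypp + ν (m yp ypp) y + ν (m ypp y) yp) u4 = 0 := by
          intro u4
          have h := hqcontr y yp ypp u4
          rw [hq0] at h
          simp only [map_zero] at h
          have h2 : (1/2 : ℂ) * B (ν (m y yp) ypp + ν (m yp ypp) y + ν (m ypp y) yp) u4 = 0 :=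
            halg (by rw [← h, map_zero])
          linear_combination 2 * h2
        exact hBnd.1 _ hcontr0
  have hA0mem : ∀ c : ℂ, algebraMap ℂ S c ∈ 𝒜 0 := by
    intro c
    rw [h𝒜 0, pow_zero]
    exact Submodule.algebraMap_mem c
  have hdec : (DirectSum.decompose 𝒜 (η (∑ i, νs (bx i) * νs (bx i))) 4 : S) = q := by
    rw [hCas, DirectSum.decompose_add, DirectSum.add_apply, Submodule.coe_add,
      DirectSum.decompose_of_mem_same 𝒜 hqmem,
      DirectSum.decompose_of_mem_ne 𝒜 (hA0mem (∑ i, κf i)) (by norm_num : (0:ℕ) ≠ 4), add_zero]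
  constructor
  · rw [hJiff]
    constructor
    · intro hq0
      exact ⟨∑ i, κf i, by rw [hCas, hq0, zero_add]⟩
    · rintro ⟨c, hc⟩
      have h0 : (DirectSum.decompose 𝒜 (η (∑ i, νs (bx i) * νs (bx i))) 4 : S) = 0 := by
        rw [hc]
        exact DirectSum.decompose_of_mem_ne 𝒜 (hA0mem c) (by norm_num : (0:ℕ) ≠ 4)
      rw [← hdec, h0]
  · rw [hJiff]
    constructor
    · intro hq0
      exact (ZeroMemClass.coe_eq_zero).mp (by rw [hdec, hq0])
    · intro h0
      rw [← hdec, h0, ZeroMemClass.coe_zero]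
end

section
/- Assume (ν, B_g) is of super Lie type. Then the Lie superalgebra structure on g = g0 ⊕ V is unique; in fact, for any y, y′ ∈ V the even element [y,y′] ∈ g0 is necessarily given by [y,y′] = 2 ν_*^t(y·y′), where y·y′ ∈ S^2(V) is the commutative product in S(V). Moreover B_g is then a super-Riemannian bilinear form on g, i.e., non-singular, supersymmetric and ad-invariant. -/
theorem super_lie_structure_unique
    (V : Type) [AddCommGroup V] [Module ℂ V] [FiniteDimensional ℂ V]
    (hdim : Even (Module.finrank ℂ V))
    (B : LinearMap.BilinForm ℂ V)
    (hBalt : ∀ v : V, B v v = 0)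
    (hBnd : B.Nondegenerate)
    -- the symmetric algebra `S(V)`, given by its universal property
    (S : Type) [CommRing S] [Algebra ℂ S]
    (ιS : V →ₗ[ℂ] S)
    (hSuniv : ∀ (A : Type) [CommRing A] [Algebra ℂ A] (f : V →ₗ[ℂ] A),
      ∃! g : S →ₐ[ℂ] A, ∀ v : V, g (ιS v) = f v)
    -- the grading `S(V) = ⊕ₙ Sⁿ(V)`
    (𝒜 : ℕ → Submodule ℂ S) [GradedAlgebra 𝒜]
    (h𝒜 : ∀ n : ℕ, 𝒜 n = LinearMap.range ιS ^ n)
    -- the contraction operators `ι_S(u)`: degree `-1` derivations of `S(V)`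
    (DS : V →ₗ[ℂ] Module.End ℂ S)
    (hDSder : ∀ (u : V) (a b : S), DS u (a * b) = DS u a * b + a * DS u b)
    (hDSgen : ∀ u v : V, DS u (ιS v) = algebraMap ℂ S (B u v))
    (hDSdeg : ∀ (u : V) (n : ℕ), ∀ s ∈ 𝒜 (n + 1), DS u s ∈ 𝒜 n)
    -- the Weyl algebra `W(V)`, given by its universal property
    (W : Type) [Ring W] [Algebra ℂ W]
    (ιW : V →ₗ[ℂ] W)
    (hWrel : ∀ u v : V, ιW u * ιW v - ιW v * ιW u = algebraMap ℂ W (2 * B u v))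
    (hWuniv : ∀ (A : Type) [Ring A] [Algebra ℂ A] (f : V →ₗ[ℂ] A),
      (∀ u v : V, f u * f v - f v * f u = algebraMap ℂ A (2 * B u v)) →
      ∃! g : W →ₐ[ℂ] A, ∀ v : V, g (ιW v) = f v)
    -- the identification `η : W(V) ≃ S(V)`, `η(w) = γ(w)1`
    (η : W ≃ₗ[ℂ] S)
    (hη1 : η 1 = 1)
    (hηγ : ∀ (u : V) (w : W), η (ιW u * w) = ιS u * η w + DS u (η w))
    -- the bilinear form `B_{S(V)}`
    (BS : LinearMap.BilinForm ℂ S)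
    (hBSorth : ∀ m n : ℕ, m ≠ n → ∀ w ∈ 𝒜 m, ∀ z ∈ 𝒜 n, BS w z = 0)
    (hBSperm : ∀ (n : ℕ) (u v : Fin n → V),
      BS (∏ i, ιS (u i)) (∏ i, ιS (v i)) =
        ∑ σ : Equiv.Perm (Fin n), ∏ i, B (u i) (v (σ i)))
    -- the Lie algebra `g₀` with invariant form `B_{g₀}` and symplectic representation `ν`
    (L : Type) [LieRing L] [LieAlgebra ℂ L] [FiniteDimensional ℂ L]
    (B0 : LinearMap.BilinForm ℂ L)
    (hB0symm : ∀ x y : L, B0 x y = B0 y x)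
    (hB0nd : B0.Nondegenerate)
    (hB0inv : ∀ x y z : L, B0 ⁅x, y⁆ z + B0 y ⁅x, z⁆ = 0)
    (ν : L →ₗ[ℂ] Module.End ℂ V)
    (hνlie : ∀ x y : L, ν ⁅x, y⁆ = ν x * ν y - ν y * ν x)
    (hνsp : ∀ (x : L) (u v : V), B (ν x u) v + B u (ν x v) = 0)
    -- the lift `ν_* : g₀ → S²(V) ⊂ W(V)` of `ν`
    (νs : L →ₗ[ℂ] W)
    (hνs2 : ∀ x : L, η (νs x) ∈ 𝒜 2)
    (hνsad : ∀ (x : L) (v : V), νs x * ιW v - ιW v * νs x = ιW (ν x v))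
    -- an orthonormal basis of `g₀`, defining the Casimir element
    (k : ℕ) (bx : Module.Basis (Fin k) ℂ L)
    (hbx : ∀ i j, B0 (bx i) (bx j) = if i = j then (1:ℂ) else 0)
    -- the transpose `ν_*ᵗ : S²(V) → g₀`
    (νt : S →ₗ[ℂ] L)
    (hνt : ∀ (x : L), ∀ w ∈ 𝒜 2, BS (η (νs x)) w = B0 x (νt w)) :
    -- the odd-odd bracket of any Lie superalgebra structure making `(ν, B_g)` of super Lie
    -- type is necessarily `[y,y'] = 2 ν_*ᵗ(y·y')`
    (∀ m : V →ₗ[ℂ] V →ₗ[ℂ] L, IsSuperBracket B B0 ν m →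
      ∀ y yp : V, m y yp = (2 : ℂ) • νt (ιS y * ιS yp)) ∧
    -- hence the Lie superalgebra structure is unique
    (∀ m mp : V →ₗ[ℂ] V →ₗ[ℂ] L,
      IsSuperBracket B B0 ν m → IsSuperBracket B B0 ν mp → m = mp) ∧
    -- and `B_g` is non-singular on `g = g₀ ⊕ V` (supersymmetry and ad-invariance are part of
    -- `IsSuperBracket` together with the hypotheses on `B_{g₀}`, `B_V` and `ν`)
    (∀ p : L × V, (∀ q : L × V, B0 p.1 q.1 + B p.2 q.2 = 0) → p = 0) := by
  -- `B` is skew-symmetric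
  have hBskew : ∀ u v : V, B u v = - B v u := by
    intro u v
    have h := hBalt (u + v)
    simp only [map_add, LinearMap.add_apply] at h
    rw [hBalt u, hBalt v] at h
    linear_combination h
  -- `DS u 1 = 0`
  have hDS1 : ∀ u : V, DS u (1 : S) = 0 := by
    intro u
    have h := hDSder u 1 1
    simp only [mul_one, one_mul] at h
    exact (left_eq_add.mp h)
  -- `η (ιW u) = ιS u`
  have hηι : ∀ u : V, η (ιW u) = ιS u := by
    intro u
    have h := hηγ u 1
    rw [mul_one, hη1, mul_one, hDS1, add_zero] at h
    exact h
  -- `BS` on degree one elements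
  have hBS1 : ∀ a b : V, BS (ιS a) (ιS b) = B a b := by
    intro a b
    have h := hBSperm 1 (fun _ => a) (fun _ => b)
    simpa [Fintype.card_perm] using h
  -- `BS` on degree two products
  have hBS2 : ∀ u v a b : V,
      BS (ιS u * ιS v) (ιS a * ιS b) = B u a * B v b + B u b * B v a := by
    intro u v a b
    have h := hBSperm 2 ![u, v] ![a, b]
    rw [show (Finset.univ : Finset (Equiv.Perm (Fin 2))) = {1, Equiv.swap 0 1} from by
        decide] at h
    rw [Finset.sum_pair (by decide)] at h
    simpa [Fin.prod_univ_two] using h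
  -- the key computation, linear in `s ∈ 𝒜 2`
  have key : ∀ y yp : V, ∀ s ∈ 𝒜 2,
      2 * BS s (ιS y * ιS yp)
        = - BS (ιS yp) (η (η.symm s * ιW y - ιW y * η.symm s)) := by
    intro y yp s hs
    rw [h𝒜 2, pow_two] at hs
    refine Submodule.mul_induction_on hs ?_ ?_
    · rintro a ⟨u, rfl⟩ b ⟨v, rfl⟩
      -- `η⁻¹ (ιS u * ιS v) = ιW u * ιW v - (B u v) • 1`
      have hηuv : η (ιW u * ιW v - (B u v) • 1) = ιS u * ιS v := by
        have h1 := hηγ u (ιW v)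
        rw [hηι v] at h1
        rw [map_sub, h1, hDSgen, map_smul, hη1, Algebra.algebraMap_eq_smul_one]
        exact add_sub_cancel_right _ _
      have hsymm : η.symm (ιS u * ιS v) = ιW u * ιW v - (B u v) • 1 :=
        η.symm_apply_eq.mpr hηuv.symm
      -- the commutator with `ιW y`
      have h1 : ιW v * ιW y = ιW y * ιW v + (2 * B v y) • (1 : W) := by
        have h := hWrel v y
        rw [Algebra.algebraMap_eq_smul_one] at h
        exact sub_eq_iff_eq_add'.mp h
      have h2 : ιW u * ιW y = ιW y * ιW u + (2 * B u y) • (1 : W) := by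
        have h := hWrel u y
        rw [Algebra.algebraMap_eq_smul_one] at h
        exact sub_eq_iff_eq_add'.mp h
      have h3 : ιW u * ιW v * ιW y
          = ιW y * (ιW u * ιW v) + (2 * B u y) • ιW v + (2 * B v y) • ιW u := by
        calc ιW u * ιW v * ιW y = ιW u * (ιW v * ιW y) := by rw [mul_assoc]
          _ = ιW u * (ιW y * ιW v) + (2 * B v y) • ιW u := by
              rw [h1, mul_add, mul_smul_comm, mul_one]
          _ = (ιW y * ιW u + (2 * B u y) • (1 : W)) * ιW v + (2 * B v y) • ιW u := by
              rw [← mul_assoc, h2]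
          _ = ιW y * (ιW u * ιW v) + (2 * B u y) • ιW v + (2 * B v y) • ιW u := by
              rw [add_mul, smul_mul_assoc, one_mul, mul_assoc]
      have hcomm : (ιW u * ιW v - (B u v) • 1) * ιW y
            - ιW y * (ιW u * ιW v - (B u v) • 1)
          = (2 * B u y) • ιW v + (2 * B v y) • ιW u := by
        have expand : (ιW u * ιW v - (B u v) • 1) * ιW y
              - ιW y * (ιW u * ιW v - (B u v) • 1)
            = ιW u * ιW v * ιW y - ιW y * (ιW u * ιW v) := by
          simp only [sub_mul, mul_sub, smul_mul_assoc, mul_smul_comm, one_mul, mul_one]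
          abel
        rw [expand, h3]
        abel
      rw [hsymm, hcomm]
      rw [map_add, map_smul, map_smul, hηι, hηι]
      rw [map_add, map_smul, map_smul]
      rw [hBS1, hBS1, hBS2]
      rw [hBskew yp v, hBskew yp u]
      simp only [smul_eq_mul]
      ring
    · intro x1 x2 hx1 hx2
      have e : η.symm (x1 + x2) * ιW y - ιW y * η.symm (x1 + x2)
          = (η.symm x1 * ιW y - ιW y * η.symm x1)
            + (η.symm x2 * ιW y - ιW y * η.symm x2) := by
        rw [map_add]
        noncomm_ring
      rw [e, map_add, map_add, LinearMap.add_apply, map_add]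
      linear_combination hx1 + hx2
  -- main computation : the odd-odd bracket is determined
  have main : ∀ m : V →ₗ[ℂ] V →ₗ[ℂ] L, IsSuperBracket B B0 ν m →
      ∀ y yp : V, m y yp = (2 : ℂ) • νt (ιS y * ιS yp) := by
    intro m hm y yp
    have hw2 : ιS y * ιS yp ∈ 𝒜 2 := by
      rw [h𝒜 2, pow_two]
      exact Submodule.mul_mem_mul (LinearMap.mem_range_self _ _)
        (LinearMap.mem_range_self _ _)
    rw [← sub_eq_zero]
    apply hB0nd.1
    intro x
    rw [map_sub, LinearMap.sub_apply, sub_eq_zero]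
    have h1 : B0 (m y yp) x = - B yp (ν x y) := hm.2.2.2 y yp x
    have h2 := key y yp (η (νs x)) (hνs2 x)
    rw [LinearEquiv.symm_apply_apply, hνsad x y, hηι, hBS1] at h2
    have h3 : B0 ((2 : ℂ) • νt (ιS y * ιS yp)) x
        = 2 * BS (η (νs x)) (ιS y * ιS yp) := by
      rw [map_smul, LinearMap.smul_apply, smul_eq_mul, hB0symm, ← hνt x _ hw2]
    rw [h1, h3, h2]
  refine ⟨main, ?_, ?_⟩
  · intro m mp hm hmp
    ext y yp
    rw [main m hm y yp, main mp hmp y yp]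
  · intro p hp
    have h1 : p.1 = 0 := hB0nd.1 p.1 fun x => by simpa using hp (x, 0)
    have h2 : p.2 = 0 := hBnd.1 p.2 fun v => by simpa using hp (0, v)
    exact Prod.ext h1 h2
end

section
/- For any w ∈ S^2(V), the square w^2 of w in the Weyl algebra W(V) lies in S^4(V) + ℂ, i.e., its component in S^2(V) vanishes. -/
/-!
Write `q u v := ιW u * ιW v - (u, v)`; by the defining property of `η` this is the element of `W(V)`
with `η (q u v) = u v`, and left multiplication by it acts through `η` as
`s ↦ u v s + (u ∂ᵥ s + v ∂ᵤ s) + ∂ᵤ ∂ᵥ s`, with `∂ = ι_S`. For two generators `u₁ v₁`, `u₂ v₂`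
of `S²(V)` the first-order terms of the anticommutator `q₁ q₂ + q₂ q₁` cancel because the form is
alternating, and the second-order terms are scalars; so `η (q₁ q₂ + q₂ q₁) ∈ S⁴(V) + ℂ`. The
anticommutator is bilinear, hence this holds on all of `S²(V)`, and `w² = ½ (w w + w w)`.
-/

open DirectSum
open scoped Pointwise

section WeylSymbol

variable {R V S W : Type*} [CommRing R] [AddCommGroup V] [Module R V]
  [CommRing S] [Algebra R S] [Ring W] [Algebra R W]
  {B : LinearMap.BilinForm R V} {ιS : V →ₗ[R] S} {ιW : V →ₗ[R] W}
  {DS : V →ₗ[R] Module.End R S} {η : W ≃ₗ[R] S}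
  (hDSder : ∀ (u : V) (a b : S), DS u (a * b) = DS u a * b + a * DS u b)
  (hDSgen : ∀ u v : V, DS u (ιS v) = algebraMap R S (B u v))

include hDSder in
theorem contraction_algebraMap (u : V) (c : R) :
    DS u (algebraMap R S c) = 0 :=
  (Derivation.mk' (DS u) fun a b => by rw [hDSder, smul_eq_mul, smul_eq_mul]; ring).map_algebraMap c

include hDSder hDSgen

theorem contraction_contraction_mul (x y u v : V) :
    DS x (DS y (ιS u * ιS v)) = algebraMap R S (B y u * B x v + B y v * B x u) := by
  simp only [hDSder, hDSgen, contraction_algebraMap hDSder, map_add, map_mul]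
  ring

theorem contraction_polar_cancel (hB : B.IsAlt) (u₁ v₁ u₂ v₂ : V) :
    (ιS u₁ * DS v₁ (ιS u₂ * ιS v₂) + ιS v₁ * DS u₁ (ιS u₂ * ιS v₂))
      + (ιS u₂ * DS v₂ (ιS u₁ * ιS v₁) + ιS v₂ * DS u₂ (ιS u₁ * ιS v₁)) = 0 := by
  simp only [hDSder, hDSgen, ← hB.neg_eq u₁, ← hB.neg_eq v₁, map_neg]
  ring

variable (hη1 : η 1 = 1) (hηγ : ∀ (u : V) (w : W), η (ιW u * w) = ιS u * η w + DS u (η w))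
include hηγ

theorem eta_symmLift_mul (u v : V) (w : W) :
    η ((ιW u * ιW v - algebraMap R W (B u v)) * w)
      = ιS u * ιS v * η w + (ιS u * DS v (η w) + ιS v * DS u (η w)) + DS u (DS v (η w)) := by
  rw [sub_mul, map_sub, ← Algebra.smul_def, map_smul, mul_assoc, hηγ, hηγ, map_add, hDSder,
    hDSgen, Algebra.smul_def]
  ring

include hη1

theorem eta_symm_ι_mul_ι (u v : V) :
    η.symm (ιS u * ιS v) = ιW u * ιW v - algebraMap R W (B u v) := by
  have hD1 (x : V) : DS x 1 = 0 := by simpa using contraction_algebraMap hDSder x 1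
  rw [LinearEquiv.symm_apply_eq, ← mul_one (_ - _), eta_symmLift_mul hDSder hDSgen hηγ, hη1,
    hD1, hD1, map_zero]
  ring

theorem eta_anticomm_ι_mul_ι (hB : B.IsAlt) (u₁ v₁ u₂ v₂ : V) :
    η (η.symm (ιS u₁ * ιS v₁) * η.symm (ιS u₂ * ιS v₂)
        + η.symm (ιS u₂ * ιS v₂) * η.symm (ιS u₁ * ιS v₁))
      = (2 : R) • (ιS u₁ * ιS v₁ * (ιS u₂ * ιS v₂))
        + algebraMap R S (2 * (B v₁ u₂ * B u₁ v₂ + B v₁ v₂ * B u₁ u₂)) := by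
  have hcancel := contraction_polar_cancel hDSder hDSgen hB u₁ v₁ u₂ v₂
  rw [map_add]
  nth_rw 1 [eta_symm_ι_mul_ι hDSder hDSgen hη1 hηγ u₁ v₁]
  nth_rw 2 [eta_symm_ι_mul_ι hDSder hDSgen hη1 hηγ u₂ v₂]
  simp only [eta_symmLift_mul hDSder hDSgen hηγ, LinearEquiv.apply_symm_apply,
    contraction_contraction_mul hDSder hDSgen, ← hB.neg_eq u₁ v₂, ← hB.neg_eq v₁ u₂,
    ← hB.neg_eq v₁ v₂, ← hB.neg_eq u₁ u₂, map_mul, map_add, map_neg, map_ofNat, two_smul]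
  linear_combination hcancel

end WeylSymbol

section Graded

variable {R V S W : Type*} [CommRing R] [AddCommGroup V] [Module R V]
  [CommRing S] [Algebra R S] [Ring W] [Algebra R W]

theorem decompose_eq_zero_of_mem_sup {ι M : Type*} [DecidableEq ι] [AddCommMonoid M] [Module R M]
    (𝒜 : ι → Submodule R M) [Decomposition 𝒜] {x : M} {i j k : ι} (hx : x ∈ 𝒜 i ⊔ 𝒜 j)
    (hki : i ≠ k) (hkj : j ≠ k) : decompose 𝒜 x k = 0 := by
  obtain ⟨a, ha, b, hb, rfl⟩ := Submodule.mem_sup.mp hx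
  ext
  simp [decompose_of_mem_ne 𝒜 ha hki, decompose_of_mem_ne 𝒜 hb hkj]

theorem eta_anticomm_mem_of_mem_two {B : LinearMap.BilinForm R V} (hB : B.IsAlt)
    {ιS : V →ₗ[R] S} {ιW : V →ₗ[R] W} {DS : V →ₗ[R] Module.End R S} {η : W ≃ₗ[R] S}
    (𝒜 : ℕ → Submodule R S) [GradedAlgebra 𝒜] (h𝒜 : ∀ n : ℕ, 𝒜 n = LinearMap.range ιS ^ n)
    (hDSder : ∀ (u : V) (a b : S), DS u (a * b) = DS u a * b + a * DS u b)
    (hDSgen : ∀ u v : V, DS u (ιS v) = algebraMap R S (B u v))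
    (hη1 : η 1 = 1) (hηγ : ∀ (u : V) (w : W), η (ιW u * w) = ιS u * η w + DS u (η w))
    {a b : W} (ha : η a ∈ 𝒜 2) (hb : η b ∈ 𝒜 2) : η (a * b + b * a) ∈ 𝒜 4 ⊔ 𝒜 0 := by
  let mulη := (LinearMap.mul R W).compl₁₂ (η.symm : S →ₗ[R] W) (η.symm : S →ₗ[R] W)
  let anticomm := (mulη + mulη.flip).compr₂ (η : W →ₗ[R] S)
  have hιS (v : V) : ιS v ∈ 𝒜 1 := by
    rw [h𝒜, pow_one]
    exact LinearMap.mem_range_self ιS v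
  have h𝒜₂ : 𝒜 2 = Submodule.span R (Set.range ιS * Set.range ιS) := by
    rw [h𝒜, pow_two, ← Submodule.span_mul_span, ← LinearMap.coe_range, Submodule.span_eq]
  suffices Submodule.map₂ anticomm (𝒜 2) (𝒜 2) ≤ 𝒜 4 ⊔ 𝒜 0 by
    simpa [anticomm, mulη] using Submodule.map₂_le.mp this _ ha _ hb
  rw [h𝒜₂, Submodule.map₂_span_span, Submodule.span_le]
  rintro _ ⟨_, ⟨_, ⟨u₁, rfl⟩, _, ⟨v₁, rfl⟩, rfl⟩, _, ⟨_, ⟨u₂, rfl⟩, _, ⟨v₂, rfl⟩, rfl⟩, rfl⟩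
  have hquartic : ιS u₁ * ιS v₁ * (ιS u₂ * ιS v₂) ∈ 𝒜 4 :=
    SetLike.mul_mem_graded (SetLike.mul_mem_graded (hιS u₁) (hιS v₁))
      (SetLike.mul_mem_graded (hιS u₂) (hιS v₂))
  simp only [anticomm, mulη, LinearMap.compr₂_apply, LinearMap.add_apply, LinearMap.flip_apply,
    LinearMap.compl₁₂_apply, LinearMap.mul_apply', LinearEquiv.coe_coe,
    eta_anticomm_ι_mul_ι hDSder hDSgen hη1 hηγ hB]
  exact Submodule.add_mem _ (Submodule.mem_sup_left (Submodule.smul_mem _ _ hquartic))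
    (Submodule.mem_sup_right (SetLike.algebraMap_mem_graded 𝒜 _))

end Graded

theorem weyl_square_of_S2_general
    (V : Type) [AddCommGroup V] [Module ℂ V]
    (B : LinearMap.BilinForm ℂ V)
    (hBalt : ∀ v : V, B v v = 0)
    -- the symmetric algebra `S(V)`, given by its universal property
    (S : Type) [CommRing S] [Algebra ℂ S]
    (ιS : V →ₗ[ℂ] S)
    -- the grading `S(V) = ⊕ₙ Sⁿ(V)`
    (𝒜 : ℕ → Submodule ℂ S) [GradedAlgebra 𝒜]
    (h𝒜 : ∀ n : ℕ, 𝒜 n = LinearMap.range ιS ^ n)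
    -- the contraction operators `ι_S(u)`: degree `-1` derivations of `S(V)`
    (DS : V →ₗ[ℂ] Module.End ℂ S)
    (hDSder : ∀ (u : V) (a b : S), DS u (a * b) = DS u a * b + a * DS u b)
    (hDSgen : ∀ u v : V, DS u (ιS v) = algebraMap ℂ S (B u v))
    -- the Weyl algebra `W(V)`, given by its universal property
    (W : Type) [Ring W] [Algebra ℂ W]
    (ιW : V →ₗ[ℂ] W)
    -- the identification `η : W(V) ≃ S(V)`, `η(w) = γ(w)1`
    (η : W ≃ₗ[ℂ] S)
    (hη1 : η 1 = 1)
    (hηγ : ∀ (u : V) (w : W), η (ιW u * w) = ιS u * η w + DS u (η w)) :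
    ∀ w : W, η w ∈ 𝒜 2 →
      η (w * w) ∈ 𝒜 4 ⊔ 𝒜 0 ∧
      DirectSum.decompose 𝒜 (η (w * w)) 2 = 0 := by
  intro w hw
  have hanticomm := eta_anticomm_mem_of_mem_two hBalt 𝒜 h𝒜 hDSder hDSgen hη1 hηγ hw hw
  have hsquare : η (w * w) = (2⁻¹ : ℂ) • η (w * w + w * w) := by
    rw [← two_smul ℂ (w * w), map_smul, smul_smul]
    norm_num
  have hmem : η (w * w) ∈ 𝒜 4 ⊔ 𝒜 0 := hsquare ▸ Submodule.smul_mem _ _ hanticomm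
  exact ⟨hmem, decompose_eq_zero_of_mem_sup 𝒜 hmem (by norm_num) (by norm_num)⟩

theorem weyl_square_of_S2
    (V : Type) [AddCommGroup V] [Module ℂ V] [FiniteDimensional ℂ V]
    (hdim : Even (Module.finrank ℂ V))
    (B : LinearMap.BilinForm ℂ V)
    (hBalt : ∀ v : V, B v v = 0)
    (hBnd : B.Nondegenerate)
    -- the symmetric algebra `S(V)`, given by its universal property
    (S : Type) [CommRing S] [Algebra ℂ S]
    (ιS : V →ₗ[ℂ] S)
    (hSuniv : ∀ (A : Type) [CommRing A] [Algebra ℂ A] (f : V →ₗ[ℂ] A),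
      ∃! g : S →ₐ[ℂ] A, ∀ v : V, g (ιS v) = f v)
    -- the grading `S(V) = ⊕ₙ Sⁿ(V)`
    (𝒜 : ℕ → Submodule ℂ S) [GradedAlgebra 𝒜]
    (h𝒜 : ∀ n : ℕ, 𝒜 n = LinearMap.range ιS ^ n)
    -- the contraction operators `ι_S(u)`: degree `-1` derivations of `S(V)`
    (DS : V →ₗ[ℂ] Module.End ℂ S)
    (hDSder : ∀ (u : V) (a b : S), DS u (a * b) = DS u a * b + a * DS u b)
    (hDSgen : ∀ u v : V, DS u (ιS v) = algebraMap ℂ S (B u v))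
    (hDSdeg : ∀ (u : V) (n : ℕ), ∀ s ∈ 𝒜 (n + 1), DS u s ∈ 𝒜 n)
    -- the Weyl algebra `W(V)`, given by its universal property
    (W : Type) [Ring W] [Algebra ℂ W]
    (ιW : V →ₗ[ℂ] W)
    (hWrel : ∀ u v : V, ιW u * ιW v - ιW v * ιW u = algebraMap ℂ W (2 * B u v))
    (hWuniv : ∀ (A : Type) [Ring A] [Algebra ℂ A] (f : V →ₗ[ℂ] A),
      (∀ u v : V, f u * f v - f v * f u = algebraMap ℂ A (2 * B u v)) →
      ∃! g : W →ₐ[ℂ] A, ∀ v : V, g (ιW v) = f v)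
    -- the identification `η : W(V) ≃ S(V)`, `η(w) = γ(w)1`
    (η : W ≃ₗ[ℂ] S)
    (hη1 : η 1 = 1)
    (hηγ : ∀ (u : V) (w : W), η (ιW u * w) = ιS u * η w + DS u (η w)) :
    ∀ w : W, η w ∈ 𝒜 2 →
      η (w * w) ∈ 𝒜 4 ⊔ 𝒜 0 ∧
      DirectSum.decompose 𝒜 (η (w * w)) 2 = 0 :=
  weyl_square_of_S2_general V B hBalt S ιS 𝒜 h𝒜 DS hDSder hDSgen W ιW η hη1 hηγ
end

section
/- One has ν_*(Cas_{g0}) ∈ S^4(V) + ℂ; that is, the image of the Casimir element under the algebra homomorphism ν_*: U(g0) → W(V) has components only in S^4(V) and S^0(V) = ℂ. -/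
/-  Kostant, (0.7)/(2.27):  `ν_*(Cas_{g₀}) ∈ S⁴(V) + ℂ`. -/

theorem casimir_image_in_S4_plus_constants
    (V : Type) [AddCommGroup V] [Module ℂ V] [FiniteDimensional ℂ V]
    (hdim : Even (Module.finrank ℂ V))
    (B : LinearMap.BilinForm ℂ V)
    (hBalt : ∀ v : V, B v v = 0)
    (hBnd : B.Nondegenerate)
    -- the symmetric algebra `S(V)`, given by its universal property
    (S : Type) [CommRing S] [Algebra ℂ S]
    (ιS : V →ₗ[ℂ] S)
    (hSuniv : ∀ (A : Type) [CommRing A] [Algebra ℂ A] (f : V →ₗ[ℂ] A),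
      ∃! g : S →ₐ[ℂ] A, ∀ v : V, g (ιS v) = f v)
    -- the grading `S(V) = ⊕ₙ Sⁿ(V)`
    (𝒜 : ℕ → Submodule ℂ S) [GradedAlgebra 𝒜]
    (h𝒜 : ∀ n : ℕ, 𝒜 n = LinearMap.range ιS ^ n)
    -- the contraction operators `ι_S(u)`: degree `-1` derivations of `S(V)`
    (DS : V →ₗ[ℂ] Module.End ℂ S)
    (hDSder : ∀ (u : V) (a b : S), DS u (a * b) = DS u a * b + a * DS u b)
    (hDSgen : ∀ u v : V, DS u (ιS v) = algebraMap ℂ S (B u v))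
    (hDSdeg : ∀ (u : V) (n : ℕ), ∀ s ∈ 𝒜 (n + 1), DS u s ∈ 𝒜 n)
    -- the Weyl algebra `W(V)`, given by its universal property
    (W : Type) [Ring W] [Algebra ℂ W]
    (ιW : V →ₗ[ℂ] W)
    (hWrel : ∀ u v : V, ιW u * ιW v - ιW v * ιW u = algebraMap ℂ W (2 * B u v))
    (hWuniv : ∀ (A : Type) [Ring A] [Algebra ℂ A] (f : V →ₗ[ℂ] A),
      (∀ u v : V, f u * f v - f v * f u = algebraMap ℂ A (2 * B u v)) →
      ∃! g : W →ₐ[ℂ] A, ∀ v : V, g (ιW v) = f v)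
    -- the identification `η : W(V) ≃ S(V)`, `η(w) = γ(w)1`
    (η : W ≃ₗ[ℂ] S)
    (hη1 : η 1 = 1)
    (hηγ : ∀ (u : V) (w : W), η (ιW u * w) = ιS u * η w + DS u (η w))
    -- the Lie algebra `g₀` with invariant form `B_{g₀}` and symplectic representation `ν`
    (L : Type) [LieRing L] [LieAlgebra ℂ L] [FiniteDimensional ℂ L]
    (B0 : LinearMap.BilinForm ℂ L)
    (hB0symm : ∀ x y : L, B0 x y = B0 y x)
    (hB0nd : B0.Nondegenerate)
    (hB0inv : ∀ x y z : L, B0 ⁅x, y⁆ z + B0 y ⁅x, z⁆ = 0)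
    (ν : L →ₗ[ℂ] Module.End ℂ V)
    (hνlie : ∀ x y : L, ν ⁅x, y⁆ = ν x * ν y - ν y * ν x)
    (hνsp : ∀ (x : L) (u v : V), B (ν x u) v + B u (ν x v) = 0)
    -- the lift `ν_* : g₀ → S²(V) ⊂ W(V)` of `ν`
    (νs : L →ₗ[ℂ] W)
    (hνs2 : ∀ x : L, η (νs x) ∈ 𝒜 2)
    (hνsad : ∀ (x : L) (v : V), νs x * ιW v - ιW v * νs x = ιW (ν x v))
    -- an orthonormal basis of `g₀`, defining the Casimir element
    (k : ℕ) (bx : Module.Basis (Fin k) ℂ L)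
    (hbx : ∀ i j, B0 (bx i) (bx j) = if i = j then (1:ℂ) else 0) :
    η (∑ i, νs (bx i) * νs (bx i)) ∈ 𝒜 4 ⊔ 𝒜 0 := by

  classical
  set M : Submodule ℂ S := LinearMap.range ιS with hM
  -- antisymmetry of B
  have hskew : ∀ x y : V, B x y = - B y x := by
    intro x y
    have h := hBalt (x + y)
    simp only [map_add, LinearMap.add_apply, hBalt] at h
    linear_combination h
  -- D kills 1 and constants
  have hDS1 : ∀ u : V, DS u (1 : S) = 0 := by
    intro u
    have h := hDSder u 1 1
    simp only [mul_one, one_mul] at h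
    have h2 : DS u (1:S) + DS u (1:S) = DS u (1:S) + 0 := by
      rw [add_zero]; exact h.symm
    exact add_left_cancel h2
  have hDSc : ∀ (u : V) (r : ℂ), DS u (algebraMap ℂ S r) = 0 := by
    intro u r
    rw [Algebra.algebraMap_eq_smul_one, map_smul, hDS1, smul_zero]
  -- η on generators
  have hηι : ∀ v : V, η (ιW v) = ιS v := by
    intro v
    have h := hηγ v 1
    rw [mul_one, hη1, mul_one, hDS1, add_zero] at h
    exact h
  have hη2 : ∀ a b : V, η (ιW a * ιW b) = ιS a * ιS b + algebraMap ℂ S (B a b) := by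
    intro a b
    rw [hηγ, hηι, hDSgen]
  -- η on constants and scalar multiples
  have hηsmul : ∀ (r : ℂ) (x : W), η (x * algebraMap ℂ W r) = r • η x := by
    intro r x
    rw [← Algebra.commutes r x, ← Algebra.smul_def, map_smul]
  -- the explicit formula for η(ιWu ιWv ιWa ιWb)
  have hXY : ∀ u v a b : V, η (ιW u * ιW v * (ιW a * ιW b)) =
      ιS u * ιS v * (ιS a * ιS b)
      + algebraMap ℂ S (B a b) * (ιS u * ιS v)
      + algebraMap ℂ S (B v a) * (ιS u * ιS b)
      + algebraMap ℂ S (B v b) * (ιS u * ιS a)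
      + algebraMap ℂ S (B u v) * (ιS a * ιS b)
      + algebraMap ℂ S (B u a) * (ιS v * ιS b)
      + algebraMap ℂ S (B u b) * (ιS v * ιS a)
      + algebraMap ℂ S (B u v) * algebraMap ℂ S (B a b)
      + algebraMap ℂ S (B v a) * algebraMap ℂ S (B u b)
      + algebraMap ℂ S (B v b) * algebraMap ℂ S (B u a) := by
    intro u v a b
    rw [mul_assoc, hηγ, hηγ, hη2]
    simp only [map_add, hDSder, hDSgen, hDSc, map_zero]
    ring
  -- membership facts
  have hmem0 : ∀ r : ℂ, algebraMap ℂ S r ∈ 𝒜 0 := by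
    intro r
    rw [Algebra.algebraMap_eq_smul_one]
    exact Submodule.smul_mem _ r SetLike.GradedOne.one_mem
  have hmem2 : ∀ x y : V, ιS x * ιS y ∈ M * M := by
    intro x y
    exact Submodule.mul_mem_mul ⟨x, rfl⟩ ⟨y, rfl⟩
  have hmem4 : ∀ u v a b : V, ιS u * ιS v * (ιS a * ιS b) ∈ 𝒜 4 := by
    intro u v a b
    rw [h𝒜, show (4:ℕ) = 2 + 2 from rfl, pow_add, pow_two]
    exact Submodule.mul_mem_mul (hmem2 u v) (hmem2 a b)
  -- the base case: generators of 𝒜2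
  have hbase : ∀ u v a b : V, ∀ w w' : W, η w = ιS u * ιS v → η w' = ιS a * ιS b →
      η (w * w' + w' * w) ∈ 𝒜 4 ⊔ 𝒜 0 := by
    intro u v a b w w' hw hw'
    have hwid : w = ιW u * ιW v - algebraMap ℂ W (B u v) := by
      apply η.injective
      rw [map_sub, hη2, hw]
      rw [show η (algebraMap ℂ W (B u v)) = algebraMap ℂ S (B u v) by
        rw [Algebra.algebraMap_eq_smul_one, map_smul, hη1, ← Algebra.algebraMap_eq_smul_one]]
      ring
    have hw'id : w' = ιW a * ιW b - algebraMap ℂ W (B a b) := by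
      apply η.injective
      rw [map_sub, hη2, hw']
      rw [show η (algebraMap ℂ W (B a b)) = algebraMap ℂ S (B a b) by
        rw [Algebra.algebraMap_eq_smul_one, map_smul, hη1, ← Algebra.algebraMap_eq_smul_one]]
      ring
    -- compute η (w * w')
    have h1 : η (w * w') = η (ιW u * ιW v * (ιW a * ιW b))
        - (B u v) • η (ιW a * ιW b) - (B a b) • η w := by
      have e1 : w * w' = w * (ιW a * ιW b) - w * algebraMap ℂ W (B a b) := by
        rw [hw'id, mul_sub]
      have e2 : w * (ιW a * ιW b) = ιW u * ιW v * (ιW a * ιW b)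
          - algebraMap ℂ W (B u v) * (ιW a * ιW b) := by
        rw [hwid, sub_mul]
      rw [e1, map_sub, e2, map_sub, hηsmul]
      congr 2
      rw [← Algebra.smul_def, map_smul]
    have h2 : η (w' * w) = η (ιW a * ιW b * (ιW u * ιW v))
        - (B a b) • η (ιW u * ιW v) - (B u v) • η w' := by
      have e1 : w' * w = w' * (ιW u * ιW v) - w' * algebraMap ℂ W (B u v) := by
        rw [hwid, mul_sub]
      have e2 : w' * (ιW u * ιW v) = ιW a * ιW b * (ιW u * ιW v)
          - algebraMap ℂ W (B a b) * (ιW u * ιW v) := by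
        rw [hw'id, sub_mul]
      rw [e1, map_sub, e2, map_sub, hηsmul]
      congr 2
      rw [← Algebra.smul_def, map_smul]
    have hval : η (w * w' + w' * w) =
        (ιS u * ιS v * (ιS a * ιS b) + ιS a * ιS b * (ιS u * ιS v))
        + (algebraMap ℂ S (B v a) * algebraMap ℂ S (B u b)
          + algebraMap ℂ S (B v a) * algebraMap ℂ S (B u b)
          + algebraMap ℂ S (B v b) * algebraMap ℂ S (B u a)
          + algebraMap ℂ S (B v b) * algebraMap ℂ S (B u a)) := by
      rw [map_add, h1, h2, hXY u v a b, hXY a b u v, hη2, hη2, hw, hw']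
      rw [hskew b u, hskew b v, hskew a u, hskew a v]
      simp only [map_neg, Algebra.smul_def]
      ring
    rw [hval]
    refine Submodule.add_mem _ (Submodule.mem_sup_left ?_) (Submodule.mem_sup_right ?_)
    · exact Submodule.add_mem _ (hmem4 u v a b) (hmem4 a b u v)
    · refine Submodule.add_mem _ (Submodule.add_mem _ (Submodule.add_mem _ ?_ ?_) ?_) ?_ <;>
        · rw [← map_mul]; exact hmem0 _
  -- the key lemma, by double induction over M * M
  have hkey : ∀ s ∈ M * M, ∀ w : W, η w = s → ∀ t ∈ M * M, ∀ w' : W, η w' = t →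
      η (w * w' + w' * w) ∈ 𝒜 4 ⊔ 𝒜 0 := by
    intro s hs
    refine Submodule.mul_induction_on hs ?_ ?_
    · rintro m ⟨u, rfl⟩ n ⟨v, rfl⟩ w hw t ht
      refine Submodule.mul_induction_on ht ?_ ?_
      · rintro m' ⟨a, rfl⟩ n' ⟨b, rfl⟩ w' hw'
        exact hbase u v a b w w' hw hw'
      · intro x y hx hy w' hw'
        have hw'eq : w' = η.symm x + η.symm y := by
          apply η.injective
          rw [map_add, η.apply_symm_apply, η.apply_symm_apply, hw']
        have hsplit : w * w' + w' * w =
            (w * η.symm x + η.symm x * w) + (w * η.symm y + η.symm y * w) := by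
          rw [hw'eq, mul_add, add_mul]; abel
        rw [hsplit, map_add]
        exact Submodule.add_mem _ (hx _ (η.apply_symm_apply x)) (hy _ (η.apply_symm_apply y))
    · intro x y hx hy w hw t ht w' hw'
      have hweq : w = η.symm x + η.symm y := by
        apply η.injective
        rw [map_add, η.apply_symm_apply, η.apply_symm_apply, hw]
      have hsplit : w * w' + w' * w =
          (η.symm x * w' + w' * η.symm x) + (η.symm y * w' + w' * η.symm y) := by
        rw [hweq, add_mul, mul_add]; abel
      rw [hsplit, map_add]
      exact Submodule.add_mem _ (hx _ (η.apply_symm_apply x) t ht w' hw')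
        (hy _ (η.apply_symm_apply y) t ht w' hw')
  -- each summand lies in 𝒜4 ⊔ 𝒜0
  have hi : ∀ i, η (νs (bx i) * νs (bx i)) ∈ 𝒜 4 ⊔ 𝒜 0 := by
    intro i
    have hmem : η (νs (bx i)) ∈ M * M := by
      have h := hνs2 (bx i)
      rwa [h𝒜, pow_two] at h
    have h := hkey _ hmem _ rfl _ hmem _ rfl
    rw [map_add, ← two_smul ℂ] at h
    have h2 := Submodule.smul_mem (𝒜 4 ⊔ 𝒜 0) ((2:ℂ)⁻¹) h
    rwa [smul_smul, inv_mul_cancel₀ two_ne_zero, one_smul] at h2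
  rw [map_sum]
  exact Submodule.sum_mem _ fun i _ => hi i
end

section
/- For any y, z ∈ W(V), the bilinear form B_{S(V)} satisfies (y, z) = χ(yz), where yz is the Weyl product and χ(w) denotes the component of w in S^0(V) = ℂ. -/
/-  Kostant, Proposition 2.5 (formula (2.15)):  for `y, z ∈ W(V)` one has `(y,z) = χ(yz)`,
    where `yz` is the Weyl product and `χ` is the component in `S⁰(V) = ℂ`. -/

set_option maxHeartbeats 2000000 in
theorem form_is_constant_term_of_weyl_product
    (V : Type) [AddCommGroup V] [Module ℂ V] [FiniteDimensional ℂ V]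
    (hdim : Even (Module.finrank ℂ V))
    (B : LinearMap.BilinForm ℂ V)
    (hBalt : ∀ v : V, B v v = 0)
    (hBnd : B.Nondegenerate)
    -- the symmetric algebra `S(V)`, given by its universal property
    (S : Type) [CommRing S] [Algebra ℂ S]
    (ιS : V →ₗ[ℂ] S)
    (hSuniv : ∀ (A : Type) [CommRing A] [Algebra ℂ A] (f : V →ₗ[ℂ] A),
      ∃! g : S →ₐ[ℂ] A, ∀ v : V, g (ιS v) = f v)
    -- the grading `S(V) = ⊕ₙ Sⁿ(V)`
    (𝒜 : ℕ → Submodule ℂ S) [GradedAlgebra 𝒜]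
    (h𝒜 : ∀ n : ℕ, 𝒜 n = LinearMap.range ιS ^ n)
    -- the contraction operators `ι_S(u)`: degree `-1` derivations of `S(V)`
    (DS : V →ₗ[ℂ] Module.End ℂ S)
    (hDSder : ∀ (u : V) (a b : S), DS u (a * b) = DS u a * b + a * DS u b)
    (hDSgen : ∀ u v : V, DS u (ιS v) = algebraMap ℂ S (B u v))
    (hDSdeg : ∀ (u : V) (n : ℕ), ∀ s ∈ 𝒜 (n + 1), DS u s ∈ 𝒜 n)
    -- the Weyl algebra `W(V)`, given by its universal property
    (W : Type) [Ring W] [Algebra ℂ W]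
    (ιW : V →ₗ[ℂ] W)
    (hWrel : ∀ u v : V, ιW u * ιW v - ιW v * ιW u = algebraMap ℂ W (2 * B u v))
    (hWuniv : ∀ (A : Type) [Ring A] [Algebra ℂ A] (f : V →ₗ[ℂ] A),
      (∀ u v : V, f u * f v - f v * f u = algebraMap ℂ A (2 * B u v)) →
      ∃! g : W →ₐ[ℂ] A, ∀ v : V, g (ιW v) = f v)
    -- the identification `η : W(V) ≃ S(V)`, `η(w) = γ(w)1`
    (η : W ≃ₗ[ℂ] S)
    (hη1 : η 1 = 1)
    (hηγ : ∀ (u : V) (w : W), η (ιW u * w) = ιS u * η w + DS u (η w))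
    -- the bilinear form `B_{S(V)}`
    (BS : LinearMap.BilinForm ℂ S)
    (hBSorth : ∀ m n : ℕ, m ≠ n → ∀ w ∈ 𝒜 m, ∀ z ∈ 𝒜 n, BS w z = 0)
    (hBSperm : ∀ (n : ℕ) (u v : Fin n → V),
      BS (∏ i, ιS (u i)) (∏ i, ιS (v i)) =
        ∑ σ : Equiv.Perm (Fin n), ∏ i, B (u i) (v (σ i))) :
    ∀ y z : W,
      (DirectSum.decompose 𝒜 (η (y * z)) 0 : S) = algebraMap ℂ S (BS (η y) (η z)) := by
  classical
  -- skew-symmetry of B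
  have hBskew : ∀ u v : V, B v u = -B u v := by
    intro u v
    have h := hBalt (u + v)
    simp only [map_add, LinearMap.add_apply, hBalt u, hBalt v] at h
    linear_combination h
  -- DS kills constants
  have hDS1 : ∀ u : V, DS u 1 = 0 := by
    intro u
    have h : DS u 1 = DS u 1 + DS u 1 := by simpa using hDSder u 1 1
    exact (left_eq_add.mp h)
  have hDSc : ∀ (u : V) (c : ℂ), DS u (algebraMap ℂ S c) = 0 := by
    intro u c
    rw [Algebra.algebraMap_eq_smul_one, map_smul, hDS1, smul_zero]
  -- 1 ∈ 𝒜 0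
  have hA0 : (1 : S) ∈ 𝒜 0 := by
    rw [h𝒜 0, pow_zero]
    exact Submodule.one_le.mp le_rfl
  -- monomials lie in the grading
  have hmono_mem : ∀ (n : ℕ) (v : Fin n → V), (∏ i, ιS (v i)) ∈ 𝒜 n := by
    intro n
    induction n with
    | zero => intro v; simpa using hA0
    | succ m ih =>
      intro v
      rw [h𝒜] at ih ⊢
      rw [Fin.prod_univ_castSucc, pow_succ]
      exact Submodule.mul_mem_mul (ih _) (LinearMap.mem_range_self _ _)
  -- the monomial set in S
  set MsetS : Set S := {w : S | ∃ (n : ℕ) (v : Fin n → V), w = ∏ i, ιS (v i)} with hMsetS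
  have hone_memS : (1 : S) ∈ MsetS := ⟨0, Fin.elim0, by simp⟩
  have hgen_memS : ∀ v : V, ιS v ∈ MsetS := fun v => ⟨1, fun _ => v, by simp⟩
  have hmulS : ∀ x ∈ MsetS, ∀ y ∈ MsetS, x * y ∈ MsetS := by
    rintro _ ⟨m, a, rfl⟩ _ ⟨n, b, rfl⟩
    refine ⟨m + n, Fin.append a b, ?_⟩
    rw [Fin.prod_univ_add]
    congr 1
    · exact (Finset.prod_congr rfl fun i _ => by rw [Fin.append_left]).symm
    · exact (Finset.prod_congr rfl fun i _ => by rw [Fin.append_right]).symm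
  -- span of monomials is a subalgebra, hence everything (via the universal property)
  have hspanS : ∀ s : S, s ∈ Submodule.span ℂ MsetS := by
    have hmul' : ∀ x y : S, x ∈ Submodule.span ℂ MsetS → y ∈ Submodule.span ℂ MsetS →
        x * y ∈ Submodule.span ℂ MsetS := by
      intro x y hx hy
      have hle : Submodule.span ℂ MsetS * Submodule.span ℂ MsetS ≤ Submodule.span ℂ MsetS := by
        rw [Submodule.span_mul_span]
        refine Submodule.span_le.mpr ?_
        rintro _ ⟨p, hp, q, hq, rfl⟩
        exact Submodule.subset_span (hmulS p hp q hq)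
      exact hle (Submodule.mul_mem_mul hx hy)
    set Sb : Subalgebra ℂ S :=
      { carrier := Submodule.span ℂ MsetS
        mul_mem' := fun hx hy => hmul' _ _ hx hy
        one_mem' := Submodule.subset_span hone_memS
        add_mem' := fun hx hy => Submodule.add_mem _ hx hy
        zero_mem' := Submodule.zero_mem _
        algebraMap_mem' := fun c => by
          rw [Algebra.algebraMap_eq_smul_one]
          exact Submodule.smul_mem _ _ (Submodule.subset_span hone_memS) } with hSb
    intro s
    obtain ⟨g0, hg0, hg0uniq⟩ := hSuniv S ιS
    set f : V →ₗ[ℂ] Sb :=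
      { toFun := fun v => ⟨ιS v, Submodule.subset_span (hgen_memS v)⟩
        map_add' := fun x y => Subtype.ext (by simp)
        map_smul' := fun c x => Subtype.ext (by simp) } with hf
    obtain ⟨g1, hg1, -⟩ := hSuniv Sb f
    have h1 : ∀ v : V, (Sb.val.comp g1) (ιS v) = ιS v := by
      intro v
      simp only [AlgHom.comp_apply, hg1 v, hf]
      rfl
    have e1 := hg0uniq (Sb.val.comp g1) h1
    have e2 := hg0uniq (AlgHom.id ℂ S) (fun v => rfl)
    have : Sb.val.comp g1 = AlgHom.id ℂ S := e1.trans e2.symm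
    have hs : Sb.val (g1 s) = s := by rw [← AlgHom.comp_apply, this]; rfl
    rw [← hs]
    exact (g1 s).2
  -- induction principle for S
  have indS : ∀ (p : S → Prop), p 0 → (∀ a b, p a → p b → p (a + b)) →
      (∀ (c : ℂ) (a : S), p a → p (c • a)) →
      (∀ (n : ℕ) (v : Fin n → V), p (∏ i, ιS (v i))) → ∀ s, p s := by
    intro p h0 hadd hsmul hmono s
    refine Submodule.span_induction ?_ h0 (fun a b _ _ => hadd a b) (fun c a _ => hsmul c a)
      (hspanS s)
    rintro _ ⟨n, v, rfl⟩
    exact hmono n v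
  -- the monomial set in W (lists, since W is noncommutative)
  set MsetW : Set W := {w : W | ∃ l : List V, w = (l.map ιW).prod} with hMsetW
  have hone_memW : (1 : W) ∈ MsetW := ⟨[], by simp⟩
  have hmulW : ∀ x ∈ MsetW, ∀ y ∈ MsetW, x * y ∈ MsetW := by
    rintro _ ⟨l₁, rfl⟩ _ ⟨l₂, rfl⟩
    exact ⟨l₁ ++ l₂, by rw [List.map_append, List.prod_append]⟩
  have hspanW : ∀ w : W, w ∈ Submodule.span ℂ MsetW := by
    have hmul' : ∀ x y : W, x ∈ Submodule.span ℂ MsetW → y ∈ Submodule.span ℂ MsetW →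
        x * y ∈ Submodule.span ℂ MsetW := by
      intro x y hx hy
      have hle : Submodule.span ℂ MsetW * Submodule.span ℂ MsetW ≤ Submodule.span ℂ MsetW := by
        rw [Submodule.span_mul_span]
        refine Submodule.span_le.mpr ?_
        rintro _ ⟨p, hp, q, hq, rfl⟩
        exact Submodule.subset_span (hmulW p hp q hq)
      exact hle (Submodule.mul_mem_mul hx hy)
    set Wb : Subalgebra ℂ W :=
      { carrier := Submodule.span ℂ MsetW
        mul_mem' := fun hx hy => hmul' _ _ hx hy
        one_mem' := Submodule.subset_span hone_memW
        add_mem' := fun hx hy => Submodule.add_mem _ hx hy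
        zero_mem' := Submodule.zero_mem _
        algebraMap_mem' := fun c => by
          rw [Algebra.algebraMap_eq_smul_one]
          exact Submodule.smul_mem _ _ (Submodule.subset_span hone_memW) } with hWb
    intro w
    obtain ⟨g0, hg0, hg0uniq⟩ := hWuniv W ιW hWrel
    set f : V →ₗ[ℂ] Wb :=
      { toFun := fun v => ⟨ιW v, Submodule.subset_span ⟨[v], by simp⟩⟩
        map_add' := fun x y => Subtype.ext (by simp)
        map_smul' := fun c x => Subtype.ext (by simp) } with hf
    have hfrel : ∀ u v : V, f u * f v - f v * f u = algebraMap ℂ Wb (2 * B u v) := by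
      intro u v
      apply Subtype.ext
      push_cast
      rw [← map_mul]
      exact hWrel u v
    obtain ⟨g1, hg1, -⟩ := hWuniv Wb f hfrel
    have h1 : ∀ v : V, (Wb.val.comp g1) (ιW v) = ιW v := by
      intro v
      simp only [AlgHom.comp_apply, hg1 v, hf]
      rfl
    have e1 := hg0uniq (Wb.val.comp g1) h1
    have e2 := hg0uniq (AlgHom.id ℂ W) (fun v => rfl)
    have heq : Wb.val.comp g1 = AlgHom.id ℂ W := e1.trans e2.symm
    have hw : Wb.val (g1 w) = w := by rw [← AlgHom.comp_apply, heq]; rfl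
    rw [← hw]
    exact (g1 w).2
  -- induction principle for W
  have indW : ∀ (p : W → Prop), p 0 → (∀ a b, p a → p b → p (a + b)) →
      (∀ (c : ℂ) (a : W), p a → p (c • a)) → p 1 →
      (∀ (u : V) (w : W), p w → p (ιW u * w)) → ∀ w, p w := by
    intro p h0 hadd hsmul h1 hstep w
    refine Submodule.span_induction ?_ h0 (fun a b _ _ => hadd a b) (fun c a _ => hsmul c a)
      (hspanW w)
    rintro _ ⟨l, rfl⟩
    induction l with
    | nil => simpa using h1
    | cons v l ih =>
      rw [List.map_cons, List.prod_cons]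
      exact hstep v _ ih
  -- derivation formula on monomials
  have hDSprod : ∀ (u : V) (m : ℕ) (v : Fin (m + 1) → V),
      DS u (∏ i, ιS (v i)) =
        ∑ j : Fin (m + 1), algebraMap ℂ S (B u (v j)) * ∏ i : Fin m, ιS (v (j.succAbove i)) := by
    intro u m
    induction m with
    | zero =>
      intro v
      simp [Fin.prod_univ_one, hDSgen]
    | succ m ih =>
      intro v
      rw [Fin.prod_univ_succ, hDSder, hDSgen, ih (fun i => v i.succ)]
      conv_rhs => rw [Fin.sum_univ_succ]
      congr 1
      · rw [Finset.mul_sum]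
        refine Finset.sum_congr rfl fun k _ => ?_
        conv_rhs => rw [Fin.prod_univ_succ]
        simp only [Fin.succ_succAbove_zero, Fin.succ_succAbove_succ]
        ring
  -- contractions commute
  have hDScomm : ∀ (u v : V) (s : S), DS u (DS v s) = DS v (DS u s) := by
    intro u v
    have key : ∀ (w : V) (s : S), DS u (DS v s) = DS v (DS u s) →
        DS u (DS v (ιS w * s)) = DS v (DS u (ιS w * s)) := by
      intro w s hs
      have e1 : DS v (ιS w * s) = algebraMap ℂ S (B v w) * s + ιS w * DS v s := by
        rw [hDSder, hDSgen]
      have e2 : DS u (ιS w * s) = algebraMap ℂ S (B u w) * s + ιS w * DS u s := by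
        rw [hDSder, hDSgen]
      have h1 : DS u (algebraMap ℂ S (B v w) * s) = algebraMap ℂ S (B v w) * DS u s := by
        rw [hDSder, hDSc, zero_mul, zero_add]
      have h2 : DS v (algebraMap ℂ S (B u w) * s) = algebraMap ℂ S (B u w) * DS v s := by
        rw [hDSder, hDSc, zero_mul, zero_add]
      have h3 : DS u (ιS w * DS v s) = algebraMap ℂ S (B u w) * DS v s + ιS w * DS u (DS v s) := by
        rw [hDSder, hDSgen]
      have h4 : DS v (ιS w * DS u s) = algebraMap ℂ S (B v w) * DS u s + ιS w * DS v (DS u s) := by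
        rw [hDSder, hDSgen]
      rw [e1, e2, map_add, map_add, h1, h2, h3, h4, hs]
      ring
    refine indS _ (by simp) (fun a b ha hb => by rw [map_add, map_add, map_add, map_add, ha, hb])
      (fun c a ha => by rw [map_smul, map_smul, map_smul, map_smul, ha]) ?_
    intro n
    induction n with
    | zero => intro w; simp [hDS1]
    | succ n ih =>
      intro w
      rw [Fin.prod_univ_succ]
      exact key (w 0) _ (ih fun i => w i.succ)
  -- right multiplication formula : η (w * ιW u) = ιS u * η w - DS u (η w)
  have hRM : ∀ (w : W) (u : V), η (w * ιW u) = ιS u * η w - DS u (η w) := by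
    refine indW _ (by simp) ?_ ?_ ?_ ?_
    · intro a b ha hb u
      rw [add_mul, map_add, ha, hb, map_add, map_add]
      ring
    · intro c a ha u
      rw [smul_mul_assoc, map_smul, ha, map_smul, map_smul]
      rw [smul_sub, mul_smul_comm]
    · intro u
      have h := hηγ u 1
      rw [mul_one] at h
      rw [one_mul, h, hη1, hDS1, mul_one]
      simp
    · intro v w ih u
      rw [mul_assoc, hηγ v (w * ιW u), ih u, hηγ v w]
      rw [mul_sub, map_sub]
      have hder : DS v (ιS u * η w) = algebraMap ℂ S (B v u) * η w + ιS u * DS v (η w) := by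
        rw [hDSder, hDSgen]
      have hder2 : DS u (ιS v * η w) = algebraMap ℂ S (B u v) * η w + ιS v * DS u (η w) := by
        rw [hDSder, hDSgen]
      rw [hder, map_add, hder2, hDScomm u v, hBskew u v, map_neg]
      ring
  -- the bijection (j, e) ↦ σ with σ 0 = j, σ i.succ = j.succAbove (e i)
  have hPerm : ∀ m : ℕ, ∃ Φ : Fin (m + 1) × Equiv.Perm (Fin m) → Equiv.Perm (Fin (m + 1)),
      Function.Bijective Φ ∧
        ∀ p : Fin (m + 1) × Equiv.Perm (Fin m),
          (Φ p) 0 = p.1 ∧ ∀ i : Fin m, (Φ p) i.succ = p.1.succAbove (p.2 i) := by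
    intro m
    have hinj : ∀ (j : Fin (m + 1)) (e : Equiv.Perm (Fin m)),
        Function.Injective (Fin.cons j (fun i => j.succAbove (e i)) : Fin (m + 1) → Fin (m + 1)) := by
      intro j e x y h
      induction x using Fin.cases with
      | zero =>
        induction y using Fin.cases with
        | zero => rfl
        | succ i =>
          rw [Fin.cons_zero, Fin.cons_succ] at h
          exact absurd h.symm (Fin.succAbove_ne j (e i))
      | succ i =>
        induction y using Fin.cases with
        | zero =>
          rw [Fin.cons_zero, Fin.cons_succ] at h
          exact absurd h (Fin.succAbove_ne j (e i))
        | succ k =>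
          rw [Fin.cons_succ, Fin.cons_succ] at h
          rw [e.injective (Fin.succAbove_right_injective h)]
    refine ⟨fun p => Equiv.ofBijective _
      ((Fintype.bijective_iff_injective_and_card _).mpr ⟨hinj p.1 p.2, rfl⟩),
      (Fintype.bijective_iff_injective_and_card _).mpr ⟨?_, ?_⟩, ?_⟩
    · -- injectivity
      rintro ⟨j, e⟩ ⟨j', e'⟩ h
      have h0 : j = j' := by
        have := congrArg (fun σ : Equiv.Perm (Fin (m + 1)) => σ 0) h
        simpa using this
      subst h0
      have he : e = e' := by
        refine Equiv.ext fun i => ?_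
        have := congrArg (fun σ : Equiv.Perm (Fin (m + 1)) => σ i.succ) h
        simp only [Equiv.ofBijective_apply, Fin.cons_succ] at this
        exact Fin.succAbove_right_injective this
      rw [he]
    · -- cardinality
      simp [Fintype.card_perm, Nat.factorial_succ]
    · intro p
      exact ⟨by simp, fun i => by simp⟩
  -- key combinatorial identity, left version
  have hcomb : ∀ (u : V) (m : ℕ) (a : Fin m → V) (b : Fin (m + 1) → V),
      BS (∏ i : Fin (m + 1), ιS ((Fin.cons u a : Fin (m + 1) → V) i)) (∏ i, ιS (b i)) =
        ∑ j : Fin (m + 1), B u (b j) *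
          ∑ e : Equiv.Perm (Fin m), ∏ i, B (a i) (b (j.succAbove (e i))) := by
    intro u m a b
    obtain ⟨Φ, hbij, hspec⟩ := hPerm m
    rw [hBSperm]
    rw [← Fintype.sum_bijective Φ hbij
      (fun p => ∏ i : Fin (m + 1), B ((Fin.cons u a : Fin (m + 1) → V) i) (b (Φ p i)))
      (fun σ => ∏ i : Fin (m + 1), B ((Fin.cons u a : Fin (m + 1) → V) i) (b (σ i))) (fun p => rfl)]
    rw [Fintype.sum_prod_type]
    refine Finset.sum_congr rfl fun j _ => ?_
    rw [Finset.mul_sum]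
    refine Finset.sum_congr rfl fun e _ => ?_
    rw [Fin.prod_univ_succ, (hspec (j, e)).1, Fin.cons_zero]
    congr 1
    refine Finset.prod_congr rfl fun i _ => ?_
    rw [(hspec (j, e)).2 i, Fin.cons_succ]
  -- key combinatorial identity, right version
  have hcombb : ∀ (u : V) (m : ℕ) (a : Fin (m + 1) → V) (b : Fin m → V),
      BS (∏ i, ιS (a i)) (∏ i : Fin (m + 1), ιS ((Fin.cons u b : Fin (m + 1) → V) i)) =
        ∑ j : Fin (m + 1), (-(B u (a j))) *
          ∑ e : Equiv.Perm (Fin m), ∏ i, B (a (j.succAbove i)) (b (e i)) := by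
    intro u m a b
    obtain ⟨Φ, hbij, hspec⟩ := hPerm m
    rw [hBSperm]
    have hbij' : Function.Bijective (fun p : Fin (m + 1) × Equiv.Perm (Fin m) => (Φ p)⁻¹) :=
      (Function.Involutive.bijective inv_involutive).comp hbij
    rw [← Fintype.sum_bijective _ hbij'
      (fun p => ∏ i : Fin (m + 1), B (a i) ((Fin.cons u b : Fin (m + 1) → V) ((Φ p)⁻¹ i)))
      (fun σ => ∏ i : Fin (m + 1), B (a i) ((Fin.cons u b : Fin (m + 1) → V) (σ i))) (fun p => rfl)]
    rw [Fintype.sum_prod_type]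
    refine Finset.sum_congr rfl fun j _ => ?_
    -- per-term computation
    have hterm : ∀ e : Equiv.Perm (Fin m),
        (∏ i : Fin (m + 1), B (a i) ((Fin.cons u b : Fin (m + 1) → V) ((Φ (j, e))⁻¹ i))) =
          (-(B u (a j))) * ∏ i, B (a (j.succAbove i)) (b (e⁻¹ i)) := by
      intro e
      have h1 : (∏ i : Fin (m + 1), B (a i) ((Fin.cons u b : Fin (m + 1) → V) ((Φ (j, e))⁻¹ i))) =
          ∏ i : Fin (m + 1), B (a (Φ (j, e) i)) ((Fin.cons u b : Fin (m + 1) → V) i) := by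
        rw [← Equiv.prod_comp (Φ (j, e))
          (fun i => B (a i) ((Fin.cons u b : Fin (m + 1) → V) ((Φ (j, e))⁻¹ i)))]
        refine Finset.prod_congr rfl fun i _ => ?_
        rw [Equiv.Perm.inv_def, Equiv.symm_apply_apply]
      rw [h1, Fin.prod_univ_succ, (hspec (j, e)).1, Fin.cons_zero, hBskew u (a j)]
      congr 1
      have h2 : (∏ i : Fin m, B (a (Φ (j, e) i.succ)) ((Fin.cons u b : Fin (m + 1) → V) i.succ)) =
          ∏ i : Fin m, B (a (j.succAbove (e i))) (b i) := by
        refine Finset.prod_congr rfl fun i _ => ?_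
        rw [(hspec (j, e)).2 i, Fin.cons_succ]
      rw [h2]
      rw [← Equiv.prod_comp e (fun i => B (a (j.succAbove i)) (b (e⁻¹ i)))]
      refine Finset.prod_congr rfl fun i _ => ?_
      rw [Equiv.Perm.inv_def, Equiv.symm_apply_apply]
    rw [Finset.sum_congr rfl fun e _ => hterm e]
    rw [← Finset.mul_sum]
    congr 1
    exact Fintype.sum_bijective (fun e : Equiv.Perm (Fin m) => e⁻¹)
      (Function.Involutive.bijective inv_involutive)
      _ _ (fun e => rfl)
  -- prepend a factor to a monomial
  have hcons : ∀ (u : V) (m : ℕ) (a : Fin m → V),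
      ιS u * ∏ i, ιS (a i) = ∏ i : Fin (m + 1), ιS ((Fin.cons u a : Fin (m + 1) → V) i) := by
    intro u m a
    rw [Fin.prod_univ_succ]
    simp
  have hBS11 : BS (1 : S) 1 = 1 := by
    have h := hBSperm 0 Fin.elim0 Fin.elim0
    simpa using h
  -- χ(s) = BS 1 s
  have hchi : ∀ s : S, (DirectSum.decompose 𝒜 s 0 : S) = algebraMap ℂ S (BS 1 s) := by
    refine indS _ (by simp) ?_ ?_ ?_
    · intro a b ha hb
      have hd : (DirectSum.decompose 𝒜 (a + b) 0 : S) =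
          (DirectSum.decompose 𝒜 a 0 : S) + (DirectSum.decompose 𝒜 b 0 : S) := by
        simp
      rw [hd, ha, hb, map_add, map_add]
    · intro c a ha
      have hd : (DirectSum.decompose 𝒜 (c • a) 0 : S) = c • (DirectSum.decompose 𝒜 a 0 : S) := by
        rw [DirectSum.decompose_smul, DirectSum.smul_apply, Submodule.coe_smul]
      rw [hd, ha, map_smul, smul_eq_mul, map_mul]
      rw [Algebra.smul_def]
    · intro n v
      match n, v with
      | 0, v =>
        rw [Fin.prod_univ_zero]
        rw [DirectSum.decompose_of_mem_same 𝒜 hA0, hBS11, map_one]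
      | (n + 1), v =>
        rw [DirectSum.decompose_of_mem_ne 𝒜 (hmono_mem (n + 1) v) (Nat.succ_ne_zero n)]
        rw [hBSorth 0 (n + 1) (by omega) 1 hA0 _ (hmono_mem (n + 1) v), map_zero]
  -- adjointness, first form : BS (ιS u * s) t = BS s (DS u t)
  have hL3a : ∀ (u : V) (s t : S), BS (ιS u * s) t = BS s (DS u t) := by
    intro u s
    refine indS (fun s => ∀ t, BS (ιS u * s) t = BS s (DS u t)) ?_ ?_ ?_ ?_ s
    · intro t
      rw [mul_zero, map_zero, LinearMap.zero_apply, LinearMap.zero_apply]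
    · intro a b ha hb t
      simp only [mul_add, map_add, LinearMap.add_apply, ha t, hb t]
    · intro c a ha t
      simp only [mul_smul_comm, map_smul, LinearMap.smul_apply, ha t]
    · intro m a
      refine indS (fun t => BS (ιS u * ∏ i, ιS (a i)) t = BS (∏ i, ιS (a i)) (DS u t)) ?_ ?_ ?_ ?_
      · simp
      · intro x y hx hy
        simp only [map_add, hx, hy]
      · intro c x hx
        simp only [map_smul, hx]
      · intro n b
        cases n with
        | zero =>
          rw [Fin.prod_univ_zero, hDS1, map_zero, hcons u m a]
          exact hBSorth (m + 1) 0 (by omega) _ (hmono_mem (m + 1) _) 1 hA0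
        | succ k =>
          by_cases hk : k = m
          · subst hk
            rw [hcons u k a, hcomb u k a b, hDSprod u k b, map_sum]
            refine Finset.sum_congr rfl fun j _ => ?_
            rw [← Algebra.smul_def, map_smul, smul_eq_mul,
              hBSperm k a (fun i => b (j.succAbove i))]
          · have h1 : BS (ιS u * ∏ i, ιS (a i)) (∏ i, ιS (b i)) = 0 := by
              rw [hcons u m a]
              exact hBSorth (m + 1) (k + 1) (by omega) _ (hmono_mem (m + 1) _) _
                (hmono_mem (k + 1) b)
            have h2 : BS (∏ i, ιS (a i)) (DS u (∏ i, ιS (b i))) = 0 :=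
              hBSorth m k (fun h => hk h.symm) _ (hmono_mem m a) _
                (hDSdeg u k _ (hmono_mem (k + 1) b))
            rw [h1, h2]
  -- adjointness, second form : BS s (ιS u * t) = - BS (DS u s) t
  have hL3b : ∀ (u : V) (s t : S), BS s (ιS u * t) = -BS (DS u s) t := by
    intro u s
    refine indS (fun s => ∀ t, BS s (ιS u * t) = -BS (DS u s) t) ?_ ?_ ?_ ?_ s
    · intro t
      simp
    · intro a b ha hb t
      simp only [map_add, LinearMap.add_apply, ha t, hb t]
      ring
    · intro c a ha t
      simp only [map_smul, LinearMap.smul_apply, ha t, smul_eq_mul]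
      ring
    · intro m a
      cases m with
      | zero =>
        refine indS (fun t => BS (∏ i : Fin 0, ιS (a i)) (ιS u * t) =
          -BS (DS u (∏ i : Fin 0, ιS (a i))) t) ?_ ?_ ?_ ?_
        · simp
        · intro x y hx hy
          simp only [mul_add, map_add, hx, hy]
          ring
        · intro c x hx
          simp only [mul_smul_comm, map_smul, hx, smul_eq_mul]
          ring
        · intro n b
          rw [Fin.prod_univ_zero, hDS1, map_zero, LinearMap.zero_apply, neg_zero, hcons u n b]
          exact hBSorth 0 (n + 1) (by omega) 1 hA0 _ (hmono_mem (n + 1) _)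
      | succ m =>
        refine indS (fun t => BS (∏ i, ιS (a i)) (ιS u * t) =
          -BS (DS u (∏ i, ιS (a i))) t) ?_ ?_ ?_ ?_
        · simp
        · intro x y hx hy
          simp only [mul_add, map_add, hx, hy]
          ring
        · intro c x hx
          simp only [mul_smul_comm, map_smul, hx, smul_eq_mul]
          ring
        · intro n b
          by_cases hn : n = m
          · subst hn
            rw [hcons u n b, hcombb u n a b, hDSprod u n a, map_sum, LinearMap.sum_apply,
              ← Finset.sum_neg_distrib]
            refine Finset.sum_congr rfl fun j _ => ?_
            rw [← Algebra.smul_def, map_smul, LinearMap.smul_apply, smul_eq_mul,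
              hBSperm n (fun i => a (j.succAbove i)) b]
            ring
          · have h1 : BS (∏ i, ιS (a i)) (ιS u * ∏ i, ιS (b i)) = 0 := by
              rw [hcons u n b]
              exact hBSorth (m + 1) (n + 1) (by omega) _ (hmono_mem (m + 1) a) _
                (hmono_mem (n + 1) _)
            have h2 : BS (DS u (∏ i, ιS (a i))) (∏ i, ιS (b i)) = 0 :=
              hBSorth m n (fun h => hn h.symm) _ (hDSdeg u m _ (hmono_mem (m + 1) a)) _
                (hmono_mem n b)
            rw [h1, h2, neg_zero]
  -- main statement
  intro y z
  rw [hchi (η (y * z))]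
  congr 1
  -- it remains to prove  BS 1 (η (y * z)) = BS (η y) (η z)
  revert z
  refine indW (fun y => ∀ z, BS 1 (η (y * z)) = BS (η y) (η z)) ?_ ?_ ?_ ?_ ?_ y
  · intro z
    simp
  · intro a b ha hb z
    simp only [add_mul, map_add, LinearMap.add_apply, ha z, hb z]
  · intro c a ha z
    simp only [smul_mul_assoc, map_smul, LinearMap.smul_apply, ha z]
  · intro z
    rw [one_mul, hη1]
  · intro u y ih z
    have e2 : BS 1 (ιS u * η (y * z)) = 0 := by
      rw [hL3b u 1 (η (y * z)), hDS1, map_zero, LinearMap.zero_apply, neg_zero]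
    have key1 : BS 1 (η (ιW u * y * z)) = -BS 1 (η (y * (z * ιW u))) := by
      rw [← mul_assoc y z (ιW u), hRM (y * z) u, mul_assoc (ιW u) y z, hηγ u (y * z)]
      rw [map_add, map_sub, e2]
      ring
    rw [key1, ih (z * ιW u), hRM z u, map_sub]
    rw [hηγ u y, map_add, LinearMap.add_apply]
    rw [hL3a u (η y) (η z), hL3b u (η y) (η z)]
    ring
end

section
/- The subspace S^2(V) ⊂ W(V) is a Lie algebra under Weyl commutation, and the map A: S^2(V) → Lie Sp(V) defined by A(w) = (ad w)|V is a Lie algebra isomorphism. Moreover, for w ∈ S^2(V) with α = A(w), the derivation τ(α) of S(V) extending α coincides with ad w on all of W(V). -/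
/-  Kostant, Proposition 2.4:  `S²(V)` is a Lie algebra under Weyl commutation, the map
    `A : S²(V) → Lie Sp(V)`, `A(w) = (ad w)|V`, is a Lie algebra isomorphism, and for
    `α = A(w)` the derivation `τ(α)` of `S(V)` coincides with `ad w` on all of `W(V)`. -/

set_option maxHeartbeats 1000000 in
theorem S2_lie_algebra_iso_sp
    (V : Type) [AddCommGroup V] [Module ℂ V] [FiniteDimensional ℂ V]
    (hdim : Even (Module.finrank ℂ V))
    (B : LinearMap.BilinForm ℂ V)
    (hBalt : ∀ v : V, B v v = 0)
    (hBnd : B.Nondegenerate)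
    -- the symmetric algebra `S(V)`, given by its universal property
    (S : Type) [CommRing S] [Algebra ℂ S]
    (ιS : V →ₗ[ℂ] S)
    (hSuniv : ∀ (A : Type) [CommRing A] [Algebra ℂ A] (f : V →ₗ[ℂ] A),
      ∃! g : S →ₐ[ℂ] A, ∀ v : V, g (ιS v) = f v)
    -- the grading `S(V) = ⊕ₙ Sⁿ(V)`
    (𝒜 : ℕ → Submodule ℂ S) [GradedAlgebra 𝒜]
    (h𝒜 : ∀ n : ℕ, 𝒜 n = LinearMap.range ιS ^ n)
    -- the contraction operators `ι_S(u)`: degree `-1` derivations of `S(V)`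
    (DS : V →ₗ[ℂ] Module.End ℂ S)
    (hDSder : ∀ (u : V) (a b : S), DS u (a * b) = DS u a * b + a * DS u b)
    (hDSgen : ∀ u v : V, DS u (ιS v) = algebraMap ℂ S (B u v))
    (hDSdeg : ∀ (u : V) (n : ℕ), ∀ s ∈ 𝒜 (n + 1), DS u s ∈ 𝒜 n)
    -- the Weyl algebra `W(V)`, given by its universal property
    (W : Type) [Ring W] [Algebra ℂ W]
    (ιW : V →ₗ[ℂ] W)
    (hWrel : ∀ u v : V, ιW u * ιW v - ιW v * ιW u = algebraMap ℂ W (2 * B u v))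
    (hWuniv : ∀ (A : Type) [Ring A] [Algebra ℂ A] (f : V →ₗ[ℂ] A),
      (∀ u v : V, f u * f v - f v * f u = algebraMap ℂ A (2 * B u v)) →
      ∃! g : W →ₐ[ℂ] A, ∀ v : V, g (ιW v) = f v)
    -- the identification `η : W(V) ≃ S(V)`, `η(w) = γ(w)1`
    (η : W ≃ₗ[ℂ] S)
    (hη1 : η 1 = 1)
    (hηγ : ∀ (u : V) (w : W), η (ιW u * w) = ιS u * η w + DS u (η w)) :
    -- `S²(V)` is closed under Weyl commutation
    (∀ w z : W, η w ∈ 𝒜 2 → η z ∈ 𝒜 2 → η (w * z - z * w) ∈ 𝒜 2) ∧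
    -- `A` is well defined:  `V` is stable under `ad w` and `A(w) = (ad w)|V ∈ Lie Sp(V)`
    (∀ w : W, η w ∈ 𝒜 2 → ∃ α : Module.End ℂ V,
      ∀ v : V, w * ιW v - ιW v * w = ιW (α v)) ∧
    (∀ (w : W) (α : Module.End ℂ V), η w ∈ 𝒜 2 →
      (∀ v : V, w * ιW v - ιW v * w = ιW (α v)) →
      ∀ u v : V, B (α u) v + B u (α v) = 0) ∧
    -- `A` is a Lie algebra homomorphism
    (∀ (w z : W) (α β : Module.End ℂ V), η w ∈ 𝒜 2 → η z ∈ 𝒜 2 →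
      (∀ v : V, w * ιW v - ιW v * w = ιW (α v)) →
      (∀ v : V, z * ιW v - ιW v * z = ιW (β v)) →
      ∀ v : V, (w * z - z * w) * ιW v - ιW v * (w * z - z * w) = ιW ((α * β - β * α) v)) ∧
    -- `A` is bijective onto `Lie Sp(V)`
    (∀ α : Module.End ℂ V, (∀ u v : V, B (α u) v + B u (α v) = 0) →
      ∃! w : W, η w ∈ 𝒜 2 ∧ ∀ v : V, w * ιW v - ιW v * w = ιW (α v)) ∧
    -- for `α = A(w)`, the derivation `τ(α)` of `S(V)` equals `ad w`
    (∀ (w : W) (α : Module.End ℂ V) (T : Module.End ℂ S), η w ∈ 𝒜 2 →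
      (∀ v : V, w * ιW v - ιW v * w = ιW (α v)) →
      (∀ a b : S, T (a * b) = T a * b + a * T b) →
      (∀ v : V, T (ιS v) = ιS (α v)) →
      ∀ s : W, η (w * s - s * w) = T (η s)) := by
  classical
  -- ## Basic consequences
  have hBskew : ∀ u v : V, B u v = - B v u := by
    intro u v
    have h := hBalt (u + v)
    simp only [map_add, LinearMap.add_apply, hBalt, zero_add, add_zero] at h
    linear_combination h
  have hDS1 : ∀ u : V, DS u 1 = 0 := by
    intro u
    have h := hDSder u 1 1
    rw [mul_one, mul_one, one_mul] at h
    exact (left_eq_add.mp h)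
  have hηι : ∀ v : V, η (ιW v) = ιS v := by
    intro v
    have h := hηγ v 1
    rw [mul_one, hη1, mul_one, hDS1, add_zero] at h
    exact h
  have hηalg : ∀ c : ℂ, η (algebraMap ℂ W c) = algebraMap ℂ S c := by
    intro c
    rw [Algebra.algebraMap_eq_smul_one (A := W), Algebra.algebraMap_eq_smul_one (A := S),
      map_smul, hη1]
  have hSalg_inj : Function.Injective (algebraMap ℂ S) := by
    obtain ⟨g, -, -⟩ := hSuniv ℂ 0
    intro a b hab
    have h := congrArg g hab
    simpa using h
  have hιS_inj : Function.Injective ιS := by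
    intro a b hab
    have h0 : ιS (a - b) = 0 := by rw [map_sub, hab, sub_self]
    have h1 : ∀ u : V, B u (a - b) = 0 := by
      intro u
      have h2 : DS u (ιS (a - b)) = 0 := by rw [h0, map_zero]
      rw [hDSgen] at h2
      have := hSalg_inj (h2.trans (map_zero (algebraMap ℂ S)).symm)
      exact this
    have h3 : a - b = 0 := by
      apply hBnd.1
      intro n
      rw [hBskew]
      simp [h1 n]
    exact sub_eq_zero.mp h3
  have hιW_inj : Function.Injective ιW := by
    intro a b hab
    apply hιS_inj
    rw [← hηι, ← hηι, hab]
  -- ## span description of 𝒜 2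
  have hgen2 : ∀ a b : V, ιS a * ιS b ∈ 𝒜 2 := by
    intro a b
    rw [h𝒜, pow_two]
    exact Submodule.mul_mem_mul (LinearMap.mem_range_self ιS a) (LinearMap.mem_range_self ιS b)
  have hA2span : 𝒜 2 = Submodule.span ℂ {s : S | ∃ u u' : V, s = ιS u * ιS u'} := by
    apply le_antisymm
    · rw [h𝒜, pow_two]
      refine Submodule.mul_le.mpr ?_
      rintro x ⟨u, rfl⟩ y ⟨u', rfl⟩
      exact Submodule.subset_span ⟨u, u', rfl⟩
    · rw [Submodule.span_le]
      rintro s ⟨u, u', rfl⟩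
      exact hgen2 u u'
  have hηq2 : ∀ a b : V, η (ιW a * ιW b) = ιS a * ιS b + algebraMap ℂ S (B a b) := by
    intro a b
    rw [hηγ, hηι, hDSgen]
  have hηq : ∀ a b : V, η (ιW a * ιW b - algebraMap ℂ W (B a b)) = ιS a * ιS b := by
    intro a b
    rw [map_sub, hηq2, hηalg]
    ring
  have hM : ∀ w : W, η w ∈ 𝒜 2 →
      w ∈ Submodule.span ℂ {x : W | ∃ u u' : V, x = ιW u * ιW u' - algebraMap ℂ W (B u u')} := by
    intro w hw
    rw [hA2span] at hw
    have hmap : w ∈ Submodule.map (η.symm : S →ₗ[ℂ] W)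
        (Submodule.span ℂ {s : S | ∃ u u' : V, s = ιS u * ιS u'}) :=
      ⟨η w, hw, η.symm_apply_apply w⟩
    rw [Submodule.map_span] at hmap
    refine Submodule.span_mono ?_ hmap
    rintro x ⟨s, ⟨u, u', rfl⟩, rfl⟩
    refine ⟨u, u', ?_⟩
    simp only [LinearEquiv.coe_coe]
    rw [← hηq u u', η.symm_apply_apply]

  -- ## commutator identities
  have hcen1 : ∀ (c : ℂ) (p x : W),
      (p - algebraMap ℂ W c) * x - x * (p - algebraMap ℂ W c) = p * x - x * p := by
    intro c p x
    have h := Algebra.commutes c x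
    rw [sub_mul, mul_sub, h]
    abel
  have hcen2 : ∀ (c : ℂ) (p x : W),
      x * (p - algebraMap ℂ W c) - (p - algebraMap ℂ W c) * x = x * p - p * x := by
    intro c p x
    have h := Algebra.commutes c x
    rw [sub_mul, mul_sub, h]
    abel
  have hLeib : ∀ a b x : W,
      (a * b) * x - x * (a * b) = a * (b * x - x * b) + (a * x - x * a) * b := by
    intros; noncomm_ring
  have hLeib' : ∀ w a b : W,
      w * (a * b) - (a * b) * w = (w * a - a * w) * b + a * (w * b - b * w) := by
    intros; noncomm_ring
  -- ## the infinitesimal action of generators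
  set aq : V → V → Module.End ℂ V := fun u u' =>
    (2:ℂ) • (LinearMap.smulRight (B u') u + LinearMap.smulRight (B u) u') with haq
  have haq_apply : ∀ u u' v : V, aq u u' v = (2 * B u' v) • u + (2 * B u v) • u' := by
    intro u u' v
    simp [haq, LinearMap.smulRight_apply, smul_add, smul_smul]
  have hιaq : ∀ u u' v : V,
      ιW (aq u u' v) = (2 * B u' v) • ιW u + (2 * B u v) • ιW u' := by
    intro u u' v
    rw [haq_apply, map_add, map_smul, map_smul]
  have hadq : ∀ u u' v : V,
      (ιW u * ιW u' - algebraMap ℂ W (B u u')) * ιW v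
        - ιW v * (ιW u * ιW u' - algebraMap ℂ W (B u u')) = ιW (aq u u' v) := by
    intro u u' v
    rw [hcen1, hLeib, hWrel, hWrel, hιaq, Algebra.smul_def, Algebra.smul_def,
      ← Algebra.commutes]
  have haq_symp : ∀ u u' x y : V, B (aq u u' x) y + B x (aq u u' y) = 0 := by
    intro u u' x y
    simp only [haq_apply, map_add, LinearMap.add_apply, map_smul, LinearMap.smul_apply,
      smul_eq_mul]
    rw [hBskew x u, hBskew x u']
    ring
  -- ## combined existence of the symplectic endomorphism (parts 2 & 3)
  have hP : ∀ w : W, η w ∈ 𝒜 2 → ∃ α : Module.End ℂ V,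
      (∀ v : V, w * ιW v - ιW v * w = ιW (α v)) ∧
      (∀ u v : V, B (α u) v + B u (α v) = 0) := by
    intro w hw
    have hw' := hM w hw
    clear hw
    induction hw' using Submodule.span_induction with
    | mem x hx =>
        obtain ⟨u, u', rfl⟩ := hx
        exact ⟨aq u u', fun v => hadq u u' v, fun a b => haq_symp u u' a b⟩
    | zero => exact ⟨0, fun v => by simp, fun a b => by simp⟩
    | add x y hx hy ihx ihy =>
        obtain ⟨α, hα, hαs⟩ := ihx
        obtain ⟨β, hβ, hβs⟩ := ihy
        refine ⟨α + β, fun v => ?_, fun a b => ?_⟩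
        · have h : (x + y) * ιW v - ιW v * (x + y)
              = (x * ιW v - ιW v * x) + (y * ιW v - ιW v * y) := by noncomm_ring
          rw [h, hα v, hβ v, ← map_add]
          rfl
        · simp only [LinearMap.add_apply, map_add]
          linear_combination hαs a b + hβs a b
    | smul c x hx ihx =>
        obtain ⟨α, hα, hαs⟩ := ihx
        refine ⟨c • α, fun v => ?_, fun a b => ?_⟩
        · have h : (c • x) * ιW v - ιW v * (c • x) = c • (x * ιW v - ιW v * x) := by
            rw [smul_mul_assoc, mul_smul_comm, smul_sub]
          rw [h, hα v, ← map_smul]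
          rfl
        · simp only [LinearMap.smul_apply, map_smul, smul_eq_mul, LinearMap.smul_apply]
          linear_combination c * hαs a b

  -- ## Part 1 : closure under commutator
  have part1 : ∀ w z : W, η w ∈ 𝒜 2 → η z ∈ 𝒜 2 → η (w * z - z * w) ∈ 𝒜 2 := by
    intro w z hw hz
    have hw' := hM w hw
    have hz' := hM z hz
    clear hw hz
    induction hw' using Submodule.span_induction with
    | mem x hx =>
        obtain ⟨u, u', rfl⟩ := hx
        induction hz' using Submodule.span_induction with
        | mem y hy =>
            obtain ⟨a, b, rfl⟩ := hy
            rw [hcen2, hLeib', hadq, hadq, map_add, hηq2, hηq2]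
            have h0 : algebraMap ℂ S (B (aq u u' a) b) + algebraMap ℂ S (B a (aq u u' b)) = 0 := by
              rw [← map_add, haq_symp, map_zero]
            have h2 : (ιS (aq u u' a) * ιS b + algebraMap ℂ S (B (aq u u' a) b))
                + (ιS a * ιS (aq u u' b) + algebraMap ℂ S (B a (aq u u' b)))
                = ιS (aq u u' a) * ιS b + ιS a * ιS (aq u u' b) := by
              linear_combination h0
            rw [h2]
            exact add_mem (hgen2 _ _) (hgen2 _ _)
        | zero => simpa using (𝒜 2).zero_mem
        | add y y' hy hy' ihy ihy' =>
            have h : (ιW u * ιW u' - algebraMap ℂ W (B u u')) * (y + y')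
                - (y + y') * (ιW u * ιW u' - algebraMap ℂ W (B u u'))
                = ((ιW u * ιW u' - algebraMap ℂ W (B u u')) * y
                    - y * (ιW u * ιW u' - algebraMap ℂ W (B u u')))
                + ((ιW u * ιW u' - algebraMap ℂ W (B u u')) * y'
                    - y' * (ιW u * ιW u' - algebraMap ℂ W (B u u'))) := by noncomm_ring
            rw [h, map_add]
            exact add_mem ihy ihy'
        | smul c y hy ihy =>
            have h : (ιW u * ιW u' - algebraMap ℂ W (B u u')) * (c • y)
                - (c • y) * (ιW u * ιW u' - algebraMap ℂ W (B u u'))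
                = c • ((ιW u * ιW u' - algebraMap ℂ W (B u u')) * y
                    - y * (ιW u * ιW u' - algebraMap ℂ W (B u u'))) := by
              rw [mul_smul_comm, smul_mul_assoc, smul_sub]
            rw [h, map_smul]
            exact Submodule.smul_mem _ c ihy
    | zero => simpa using (𝒜 2).zero_mem
    | add x x' hx hx' ihx ihx' =>
        have h : (x + x') * z - z * (x + x') = (x * z - z * x) + (x' * z - z * x') := by
          noncomm_ring
        rw [h, map_add]
        exact add_mem ihx ihx'
    | smul c x hx ihx =>
        have h : (c • x) * z - z * (c • x) = c • (x * z - z * x) := by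
          rw [smul_mul_assoc, mul_smul_comm, smul_sub]
        rw [h, map_smul]
        exact Submodule.smul_mem _ c ihx
  -- ## Part 4 : Lie homomorphism
  have part4 : ∀ (w z : W) (α β : Module.End ℂ V), η w ∈ 𝒜 2 → η z ∈ 𝒜 2 →
      (∀ v : V, w * ιW v - ιW v * w = ιW (α v)) →
      (∀ v : V, z * ιW v - ιW v * z = ιW (β v)) →
      ∀ v : V, (w * z - z * w) * ιW v - ιW v * (w * z - z * w)
        = ιW ((α * β - β * α) v) := by
    intro w z α β _ _ hα hβ v
    have key : ∀ a b : W, z * ιW v - ιW v * z = a → w * ιW v - ιW v * w = b →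
        (w * z - z * w) * ιW v - ιW v * (w * z - z * w)
          = (w * a - a * w) - (z * b - b * z) := by
      intro a b h1 h2
      rw [← h1, ← h2]
      noncomm_ring
    rw [key _ _ (hβ v) (hα v), hα (β v), hβ (α v), ← map_sub]
    congr 1

  -- ## basis machinery
  let bb := Module.Basis.ofVectorSpace ℂ V
  haveI : Fintype (Module.Basis.ofVectorSpaceIndex ℂ V) := FiniteDimensional.fintypeBasisIndex bb
  let ed := LinearMap.BilinForm.toDual B hBnd
  let fb : Module.Basis (Module.Basis.ofVectorSpaceIndex ℂ V) ℂ V := bb.dualBasis.map ed.symm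
  have hfb : ∀ i x, B (fb i) x = bb.repr x i := by
    intro i x
    have h1 : ed (fb i) = bb.dualBasis i := by simp [fb]
    calc B (fb i) x = ed (fb i) x := (LinearMap.BilinForm.toDual_def hBnd).symm
    _ = bb.dualBasis i x := by rw [h1]
    _ = bb.repr x i := by rw [Module.Basis.coe_dualBasis, Module.Basis.coord_apply]
  have hsum1 : ∀ x : V, ∑ i, B (fb i) x • bb i = x := by
    intro x; simp only [hfb]; exact bb.sum_repr x
  have hsum2 : ∀ x : V, ∑ i, B x (bb i) • fb i = x := by
    let L : V →ₗ[ℂ] V := ∑ i, LinearMap.smulRight (B.flip (bb i)) (fb i)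
    have hLapp : ∀ x, L x = ∑ i, B x (bb i) • fb i := by
      intro x
      simp [L, LinearMap.sum_apply, LinearMap.smulRight_apply, LinearMap.flip_apply]
    have hL : L = LinearMap.id := by
      apply Module.Basis.ext fb; intro k
      rw [hLapp]
      have h2 : ∀ i, B (fb k) (bb i) = bb.repr (bb i) k := fun i => hfb k (bb i)
      simp only [h2, Module.Basis.repr_self, LinearMap.id_apply, Finsupp.single_apply]
      simp [ite_smul]
    intro x; rw [← hLapp, hL, LinearMap.id_apply]
  -- ## L1 : the commutator with ιW v acts as -2 DS v on degree 2
  have L1 : ∀ w : W, η w ∈ 𝒜 2 → ∀ v : V,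
      η (w * ιW v - ιW v * w) = (-2 : ℂ) • DS v (η w) := by
    intro w hw
    have hw' := hM w hw
    clear hw
    induction hw' using Submodule.span_induction with
    | mem x hx =>
        obtain ⟨u, u', rfl⟩ := hx
        intro v
        rw [hadq, hηq, hιaq, map_add, map_smul, map_smul, hηι, hηι, hDSder,
          hDSgen, hDSgen, hBskew v u, hBskew v u']
        simp only [Algebra.smul_def, map_mul, map_neg, map_ofNat]
        ring
    | zero => intro v; simp
    | add x y hx hy ihx ihy =>
        intro v
        have h : (x + y) * ιW v - ιW v * (x + y)
            = (x * ιW v - ιW v * x) + (y * ιW v - ιW v * y) := by noncomm_ring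
        rw [h, map_add, ihx v, ihy v, map_add, map_add, smul_add]
    | smul c x hx ihx =>
        intro v
        have h : (c • x) * ιW v - ιW v * (c • x) = c • (x * ιW v - ιW v * x) := by
          rw [smul_mul_assoc, mul_smul_comm, smul_sub]
        rw [h, map_smul, ihx v, map_smul, map_smul, smul_comm]
  -- ## L2 : contraction detects zero in degree 2
  have L2 : ∀ s : S, s ∈ 𝒜 2 → (∀ v : V, DS v s = 0) → s = 0 := by
    have key : ∀ s ∈ 𝒜 2, (2:ℂ) • s = ∑ i, ιS (bb i) * DS (fb i) s := by
      intro s hs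
      rw [hA2span] at hs
      induction hs using Submodule.span_induction with
      | mem x hx =>
          obtain ⟨a, b, rfl⟩ := hx
          have h1 : ∀ i, ιS (bb i) * DS (fb i) (ιS a * ιS b)
              = (B (fb i) a • ιS (bb i)) * ιS b + (B (fb i) b • ιS (bb i)) * ιS a := by
            intro i
            rw [hDSder, hDSgen, hDSgen]
            simp only [Algebra.smul_def]
            ring
          rw [Finset.sum_congr rfl fun i _ => h1 i, Finset.sum_add_distrib,
            ← Finset.sum_mul, ← Finset.sum_mul]
          have e1 : ∑ i, B (fb i) a • ιS (bb i) = ιS a := by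
            simp only [← map_smul, ← map_sum, hsum1]
          have e2 : ∑ i, B (fb i) b • ιS (bb i) = ιS b := by
            simp only [← map_smul, ← map_sum, hsum1]
          rw [e1, e2, mul_comm (ιS b) (ιS a), two_smul]
      | zero => simp
      | add x y hx hy ihx ihy =>
          rw [smul_add, ihx, ihy, ← Finset.sum_add_distrib]
          simp only [map_add, mul_add]
      | smul c x hx ihx =>
          rw [smul_comm (2:ℂ) c, ihx, Finset.smul_sum]
          simp only [map_smul, mul_smul_comm]
    intro s hs hDs
    have h := key s hs
    simp only [hDs, mul_zero, Finset.sum_const_zero] at h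
    have h2 : (2:ℂ) ≠ 0 := two_ne_zero
    exact (smul_eq_zero.mp h).resolve_left h2
  -- ## Part 5 : bijectivity
  have part5 : ∀ α : Module.End ℂ V, (∀ u v : V, B (α u) v + B u (α v) = 0) →
      ∃! w : W, η w ∈ 𝒜 2 ∧ ∀ v : V, w * ιW v - ιW v * w = ιW (α v) := by
    intro α hα
    set w₀ : W := (4:ℂ)⁻¹ • ∑ i, (ιW (α (bb i)) * ιW (fb i)
      - algebraMap ℂ W (B (α (bb i)) (fb i))) with hw₀def
    have hmem₀ : η w₀ ∈ 𝒜 2 := by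
      rw [hw₀def, map_smul, map_sum]
      refine Submodule.smul_mem _ _ (Submodule.sum_mem _ fun i _ => ?_)
      rw [hηq]
      exact hgen2 _ _
    have had₀ : ∀ v : V, w₀ * ιW v - ιW v * w₀ = ιW (α v) := by
      intro v
      have hssum : ∑ i, aq (α (bb i)) (fb i) v = (4:ℂ) • α v := by
        have hterm : ∀ i, aq (α (bb i)) (fb i) v
            = (2 * B (fb i) v) • α (bb i) + (2 * B (α v) (bb i)) • fb i := by
          intro i
          rw [haq_apply]
          have h1 : B (α (bb i)) v = B (α v) (bb i) := by
            have h2 := hα (bb i) v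
            have h3 := hBskew (bb i) (α v)
            linear_combination h2 - h3
          rw [h1]
        rw [Finset.sum_congr rfl fun i _ => hterm i, Finset.sum_add_distrib]
        have e1 : ∑ i, (2 * B (fb i) v) • α (bb i) = (2:ℂ) • α v := by
          have : ∀ i, (2 * B (fb i) v) • α (bb i) = (2:ℂ) • α (B (fb i) v • bb i) := by
            intro i; rw [map_smul, smul_smul]
          rw [Finset.sum_congr rfl fun i _ => this i, ← Finset.smul_sum, ← map_sum, hsum1]
        have e2 : ∑ i, (2 * B (α v) (bb i)) • fb i = (2:ℂ) • α v := by
          have : ∀ i, (2 * B (α v) (bb i)) • fb i = (2:ℂ) • (B (α v) (bb i) • fb i) := by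
            intro i; rw [smul_smul]
          rw [Finset.sum_congr rfl fun i _ => this i, ← Finset.smul_sum, hsum2]
        rw [e1, e2, ← add_smul]
        norm_num
      have hcomm : w₀ * ιW v - ιW v * w₀
          = (4:ℂ)⁻¹ • ιW (∑ i, aq (α (bb i)) (fb i) v) := by
        rw [hw₀def, smul_mul_assoc, mul_smul_comm, ← smul_sub, map_sum, Finset.sum_mul,
          Finset.mul_sum, ← Finset.sum_sub_distrib]
        congr 1
        exact Finset.sum_congr rfl fun i _ => hadq _ _ v
      rw [hcomm, hssum, map_smul, smul_smul]
      norm_num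
    refine ⟨w₀, ⟨hmem₀, had₀⟩, ?_⟩
    rintro w' ⟨h1, h2⟩
    have hdmem : η (w' - w₀) ∈ 𝒜 2 := by
      rw [map_sub]; exact sub_mem h1 hmem₀
    have hd0 : ∀ v : V, (w' - w₀) * ιW v - ιW v * (w' - w₀) = 0 := by
      intro v
      have h : (w' - w₀) * ιW v - ιW v * (w' - w₀)
          = (w' * ιW v - ιW v * w') - (w₀ * ιW v - ιW v * w₀) := by noncomm_ring
      rw [h, h2 v, had₀ v, sub_self]
    have hz : ∀ v : V, DS v (η (w' - w₀)) = 0 := by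
      intro v
      have h := L1 _ hdmem v
      rw [hd0 v, map_zero] at h
      have hne : (-2 : ℂ) ≠ 0 := by norm_num
      exact (smul_eq_zero.mp h.symm).resolve_left hne
    have hzero : η (w' - w₀) = 0 := L2 _ hdmem hz
    have := η.injective (hzero.trans (map_zero η).symm)
    exact sub_eq_zero.mp this

  -- ## generation of S and W by V
  have Sgen : ∀ x : S, x ∈ Algebra.adjoin ℂ (Set.range ιS) := by
    let aS := Algebra.adjoin ℂ (Set.range ιS)
    let f : V →ₗ[ℂ] aS :=
      { toFun := fun v => ⟨ιS v, Algebra.subset_adjoin ⟨v, rfl⟩⟩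
        map_add' := fun a b => Subtype.ext (by simp)
        map_smul' := fun c a => Subtype.ext (by simp) }
    obtain ⟨g, hg, -⟩ := hSuniv aS f
    obtain ⟨g₀, -, hu⟩ := hSuniv S ιS
    have e1 : aS.val.comp g = g₀ := hu _ (fun v => by
      simp only [AlgHom.comp_apply, hg v]; rfl)
    have e2 : AlgHom.id ℂ S = g₀ := hu _ (fun v => rfl)
    have e3 : aS.val.comp g = AlgHom.id ℂ S := e1.trans e2.symm
    intro x
    have hx : aS.val (g x) = x := by
      rw [← AlgHom.comp_apply, e3]; rfl
    rw [← hx]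
    exact (g x).2
  have Wgen : ∀ x : W, x ∈ Algebra.adjoin ℂ (Set.range ιW) := by
    let aW := Algebra.adjoin ℂ (Set.range ιW)
    let f : V →ₗ[ℂ] aW :=
      { toFun := fun v => ⟨ιW v, Algebra.subset_adjoin ⟨v, rfl⟩⟩
        map_add' := fun a b => Subtype.ext (by simp)
        map_smul' := fun c a => Subtype.ext (by simp) }
    have hf : ∀ u v : V, f u * f v - f v * f u = algebraMap ℂ aW (2 * B u v) := by
      intro u v
      apply Subtype.ext
      simpa [f] using hWrel u v
    obtain ⟨g, hg, -⟩ := hWuniv aW f hf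
    obtain ⟨g₀, -, hu⟩ := hWuniv W ιW hWrel
    have e1 : aW.val.comp g = g₀ := hu _ (fun v => by
      simp only [AlgHom.comp_apply, hg v]; rfl)
    have e2 : AlgHom.id ℂ W = g₀ := hu _ (fun v => rfl)
    have e3 : aW.val.comp g = AlgHom.id ℂ W := e1.trans e2.symm
    intro x
    have hx : aW.val (g x) = x := by
      rw [← AlgHom.comp_apply, e3]; rfl
    rw [← hx]
    exact (g x).2
  -- induction principle for W
  have hWind : ∀ p : Submodule ℂ W, (1:W) ∈ p →
      (∀ (u : V) (x : W), x ∈ p → ιW u * x ∈ p) → ∀ x : W, x ∈ p := by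
    intro p h1 hcl
    let Q : Subalgebra ℂ W :=
      { carrier := {x : W | ∀ y ∈ p, x * y ∈ p}
        mul_mem' := fun {a b} ha hb y hy => by
          rw [mul_assoc]; exact ha _ (hb _ hy)
        one_mem' := fun y hy => by rwa [one_mul]
        add_mem' := fun {a b} ha hb y hy => by
          rw [add_mul]; exact p.add_mem (ha _ hy) (hb _ hy)
        algebraMap_mem' := fun c y hy => by
          rw [← Algebra.smul_def]; exact p.smul_mem c hy }
    have hQ : Set.range ιW ⊆ Q := by
      rintro _ ⟨u, rfl⟩
      exact fun y hy => hcl u y hy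
    intro x
    have hx : x ∈ Q := Algebra.adjoin_le hQ (Wgen x)
    have := hx 1 h1
    rwa [mul_one] at this
  -- ## Part 6 : τ(α) = ad w
  have part6 : ∀ (w : W) (α : Module.End ℂ V) (T : Module.End ℂ S), η w ∈ 𝒜 2 →
      (∀ v : V, w * ιW v - ιW v * w = ιW (α v)) →
      (∀ a b : S, T (a * b) = T a * b + a * T b) →
      (∀ v : V, T (ιS v) = ιS (α v)) →
      ∀ s : W, η (w * s - s * w) = T (η s) := by
    intro w α T hw hα hTder hTgen
    have hsymp : ∀ u v : V, B (α u) v + B u (α v) = 0 := by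
      obtain ⟨α₀, h₀, hs⟩ := hP w hw
      have heq : ∀ v, α v = α₀ v := fun v => hιW_inj (by rw [← hα v, h₀ v])
      intro u v
      rw [heq u, heq v]
      exact hs u v
    have hT1 : T 1 = 0 := by
      have h : T 1 = T 1 + T 1 := by simpa using hTder 1 1
      exact (left_eq_add.mp h)
    have hTalg : ∀ c : ℂ, T (algebraMap ℂ S c) = 0 := by
      intro c
      rw [Algebra.algebraMap_eq_smul_one, map_smul, hT1, smul_zero]
    have hDSalg : ∀ (u : V) (c : ℂ), DS u (algebraMap ℂ S c) = 0 := by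
      intro u c
      rw [Algebra.algebraMap_eq_smul_one, map_smul, hDS1, smul_zero]
    -- the commutator of T with a contraction
    have hcommDS : ∀ (u : V) (x : S), T (DS u x) = DS u (T x) + DS (α u) x := by
      intro u x
      induction Sgen x using Algebra.adjoin_induction with
      | mem s hs =>
          obtain ⟨v, rfl⟩ := hs
          rw [hDSgen, hTalg, hTgen, hDSgen, hDSgen, ← map_add]
          have h : B u (α v) + B (α u) v = 0 := by linear_combination hsymp u v
          rw [h, map_zero]
      | algebraMap c =>
          simp [hDSalg, hTalg]
      | add a b ha hb iha ihb =>
          rw [map_add, map_add, map_add, map_add, map_add, iha, ihb]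
          ring
      | mul a b ha hb iha ihb =>
          rw [hDSder, map_add, hTder, hTder, iha, ihb, hTder a b, map_add,
            hDSder u (T a) b, hDSder u a (T b), hDSder (α u) a b]
          ring
    -- induction over W
    let p : Submodule ℂ W :=
      { carrier := {s : W | η (w * s - s * w) = T (η s)}
        add_mem' := fun {a b} ha hb => by
          have h : w * (a + b) - (a + b) * w = (w * a - a * w) + (w * b - b * w) := by
            noncomm_ring
          show η (w * (a + b) - (a + b) * w) = T (η (a + b))
          rw [h, map_add, ha, hb, map_add, map_add]
        zero_mem' := by
          show η (w * 0 - 0 * w) = T (η 0)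
          simp
        smul_mem' := fun c a ha => by
          have h : w * (c • a) - (c • a) * w = c • (w * a - a * w) := by
            rw [mul_smul_comm, smul_mul_assoc, smul_sub]
          show η (w * (c • a) - (c • a) * w) = T (η (c • a))
          rw [h, map_smul, ha, map_smul, map_smul] }
    have h1 : (1:W) ∈ p := by
      show η (w * 1 - 1 * w) = T (η 1)
      rw [mul_one, one_mul, sub_self, map_zero, hη1, hT1]
    have hcl : ∀ (u : V) (x : W), x ∈ p → ιW u * x ∈ p := by
      intro u x hx
      have hx' : η (w * x - x * w) = T (η x) := hx
      show η (w * (ιW u * x) - (ιW u * x) * w) = T (η (ιW u * x))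
      have hid : w * (ιW u * x) - (ιW u * x) * w
          = (w * ιW u - ιW u * w) * x + ιW u * (w * x - x * w) := by noncomm_ring
      rw [hid, hα u, map_add, hηγ (α u) x, hηγ u (w * x - x * w), hx', hηγ u x,
        map_add, hTder, hTgen, hcommDS u (η x)]
      ring
    exact fun s => hWind p h1 hcl s
  exact ⟨part1, fun w hw => (hP w hw).imp (fun α h => h.1),
    fun w α hw hprop u v => by
      obtain ⟨α₀, h₀, hs⟩ := hP w hw
      have heq : ∀ x, α x = α₀ x := fun x => hιW_inj (by rw [← hprop x, h₀ x])
      rw [heq u, heq v]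
      exact hs u v,
    part4, part5, part6⟩
end

section
/- For every u ∈ V, the derivation ι_W(u) of the Weyl algebra W(V) and the derivation ι_S(u) of the symmetric algebra S(V) coincide under the identification η: W(V) → S(V); that is, η ∘ ι_W(u) = ι_S(u) ∘ η. Consequently ι(u) := ι_W(u) = ι_S(u) is a derivation of both the Weyl and the symmetric algebra structures on W(V). -/
/-  Kostant, Proposition 2.2 (first part):  for `u ∈ V` the derivations `ι_W(u)` of `W(V)`
    and `ι_S(u)` of `S(V)` coincide under the identification `η : W(V) → S(V)`. -/

theorem iota_weyl_eq_iota_sym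
    (V : Type) [AddCommGroup V] [Module ℂ V] [FiniteDimensional ℂ V]
    (hdim : Even (Module.finrank ℂ V))
    (B : LinearMap.BilinForm ℂ V)
    (hBalt : ∀ v : V, B v v = 0)
    (hBnd : B.Nondegenerate)
    -- the symmetric algebra `S(V)`, given by its universal property
    (S : Type) [CommRing S] [Algebra ℂ S]
    (ιS : V →ₗ[ℂ] S)
    (hSuniv : ∀ (A : Type) [CommRing A] [Algebra ℂ A] (f : V →ₗ[ℂ] A),
      ∃! g : S →ₐ[ℂ] A, ∀ v : V, g (ιS v) = f v)
    -- the grading `S(V) = ⊕ₙ Sⁿ(V)`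
    (𝒜 : ℕ → Submodule ℂ S) [GradedAlgebra 𝒜]
    (h𝒜 : ∀ n : ℕ, 𝒜 n = LinearMap.range ιS ^ n)
    -- the contraction operators `ι_S(u)`: degree `-1` derivations of `S(V)`
    (DS : V →ₗ[ℂ] Module.End ℂ S)
    (hDSder : ∀ (u : V) (a b : S), DS u (a * b) = DS u a * b + a * DS u b)
    (hDSgen : ∀ u v : V, DS u (ιS v) = algebraMap ℂ S (B u v))
    (hDSdeg : ∀ (u : V) (n : ℕ), ∀ s ∈ 𝒜 (n + 1), DS u s ∈ 𝒜 n)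
    -- the Weyl algebra `W(V)`, given by its universal property
    (W : Type) [Ring W] [Algebra ℂ W]
    (ιW : V →ₗ[ℂ] W)
    (hWrel : ∀ u v : V, ιW u * ιW v - ιW v * ιW u = algebraMap ℂ W (2 * B u v))
    (hWuniv : ∀ (A : Type) [Ring A] [Algebra ℂ A] (f : V →ₗ[ℂ] A),
      (∀ u v : V, f u * f v - f v * f u = algebraMap ℂ A (2 * B u v)) →
      ∃! g : W →ₐ[ℂ] A, ∀ v : V, g (ιW v) = f v)
    -- the identification `η : W(V) ≃ S(V)`, `η(w) = γ(w)1`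
    (η : W ≃ₗ[ℂ] S)
    (hη1 : η 1 = 1)
    (hηγ : ∀ (u : V) (w : W), η (ιW u * w) = ιS u * η w + DS u (η w)) :
    ∀ (u : V) (DW : Module.End ℂ W),
      (∀ a b : W, DW (a * b) = DW a * b + a * DW b) →
      (∀ v : V, DW (ιW v) = algebraMap ℂ W (B u v)) →
      ∀ w : W, η (DW w) = DS u (η w) := by
  -- `W` is generated as an algebra by the image of `ιW`
  have hWtop : Algebra.adjoin ℂ (Set.range ιW) = ⊤ := by
    set A := Algebra.adjoin ℂ (Set.range ιW) with hA
    have hmem : ∀ v, ιW v ∈ A := fun v => Algebra.subset_adjoin ⟨v, rfl⟩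
    let f : V →ₗ[ℂ] A :=
      { toFun := fun v => ⟨ιW v, hmem v⟩
        map_add' := by intro x y; ext; simp
        map_smul' := by intro c x; ext; simp }
    have hrel : ∀ u v : V, f u * f v - f v * f u = algebraMap ℂ A (2 * B u v) := by
      intro u v
      ext
      simpa [f] using hWrel u v
    obtain ⟨g, hg, -⟩ := hWuniv A f hrel
    obtain ⟨g', -, hg'uniq⟩ := hWuniv W ιW hWrel
    have h1 : A.val.comp g = g' := hg'uniq _ (fun v => by simp [hg v]; rfl)
    have h2 : AlgHom.id ℂ W = g' := hg'uniq _ (fun v => rfl)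
    rw [eq_top_iff]
    intro w _
    have hw : (A.val.comp g) w = w := by rw [h1, ← h2]; rfl
    rw [← hw]
    exact (g w).2
  -- `S` is generated as an algebra by the image of `ιS`
  have hStop : Algebra.adjoin ℂ (Set.range ιS) = ⊤ := by
    set A := Algebra.adjoin ℂ (Set.range ιS) with hA
    have hmem : ∀ v, ιS v ∈ A := fun v => Algebra.subset_adjoin ⟨v, rfl⟩
    let f : V →ₗ[ℂ] A :=
      { toFun := fun v => ⟨ιS v, hmem v⟩
        map_add' := by intro x y; ext; simp
        map_smul' := by intro c x; ext; simp }
    obtain ⟨g, hg, -⟩ := hSuniv A f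
    obtain ⟨g', -, hg'uniq⟩ := hSuniv S ιS
    have h1 : A.val.comp g = g' := hg'uniq _ (fun v => by simp [hg v]; rfl)
    have h2 : AlgHom.id ℂ S = g' := hg'uniq _ (fun v => rfl)
    rw [eq_top_iff]
    intro w _
    have hw : (A.val.comp g) w = w := by rw [h1, ← h2]; rfl
    rw [← hw]
    exact (g w).2
  -- `DS u 1 = 0`
  have hDS1 : ∀ u : V, DS u 1 = 0 := by
    intro u
    have h := hDSder u 1 1
    simp only [mul_one, one_mul] at h
    nth_rewrite 1 [← add_zero (DS u (1 : S))] at h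
    exact (add_left_cancel h).symm
  -- `DS u` kills scalars
  have hDSalg : ∀ (u : V) (c : ℂ), DS u (algebraMap ℂ S c) = 0 := by
    intro u c
    rw [Algebra.algebraMap_eq_smul_one, map_smul, hDS1, smul_zero]
  -- the operators `DS u` pairwise commute
  have hDScomm : ∀ (u v : V) (s : S), DS u (DS v s) = DS v (DS u s) := by
    intro u v s
    have hs : s ∈ Algebra.adjoin ℂ (Set.range ιS) := hStop ▸ trivial
    induction hs using Algebra.adjoin_induction with
    | mem x hx =>
        obtain ⟨w, rfl⟩ := hx
        rw [hDSgen, hDSgen, hDSalg, hDSalg]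
    | algebraMap c =>
        rw [hDSalg, hDSalg, map_zero, map_zero]
    | add x y hx hy ihx ihy =>
        simp only [map_add, ihx, ihy]
    | mul x y hx hy ihx ihy =>
        simp only [hDSder, map_add]
        rw [ihx, ihy]
        ring
  intro u DW hDWder hDWgen w
  -- `DW 1 = 0`
  have hDW1 : DW 1 = 0 := by
    have h := hDWder 1 1
    simp only [mul_one, one_mul] at h
    nth_rewrite 1 [← add_zero (DW (1 : W))] at h
    exact (add_left_cancel h).symm
  -- the submodule on which the claim holds
  set M : Submodule ℂ W :=
    LinearMap.ker ((η : W →ₗ[ℂ] S).comp DW - (DS u).comp (η : W →ₗ[ℂ] S)) with hM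
  have hmemM : ∀ x : W, x ∈ M ↔ η (DW x) = DS u (η x) := by
    intro x
    rw [hM, LinearMap.mem_ker, LinearMap.sub_apply, LinearMap.comp_apply,
      LinearMap.comp_apply, sub_eq_zero]
    rfl
  have h1M : (1 : W) ∈ M := by
    rw [hmemM, hDW1, map_zero, hη1, hDS1]
  have hstep : ∀ (v : V) (x : W), x ∈ M → ιW v * x ∈ M := by
    intro v x hx
    rw [hmemM] at hx ⊢
    have lhs : η (DW (ιW v * x)) =
        (B u v) • η x + (ιS v * η (DW x) + DS v (η (DW x))) := by
      rw [hDWder, map_add, hDWgen, Algebra.algebraMap_eq_smul_one, smul_mul_assoc, one_mul,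
        map_smul, hηγ]
    rw [lhs, hx, hηγ]
    rw [map_add, hDSder, hDSgen, hDScomm u v, Algebra.algebraMap_eq_smul_one,
      smul_mul_assoc, one_mul]
    ring
  -- every element of `W` preserves `M` by left multiplication
  have hall : ∀ x : W, ∀ m : W, m ∈ M → x * m ∈ M := by
    intro x
    have hx : x ∈ Algebra.adjoin ℂ (Set.range ιW) := hWtop ▸ trivial
    induction hx using Algebra.adjoin_induction with
    | mem y hy =>
        obtain ⟨v, rfl⟩ := hy
        exact fun m hm => hstep v m hm
    | algebraMap c =>
        intro m hm
        rw [Algebra.algebraMap_eq_smul_one, smul_mul_assoc, one_mul]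
        exact M.smul_mem c hm
    | add y z hy hz ihy ihz =>
        intro m hm
        rw [add_mul]
        exact M.add_mem (ihy m hm) (ihz m hm)
    | mul y z hy hz ihy ihz =>
        intro m hm
        rw [mul_assoc]
        exact ihy _ (ihz m hm)
  have := hall w 1 h1M
  rw [mul_one] at this
  exact (hmemM w).mp this
end

section
/- For every α ∈ Lie Sp(V), the derivation τ_W(α) of the Weyl algebra W(V) and the derivation τ_S(α) of the symmetric algebra S(V) coincide under the identification η: W(V) → S(V); that is, η ∘ τ_W(α) = τ_S(α) ∘ η. Consequently τ(α) := τ_W(α) = τ_S(α) is a derivation of both the Weyl and the symmetric algebra structures on W(V). -/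
/-  Kostant, Proposition 2.2 (second part):  for `α ∈ Lie Sp(V)` the derivations `τ_W(α)` of
    `W(V)` and `τ_S(α)` of `S(V)` coincide under the identification `η : W(V) → S(V)`. -/

theorem tau_weyl_eq_tau_sym
    (V : Type) [AddCommGroup V] [Module ℂ V] [FiniteDimensional ℂ V]
    (hdim : Even (Module.finrank ℂ V))
    (B : LinearMap.BilinForm ℂ V)
    (hBalt : ∀ v : V, B v v = 0)
    (hBnd : B.Nondegenerate)
    -- the symmetric algebra `S(V)`, given by its universal property
    (S : Type) [CommRing S] [Algebra ℂ S]
    (ιS : V →ₗ[ℂ] S)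
    (hSuniv : ∀ (A : Type) [CommRing A] [Algebra ℂ A] (f : V →ₗ[ℂ] A),
      ∃! g : S →ₐ[ℂ] A, ∀ v : V, g (ιS v) = f v)
    -- the grading `S(V) = ⊕ₙ Sⁿ(V)`
    (𝒜 : ℕ → Submodule ℂ S) [GradedAlgebra 𝒜]
    (h𝒜 : ∀ n : ℕ, 𝒜 n = LinearMap.range ιS ^ n)
    -- the contraction operators `ι_S(u)`: degree `-1` derivations of `S(V)`
    (DS : V →ₗ[ℂ] Module.End ℂ S)
    (hDSder : ∀ (u : V) (a b : S), DS u (a * b) = DS u a * b + a * DS u b)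
    (hDSgen : ∀ u v : V, DS u (ιS v) = algebraMap ℂ S (B u v))
    (hDSdeg : ∀ (u : V) (n : ℕ), ∀ s ∈ 𝒜 (n + 1), DS u s ∈ 𝒜 n)
    -- the Weyl algebra `W(V)`, given by its universal property
    (W : Type) [Ring W] [Algebra ℂ W]
    (ιW : V →ₗ[ℂ] W)
    (hWrel : ∀ u v : V, ιW u * ιW v - ιW v * ιW u = algebraMap ℂ W (2 * B u v))
    (hWuniv : ∀ (A : Type) [Ring A] [Algebra ℂ A] (f : V →ₗ[ℂ] A),
      (∀ u v : V, f u * f v - f v * f u = algebraMap ℂ A (2 * B u v)) →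
      ∃! g : W →ₐ[ℂ] A, ∀ v : V, g (ιW v) = f v)
    -- the identification `η : W(V) ≃ S(V)`, `η(w) = γ(w)1`
    (η : W ≃ₗ[ℂ] S)
    (hη1 : η 1 = 1)
    (hηγ : ∀ (u : V) (w : W), η (ιW u * w) = ιS u * η w + DS u (η w)) :
    ∀ α : Module.End ℂ V, (∀ u v : V, B (α u) v + B u (α v) = 0) →
      ∀ (TW : Module.End ℂ W) (TS : Module.End ℂ S),
        (∀ a b : W, TW (a * b) = TW a * b + a * TW b) →
        (∀ v : V, TW (ιW v) = ιW (α v)) →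
        (∀ a b : S, TS (a * b) = TS a * b + a * TS b) →
        (∀ v : V, TS (ιS v) = ιS (α v)) →
        ∀ w : W, η (TW w) = TS (η w) := by
  intro α hα TW TS hTWder hTWgen hTSder hTSgen
  -- derivations kill 1
  have hTW1 : TW 1 = 0 := by
    have h := hTWder 1 1
    rw [mul_one, mul_one, one_mul] at h
    exact (left_eq_add.mp h)
  have hTS1 : TS 1 = 0 := by
    have h := hTSder 1 1
    rw [mul_one, mul_one, one_mul] at h
    exact (left_eq_add.mp h)
  have hDS1 : ∀ u : V, DS u 1 = 0 := by
    intro u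
    have h := hDSder u 1 1
    rw [mul_one, mul_one, one_mul] at h
    exact (left_eq_add.mp h)
  have hTSc : ∀ c : ℂ, TS (algebraMap ℂ S c) = 0 := by
    intro c
    rw [Algebra.algebraMap_eq_smul_one, map_smul, hTS1, smul_zero]
  have hDSc : ∀ (u : V) (c : ℂ), DS u (algebraMap ℂ S c) = 0 := by
    intro u c
    rw [Algebra.algebraMap_eq_smul_one, map_smul, hDS1, smul_zero]
  -- S is generated by the image of ιS
  have hSgen : Algebra.adjoin ℂ (Set.range ιS) = ⊤ := by
    set A := Algebra.adjoin ℂ (Set.range ιS) with hA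
    let f : V →ₗ[ℂ] A :=
      { toFun := fun v => ⟨ιS v, Algebra.subset_adjoin ⟨v, rfl⟩⟩
        map_add' := fun u v => Subtype.ext (map_add ιS u v)
        map_smul' := fun c v => Subtype.ext (map_smul ιS c v) }
    obtain ⟨g, hg, -⟩ := hSuniv A f
    obtain ⟨g', -, hg'uniq⟩ := hSuniv S ιS
    have h1 : A.val.comp g = g' := by
      apply hg'uniq
      intro v
      simp [hg v, f]
    have h2 : AlgHom.id ℂ S = g' := hg'uniq _ (fun v => rfl)
    rw [eq_top_iff]
    intro s _
    have hs : A.val (g s) = s := by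
      have hcomp : A.val.comp g = AlgHom.id ℂ S := h1.trans h2.symm
      calc A.val (g s) = (A.val.comp g) s := rfl
        _ = s := by rw [hcomp]; rfl
    rw [← hs]
    exact (g s).2
  -- W is generated by the image of ιW
  have hWgen' : Algebra.adjoin ℂ (Set.range ιW) = ⊤ := by
    set A := Algebra.adjoin ℂ (Set.range ιW) with hA
    let f : V →ₗ[ℂ] A :=
      { toFun := fun v => ⟨ιW v, Algebra.subset_adjoin ⟨v, rfl⟩⟩
        map_add' := fun u v => Subtype.ext (map_add ιW u v)
        map_smul' := fun c v => Subtype.ext (map_smul ιW c v) }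
    have hrel : ∀ u v : V, f u * f v - f v * f u = algebraMap ℂ A (2 * B u v) := by
      intro u v
      apply Subtype.ext
      simpa [f] using hWrel u v
    obtain ⟨g, hg, -⟩ := hWuniv A f hrel
    obtain ⟨g', -, hg'uniq⟩ := hWuniv W ιW hWrel
    have h1 : A.val.comp g = g' := by
      apply hg'uniq
      intro v
      simp [hg v, f]
    have h2 : AlgHom.id ℂ W = g' := hg'uniq _ (fun v => rfl)
    rw [eq_top_iff]
    intro w _
    have hs : A.val (g w) = w := by
      have hcomp : A.val.comp g = AlgHom.id ℂ W := h1.trans h2.symm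
      calc A.val (g w) = (A.val.comp g) w := rfl
        _ = w := by rw [hcomp]; rfl
    rw [← hs]
    exact (g w).2
  -- commutator identity: TS ∘ DS u - DS u ∘ TS = DS (α u)
  have hcomm : ∀ (u : V) (s : S), TS (DS u s) = DS u (TS s) + DS (α u) s := by
    intro u s
    have hstop : s ∈ Algebra.adjoin ℂ (Set.range ιS) := by rw [hSgen]; trivial
    induction hstop using Algebra.adjoin_induction with
    | mem x hx =>
      obtain ⟨v, rfl⟩ := hx
      rw [hDSgen, hTSc, hTSgen, hDSgen, hDSgen, ← map_add]
      have hz : B u (α v) + B (α u) v = 0 := by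
        rw [add_comm]; exact hα u v
      rw [hz, map_zero]
    | algebraMap c =>
      rw [hDSc, hTSc, map_zero, hDSc, map_zero, add_zero]
    | add a b ha hb iha ihb =>
      rw [map_add, map_add, map_add, map_add, map_add, iha, ihb]
      abel
    | mul a b ha hb iha ihb =>
      rw [hDSder, hTSder, map_add, hTSder, hTSder, hDSder, map_add, hDSder, hDSder,
        iha, ihb]
      ring
  -- base case
  have hM1 : η (TW 1) = TS (η 1) := by rw [hTW1, hη1, map_zero, hTS1]
  -- inductive step: left multiplication by a generator
  have hstep : ∀ (u : V) (w : W), η (TW w) = TS (η w) →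
      η (TW (ιW u * w)) = TS (η (ιW u * w)) := by
    intro u w hw
    have h1 : TW (ιW u * w) = ιW (α u) * w + ιW u * TW w := by
      rw [hTWder, hTWgen]
    rw [h1, map_add, hηγ, hηγ, hηγ, hw, map_add, hTSder, hTSgen, hcomm]
    ring
  -- conclude by generation
  intro w
  have hmem : ∀ x ∈ Submonoid.closure (Set.range ιW),
      ∀ w' : W, η (TW w') = TS (η w') → η (TW (x * w')) = TS (η (x * w')) := by
    intro x hx
    induction hx using Submonoid.closure_induction with
    | mem y hy =>
      obtain ⟨u, rfl⟩ := hy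
      exact fun w' hw' => hstep u w' hw'
    | one => intro w' hw'; simpa using hw'
    | mul a b ha hb iha ihb =>
      intro w' hw'
      rw [mul_assoc]
      exact iha _ (ihb _ hw')
  let L : W →ₗ[ℂ] S := (η : W →ₗ[ℂ] S) ∘ₗ TW - TS ∘ₗ (η : W →ₗ[ℂ] S)
  have hLker : ∀ x : W, x ∈ LinearMap.ker L ↔ η (TW x) = TS (η x) := by
    intro x
    simp [L, LinearMap.mem_ker, sub_eq_zero]
  have htop : (Algebra.adjoin ℂ (Set.range ιW)).toSubmodule ≤ LinearMap.ker L := by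
    rw [Algebra.adjoin_eq_span]
    apply Submodule.span_le.mpr
    intro x hx
    rw [SetLike.mem_coe, hLker]
    have := hmem x hx 1 hM1
    simpa using this
  have hw : w ∈ LinearMap.ker L := by
    apply htop
    rw [hWgen']
    trivial
  exact (hLker w).mp hw
end

section
/- The linear map η: W(V) → S(V) defined by η(w) = γ(w)1 is a linear isomorphism, and for every u ∈ V and n ∈ ℤ_+ one has η(u^n) = u^{[n]}, where u^n denotes the n-th power of u in the Weyl algebra W(V) and u^{[n]} the n-th power of u in the symmetric algebra S(V). -/
set_option linter.unusedSectionVars false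
set_option linter.unusedVariables false
set_option linter.unnecessarySimpa false
set_option maxHeartbeats 1000000


namespace KostantAux
open MvPolynomial

variable {m : ℕ}

/-- total degree of an exponent vector -/
def degSum (β : Fin m →₀ ℕ) : ℕ := β.sum fun _ k => k

/-- `Lower n p` : all monomials of `p` have degree `< n`. -/
def Lower (n : ℕ) (p : MvPolynomial (Fin m) ℂ) : Prop :=
  ∀ β : Fin m →₀ ℕ, n ≤ degSum β → coeff β p = 0

noncomputable def msum (L : List (Fin m)) : Fin m →₀ ℕ := (L.map fun i => Finsupp.single i 1).sum

lemma degSum_add (a b : Fin m →₀ ℕ) : degSum (a + b) = degSum a + degSum b := by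
  simpa [degSum] using Finsupp.sum_add_index' (h := fun (_ : Fin m) (k : ℕ) => k)
    (fun _ => rfl) (fun _ _ _ => rfl) (f := a) (g := b)

lemma degSum_single (i : Fin m) (k : ℕ) : degSum (Finsupp.single i k) = k := by
  simp [degSum, Finsupp.sum_single_index]

@[simp] lemma msum_nil : msum ([] : List (Fin m)) = 0 := rfl

@[simp] lemma msum_cons (i : Fin m) (L : List (Fin m)) :
    msum (i :: L) = Finsupp.single i 1 + msum L := by
  simp [msum]

lemma degSum_msum (L : List (Fin m)) : degSum (msum L) = L.length := by
  induction L with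
  | nil => simp [degSum]
  | cons i L ih => simp [degSum_add, degSum_single, ih]; omega

lemma msum_eq_toFinsupp (L : List (Fin m)) : msum L = Multiset.toFinsupp (↑L : Multiset (Fin m)) := by
  induction L with
  | nil => simp [msum]
  | cons i L ih =>
      rw [msum_cons, ih, show ((↑(i :: L) : Multiset (Fin m))) = {i} + ↑L from rfl,
        map_add, Multiset.toFinsupp_singleton]

lemma msum_toList (s : Multiset (Fin m)) : msum s.toList = Multiset.toFinsupp s := by
  rw [msum_eq_toFinsupp, Multiset.coe_toList]

lemma degSum_toFinsupp (s : Multiset (Fin m)) :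
    degSum (Multiset.toFinsupp s) = Multiset.card s := by
  rw [← msum_toList, degSum_msum, Multiset.length_toList]

lemma Xprod (L : List (Fin m)) :
    ((L.map X).prod : MvPolynomial (Fin m) ℂ) = monomial (msum L) 1 := by
  induction L with
  | nil => simp
  | cons i L ih =>
      rw [List.map_cons, List.prod_cons, ih, msum_cons, X, monomial_mul, one_mul]

lemma lower_mono {a b : ℕ} (h : a ≤ b) {p : MvPolynomial (Fin m) ℂ} (hp : Lower a p) :
    Lower b p := fun β hβ => hp β (le_trans h hβ)

lemma lower_zero (n : ℕ) : Lower n (0 : MvPolynomial (Fin m) ℂ) := by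
  intro β _; simp

lemma lower_add {n : ℕ} {p q : MvPolynomial (Fin m) ℂ} (hp : Lower n p) (hq : Lower n q) :
    Lower n (p + q) := by
  intro β hβ; simp [coeff_add, hp β hβ, hq β hβ]

lemma lower_smul {n : ℕ} (c : ℂ) {p : MvPolynomial (Fin m) ℂ} (hp : Lower n p) :
    Lower n (c • p) := by
  intro β hβ; simp [hp β hβ]

lemma lower_monomial {n : ℕ} {β : Fin m →₀ ℕ} (h : degSum β < n) (c : ℂ) :
    Lower n (monomial β c) := by
  intro γ hγ
  rw [coeff_monomial, if_neg]
  rintro rfl; omega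

lemma lower_sum {n : ℕ} {ι : Type*} (t : Finset ι) (f : ι → MvPolynomial (Fin m) ℂ)
    (hf : ∀ i ∈ t, Lower n (f i)) : Lower n (∑ i ∈ t, f i) := by
  classical
  induction t using Finset.induction_on with
  | empty => simpa using lower_zero n
  | insert _ _ hx ih =>
      rw [Finset.sum_insert hx]
      exact lower_add (hf _ (Finset.mem_insert_self _ _))
        (ih fun i hi => hf i (Finset.mem_insert_of_mem hi))

lemma lower_X_mul {n : ℕ} (i : Fin m) {p : MvPolynomial (Fin m) ℂ} (hp : Lower n p) :
    Lower (n + 1) (X i * p) := by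
  intro β hβ
  rw [coeff_X_mul']
  split_ifs with h
  · apply hp
    have h1 : Finsupp.single i 1 ≤ β := by
      rw [Finsupp.single_le_iff]
      exact Nat.one_le_iff_ne_zero.2 (Finsupp.mem_support_iff.1 h)
    have h2 : β - Finsupp.single i 1 + Finsupp.single i 1 = β := tsub_add_cancel_of_le h1
    have := degSum_add (β - Finsupp.single i 1) (Finsupp.single i 1)
    rw [h2, degSum_single] at this
    omega
  · rfl

end KostantAux


namespace KostantAux
open MvPolynomial

variable {m : ℕ}

section D

variable {d : MvPolynomial (Fin m) ℂ →ₗ[ℂ] MvPolynomial (Fin m) ℂ}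
variable (hder : ∀ a b, d (a * b) = d a * b + a * d b)
variable (hX : ∀ j : Fin m, ∃ c : ℂ, d (X j) = C c)

include hder in
lemma d_one : d (1 : MvPolynomial (Fin m) ℂ) = 0 := by
  have h2 : d 1 = d 1 + d 1 := by simpa using hder 1 1
  exact add_eq_right.1 h2.symm

include hder hX in
lemma d_lower_Xprod : ∀ L : List (Fin m), Lower L.length (d ((L.map X).prod)) := by
  intro L
  induction L with
  | nil =>
      simp only [List.map_nil, List.prod_nil, d_one hder]
      exact lower_zero 0
  | cons j L ih =>
      rw [List.map_cons, List.prod_cons, hder]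
      obtain ⟨c, hc⟩ := hX j
      rw [hc]
      apply lower_add
      · -- C c * prod : degree = L.length < L.length + 1
        intro β hβ
        rw [coeff_C_mul, Xprod, coeff_monomial]
        rw [if_neg]
        · ring
        · rintro rfl
          rw [degSum_msum] at hβ
          simp only [List.length_cons] at hβ
          omega
      · exact lower_X_mul j ih

include hder hX in
lemma d_lower {k : ℕ} {p : MvPolynomial (Fin m) ℂ} (hp : Lower k p) : Lower k (d p) := by
  classical
  have hrep : d p = ∑ β ∈ p.support, d (monomial β (coeff β p)) := by
    conv_lhs => rw [as_sum p]
    exact map_sum d _ _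
  rw [hrep]
  apply lower_sum
  intro β hβ
  have hdeg : degSum β < k := by
    by_contra h
    exact (Finsupp.mem_support_iff.1 hβ) (hp β (le_of_not_gt h))
  -- monomial β c = c • (L.map X).prod  with L = (Finsupp.toMultiset β).toList
  set L : List (Fin m) := (Finsupp.toMultiset β).toList with hL
  have hmsum : msum L = β := by
    rw [hL, msum_toList, Finsupp.toMultiset_toFinsupp]
  have hlen : L.length = degSum β := by
    rw [← hmsum, degSum_msum]
  have hmono : monomial β (coeff β p) = (coeff β p) • ((L.map X).prod : MvPolynomial (Fin m) ℂ) := by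
    rw [Xprod, hmsum, smul_monomial, smul_eq_mul, mul_one]
  rw [hmono, map_smul]
  exact lower_smul _ (lower_mono (by omega) (hlen ▸ d_lower_Xprod hder hX L))

end D
end KostantAux


namespace KostantAux
open MvPolynomial

variable {m : ℕ}

section Seq

variable (Dv : Fin m → (MvPolynomial (Fin m) ℂ →ₗ[ℂ] MvPolynomial (Fin m) ℂ))

/-- the image of a Weyl word under η, computed recursively. -/
noncomputable def seq : List (Fin m) → MvPolynomial (Fin m) ℂ
  | [] => 1
  | i :: L => X i * seq L + Dv i (seq L)

variable (hder : ∀ i a b, Dv i (a * b) = Dv i a * b + a * Dv i b)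
variable (hX : ∀ i j : Fin m, ∃ c : ℂ, Dv i (X j) = C c)

include hder hX in
lemma seq_top : ∀ L : List (Fin m),
    ∃ r, seq Dv L = monomial (msum L) 1 + r ∧ Lower L.length r := by
  intro L
  induction L with
  | nil => exact ⟨0, by simp [seq, monomial_zero'], lower_zero 0⟩
  | cons i L ih =>
      obtain ⟨r, hr, hlow⟩ := ih
      refine ⟨X i * r + Dv i (seq Dv L), ?_, ?_⟩
      · rw [show seq Dv (i :: L) = X i * seq Dv L + Dv i (seq Dv L) from rfl, hr]
        rw [mul_add, msum_cons]
        have : X i * (monomial (msum L)) (1:ℂ) = monomial (Finsupp.single i 1 + msum L) 1 := by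
          rw [X, monomial_mul, one_mul]
        rw [this]; ring
      · apply lower_add
        · exact lower_X_mul i hlow
        · apply d_lower (hder i) (hX i)
          rw [hr]
          apply lower_add _ (lower_mono (Nat.le_succ _) hlow)
          exact lower_monomial (by rw [degSum_msum]; omega) 1

include hder hX in
lemma span_seq (p : MvPolynomial (Fin m) ℂ) :
    p ∈ Submodule.span ℂ (Set.range fun s : Multiset (Fin m) => seq Dv s.toList) := by
  classical
  suffices h : ∀ n (q : MvPolynomial (Fin m) ℂ), Lower n q →
      q ∈ Submodule.span ℂ (Set.range fun s : Multiset (Fin m) => seq Dv s.toList) by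
    apply h (p.totalDegree + 1)
    intro β hβ
    exact coeff_eq_zero_of_totalDegree_lt (show p.totalDegree < degSum β by omega)
  intro n
  induction n with
  | zero =>
      intro q hq
      have : q = 0 := by
        ext β; exact hq β (Nat.zero_le _)
      rw [this]; exact Submodule.zero_mem _
  | succ n ih =>
      intro q hq
      have hrep : q = ∑ β ∈ q.support, monomial β (coeff β q) := as_sum q
      rw [hrep]
      apply Submodule.sum_mem
      intro β hβ
      have hdeg : degSum β ≤ n := by
        by_contra h
        exact (Finsupp.mem_support_iff.1 hβ) (hq β (by omega))
      -- monomial β 1 = seq Dv (toMultiset β).toList - r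
      obtain ⟨r, hr, hlow⟩ := seq_top Dv hder hX (Finsupp.toMultiset β).toList
      have hms : msum (Finsupp.toMultiset β).toList = β := by
        rw [msum_toList, Finsupp.toMultiset_toFinsupp]
      rw [hms] at hr
      have hlen : (Finsupp.toMultiset β).toList.length = degSum β := by
        rw [← hms, degSum_msum, hms]
      have h1 : monomial β (coeff β q) = (coeff β q) • (seq Dv (Finsupp.toMultiset β).toList - r) := by
        rw [hr]
        rw [add_sub_cancel_right, smul_monomial, smul_eq_mul, mul_one]
      rw [h1]
      apply Submodule.smul_mem
      apply Submodule.sub_mem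
      · exact Submodule.subset_span ⟨Finsupp.toMultiset β, rfl⟩
      · exact ih r (lower_mono (by omega) (hlen ▸ hlow))

include hder hX in
lemma seq_indep (c : Multiset (Fin m) →₀ ℂ)
    (hc : (c.sum fun s r => r • seq Dv s.toList) = 0) : c = 0 := by
  classical
  suffices h : ∀ n (c : Multiset (Fin m) →₀ ℂ), (∀ s ∈ c.support, Multiset.card s < n) →
      (c.sum fun s r => r • seq Dv s.toList) = 0 → c = 0 by
    exact h ((c.support.sup Multiset.card) + 1) c
      (fun s hs => Nat.lt_succ_of_le (Finset.le_sup hs)) hc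
  intro n
  induction n with
  | zero =>
      intro c hsup _
      ext s
      by_contra h
      exact Nat.not_lt_zero _ (hsup s (Finsupp.mem_support_iff.2 h))
  | succ n ih =>
      intro c hsup hc
      have key : ∀ s0 ∈ c.support, Multiset.card s0 = n → c s0 = 0 := by
        intro s0 _ hcard
        have := congrArg (coeff (Multiset.toFinsupp s0)) hc
        rw [Finsupp.sum, coeff_sum, coeff_zero] at this
        rw [Finset.sum_eq_single s0] at this
        · obtain ⟨r, hr, hlow⟩ := seq_top Dv hder hX s0.toList
          rw [msum_toList] at hr
          have h0 : coeff (Multiset.toFinsupp s0) (seq Dv s0.toList) = 1 := by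
            rw [hr, coeff_add, coeff_monomial, if_pos rfl,
              hlow _ (by rw [Multiset.length_toList, degSum_toFinsupp]), add_zero]
          rw [coeff_smul, h0] at this
          simpa using this
        · intro s hs hne
          obtain ⟨r, hr, hlow⟩ := seq_top Dv hder hX s.toList
          rw [msum_toList] at hr
          have h0 : coeff (Multiset.toFinsupp s0) (seq Dv s.toList) = 0 := by
            rw [hr, coeff_add, coeff_monomial,
              if_neg (fun h => hne (Multiset.toFinsupp.injective h)),
              hlow _ (by
                rw [Multiset.length_toList, degSum_toFinsupp, hcard]
                have := hsup s hs; omega), add_zero]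
          rw [coeff_smul, h0, smul_zero]
        · intro h
          simp [Finsupp.notMem_support_iff.1 h]
      apply ih c
      · intro s hs
        rcases Nat.lt_succ_iff_lt_or_eq.1 (hsup s hs) with h | h
        · exact h
        · exact absurd (key s hs h) (Finsupp.mem_support_iff.1 hs)
      · exact hc

end Seq
end KostantAux


namespace KostantAux

variable {m : ℕ} {W : Type} [Ring W] [Algebra ℂ W]

def wp (g : Fin m → W) (L : List (Fin m)) : W := (L.map g).prod

def SpanW (g : Fin m → W) (n : ℕ) : Submodule ℂ W :=
  Submodule.span ℂ {w : W | ∃ L : List (Fin m), L.length ≤ n ∧ w = wp g L}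

@[simp] lemma wp_nil (g : Fin m → W) : wp g [] = 1 := rfl

@[simp] lemma wp_cons (g : Fin m → W) (i : Fin m) (L : List (Fin m)) :
    wp g (i :: L) = g i * wp g L := by simp [wp]

lemma wp_append (g : Fin m → W) (L L' : List (Fin m)) :
    wp g (L ++ L') = wp g L * wp g L' := by simp [wp]

lemma spanW_mono (g : Fin m → W) {j k : ℕ} (h : j ≤ k) : SpanW g j ≤ SpanW g k :=
  Submodule.span_mono (fun w ⟨L, hL, hw⟩ => ⟨L, le_trans hL h, hw⟩)

lemma wp_mem_spanW (g : Fin m → W) {L : List (Fin m)} {n : ℕ} (h : L.length ≤ n) :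
    wp g L ∈ SpanW g n :=
  Submodule.subset_span ⟨L, h, rfl⟩

lemma mul_spanW (g : Fin m → W) (x : Fin m) {k : ℕ} {w : W} (hw : w ∈ SpanW g k) :
    g x * w ∈ SpanW g (k + 1) := by
  induction hw using Submodule.span_induction with
  | mem w hw =>
      obtain ⟨L, hL, rfl⟩ := hw
      rw [← wp_cons]
      exact wp_mem_spanW g (by simpa using Nat.succ_le_succ hL)
  | zero => rw [mul_zero]; exact Submodule.zero_mem _
  | add a b _ _ ha hb => rw [mul_add]; exact Submodule.add_mem _ ha hb
  | smul c a _ ha => rw [mul_smul_comm]; exact Submodule.smul_mem _ c ha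

variable (g : Fin m → W) (hg : ∀ i j : Fin m, ∃ c : ℂ, g i * g j = g j * g i + algebraMap ℂ W c)

include hg in
lemma wp_perm : ∀ {L L' : List (Fin m)}, L.Perm L' → wp g L - wp g L' ∈ SpanW g (L.length - 1) := by
  intro L L' h
  induction h with
  | nil => simpa using Submodule.zero_mem _
  | @cons x L₁ L₂ h ih =>
      rcases L₁ with _ | ⟨a, t⟩
      · rw [List.Perm.nil_eq h]  -- L₂ = []
        simpa using Submodule.zero_mem _
      · have hlen : (a :: t).length - 1 + 1 = (x :: a :: t).length - 1 := by
          simp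
        rw [wp_cons g x (a :: t), wp_cons g x L₂, ← mul_sub]
        exact hlen ▸ mul_spanW g x ih
  | swap x y l =>
      -- (y :: x :: l).Perm (x :: y :: l)
      obtain ⟨c, hc⟩ := hg x y
      have : wp g (y :: x :: l) - wp g (x :: y :: l) = (-c) • wp g l := by
        rw [wp_cons g y (x :: l), wp_cons g x l, wp_cons g x (y :: l), wp_cons g y l,
          ← mul_assoc, ← mul_assoc, ← sub_mul, hc, Algebra.smul_def, map_neg,
          sub_add_cancel_left, neg_mul]
      rw [this]
      exact Submodule.smul_mem _ _ (wp_mem_spanW g (by simp))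
  | trans h1 h2 ih1 ih2 =>
      have := Submodule.add_mem _ ih1 (h1.length_eq ▸ ih2)
      simpa using this

include hg in
lemma wp_mem_span_multiset : ∀ (L : List (Fin m)),
    wp g L ∈ Submodule.span ℂ (Set.range fun s : Multiset (Fin m) => wp g s.toList) := by
  suffices h : ∀ n (L : List (Fin m)), L.length ≤ n →
      wp g L ∈ Submodule.span ℂ (Set.range fun s : Multiset (Fin m) => wp g s.toList) by
    exact fun L => h L.length L le_rfl
  intro n
  induction n with
  | zero =>
      intro L hL
      rw [List.length_eq_zero_iff.1 (Nat.le_zero.1 hL)]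
      exact Submodule.subset_span ⟨0, by simp⟩
  | succ n ih =>
      intro L hL
      have hperm : L.Perm ((↑L : Multiset (Fin m)).toList) :=
        (Multiset.coe_eq_coe.1 (Multiset.coe_toList (↑L : Multiset (Fin m)))).symm
      have h1 : wp g L = wp g ((↑L : Multiset (Fin m)).toList) +
          (wp g L - wp g ((↑L : Multiset (Fin m)).toList)) := by abel
      rw [h1]
      apply Submodule.add_mem
      · exact Submodule.subset_span ⟨(↑L : Multiset (Fin m)), rfl⟩
      · have hmem := wp_perm g hg hperm
        -- SpanW (L.length - 1) ≤ span range
        have hle : SpanW g (L.length - 1) ≤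
            Submodule.span ℂ (Set.range fun s : Multiset (Fin m) => wp g s.toList) := by
          rw [SpanW, Submodule.span_le]
          rintro w ⟨L', hL', rfl⟩
          exact ih L' (by omega)
        exact hle hmem

end KostantAux


open KostantAux MvPolynomial

/-  Kostant, (2.7)/(2.8):  the map `η : W(V) → S(V)`, `η(w) = γ(w)1`, is a linear
    isomorphism, and `η(uⁿ) = u^{[n]}` for `u ∈ V`, `n ∈ ℤ₊`, where `uⁿ` is the `n`-th Weyl
    power and `u^{[n]}` the `n`-th power in `S(V)`. -/

theorem eta_bijective_and_powers
    (V : Type) [AddCommGroup V] [Module ℂ V] [FiniteDimensional ℂ V]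
    (hdim : Even (Module.finrank ℂ V))
    (B : LinearMap.BilinForm ℂ V)
    (hBalt : ∀ v : V, B v v = 0)
    (hBnd : B.Nondegenerate)
    -- the symmetric algebra `S(V)`, given by its universal property
    (S : Type) [CommRing S] [Algebra ℂ S]
    (ιS : V →ₗ[ℂ] S)
    (hSuniv : ∀ (A : Type) [CommRing A] [Algebra ℂ A] (f : V →ₗ[ℂ] A),
      ∃! g : S →ₐ[ℂ] A, ∀ v : V, g (ιS v) = f v)
    -- the contraction operators `ι_S(u)`: derivations of `S(V)` with `ι_S(u)v = (u,v)`
    (DS : V →ₗ[ℂ] Module.End ℂ S)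
    (hDSder : ∀ (u : V) (a b : S), DS u (a * b) = DS u a * b + a * DS u b)
    (hDSgen : ∀ u v : V, DS u (ιS v) = algebraMap ℂ S (B u v))
    -- the Weyl algebra `W(V)`, given by its universal property
    (W : Type) [Ring W] [Algebra ℂ W]
    (ιW : V →ₗ[ℂ] W)
    (hWrel : ∀ u v : V, ιW u * ιW v - ιW v * ιW u = algebraMap ℂ W (2 * B u v))
    (hWuniv : ∀ (A : Type) [Ring A] [Algebra ℂ A] (f : V →ₗ[ℂ] A),
      (∀ u v : V, f u * f v - f v * f u = algebraMap ℂ A (2 * B u v)) →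
      ∃! g : W →ₐ[ℂ] A, ∀ v : V, g (ιW v) = f v)
    -- the homomorphism `γ : W(V) → End S(V)`, `γ(u) = ε_S(u) + ι_S(u)` for `u ∈ V`
    (γ : W →ₐ[ℂ] Module.End ℂ S)
    (hγ : ∀ u : V, γ (ιW u) = LinearMap.mulLeft ℂ (ιS u) + DS u) :
    Function.Bijective (fun w : W => γ w 1) ∧
    ∀ (u : V) (n : ℕ), γ (ιW u ^ n) 1 = ιS u ^ n := by
    classical
  -- ### part 2 : powers
  have hDS1 : ∀ u : V, DS u 1 = 0 := by
    intro u
    have h2 : DS u 1 = DS u 1 + DS u 1 := by simpa using hDSder u 1 1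
    exact add_eq_right.1 h2.symm
  have hpow0 : ∀ (u : V) (n : ℕ), DS u (ιS u ^ n) = 0 := by
    intro u n
    induction n with
    | zero => simpa using hDS1 u
    | succ n ih =>
        rw [pow_succ, hDSder, ih, hDSgen, hBalt, map_zero, mul_zero, zero_mul, add_zero]
  have hpows : ∀ (u : V) (n : ℕ), γ (ιW u ^ n) 1 = ιS u ^ n := by
    intro u n
    induction n with
    | zero => simp
    | succ n ih =>
        rw [pow_succ', map_mul, Module.End.mul_apply, ih, hγ, LinearMap.add_apply,
          LinearMap.mulLeft_apply, hpow0, add_zero, pow_succ']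
  refine ⟨?_, hpows⟩
  -- ### setup : basis, polynomial model
  set m := Module.finrank ℂ V with hm
  let b : Module.Basis (Fin m) ℂ V := Module.finBasis ℂ V
  let fP : V →ₗ[ℂ] MvPolynomial (Fin m) ℂ := b.constr ℂ (fun i => MvPolynomial.X i)
  obtain ⟨e, he, -⟩ := hSuniv (MvPolynomial (Fin m) ℂ) fP
  let h : MvPolynomial (Fin m) ℂ →ₐ[ℂ] S := MvPolynomial.aeval (fun i => ιS (b i))
  have heb : ∀ i, e (ιS (b i)) = MvPolynomial.X i := by
    intro i; rw [he, Module.Basis.constr_basis]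
  have hhX : ∀ i, h (MvPolynomial.X i) = ιS (b i) := fun i => MvPolynomial.aeval_X _ i
  have hhe : ∀ s : S, h (e s) = s := by
    obtain ⟨gid, -, huniq⟩ := hSuniv S ιS
    have h1 : h.comp e = gid := by
      apply huniq
      intro v
      rw [AlgHom.comp_apply, he]
      have hfv : fP v = ∑ i, b.repr v i • MvPolynomial.X i := by
        rw [Module.Basis.constr_apply_fintype]
        simp [Module.Basis.equivFun_apply]
      rw [hfv, map_sum]
      have : ∀ i, h (b.repr v i • MvPolynomial.X i) = b.repr v i • ιS (b i) := by
        intro i; rw [map_smul, hhX]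
      simp only [this, ← map_smul ιS, ← map_sum ιS, Module.Basis.sum_repr]
    have h2 : AlgHom.id ℂ S = gid := huniq _ (fun v => rfl)
    intro s
    have := DFunLike.congr_fun (h1.trans h2.symm) s
    simpa using this
  have heh : ∀ p : MvPolynomial (Fin m) ℂ, e (h p) = p := by
    have : e.comp h = AlgHom.id ℂ (MvPolynomial (Fin m) ℂ) := by
      apply MvPolynomial.algHom_ext
      intro i
      rw [AlgHom.comp_apply, hhX, heb, AlgHom.id_apply]
    intro p
    have := DFunLike.congr_fun this p
    simpa using this
  -- the linear maps η, η'
  let ηl : W →ₗ[ℂ] S :=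
    { toFun := fun w => γ w 1
      map_add' := fun w w' => show γ (w + w') 1 = γ w 1 + γ w' 1 by rw [map_add]; rfl
      map_smul' := fun c w => show γ (c • w) 1 = c • γ w 1 by rw [map_smul]; rfl }
  let η'l : W →ₗ[ℂ] MvPolynomial (Fin m) ℂ := e.toLinearMap ∘ₗ ηl
  let Dv : Fin m → (MvPolynomial (Fin m) ℂ →ₗ[ℂ] MvPolynomial (Fin m) ℂ) := fun i =>
    e.toLinearMap ∘ₗ (DS (b i) : Module.End ℂ S) ∘ₗ h.toLinearMap
  have hder : ∀ i (p q : MvPolynomial (Fin m) ℂ), Dv i (p * q) = Dv i p * q + p * Dv i q := by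
    intro i p q
    simp only [Dv, LinearMap.comp_apply, AlgHom.toLinearMap_apply]
    rw [map_mul, hDSder, map_add, map_mul, map_mul, heh, heh]
  have hXc : ∀ i j : Fin m, ∃ c : ℂ, Dv i (MvPolynomial.X j) = MvPolynomial.C c := by
    intro i j
    refine ⟨B (b i) (b j), ?_⟩
    simp only [Dv, LinearMap.comp_apply, AlgHom.toLinearMap_apply]
    rw [hhX, hDSgen, AlgHom.commutes, MvPolynomial.algebraMap_eq]
  -- the Weyl generators
  let g : Fin m → W := fun i => ιW (b i)
  have hg : ∀ i j : Fin m, ∃ c : ℂ, g i * g j = g j * g i + algebraMap ℂ W c := by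
    intro i j
    refine ⟨2 * B (b i) (b j), ?_⟩
    have := sub_eq_iff_eq_add.1 (hWrel (b i) (b j))
    rw [this, add_comm]
  -- η' on words
  have hrec : ∀ (i : Fin m) (w : W),
      η'l (ιW (b i) * w) = MvPolynomial.X i * η'l w + Dv i (η'l w) := by
    intro i w
    show e (γ (ιW (b i) * w) 1) = _
    rw [map_mul, Module.End.mul_apply, hγ, LinearMap.add_apply, LinearMap.mulLeft_apply,
      map_add, map_mul, heb]
    congr 1
    show e (DS (b i) (γ w 1)) = Dv i (η'l w)
    simp only [Dv, η'l, LinearMap.comp_apply, AlgHom.toLinearMap_apply]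
    rw [hhe]
    rfl
  have hseq : ∀ L : List (Fin m), η'l (wp g L) = seq Dv L := by
    intro L
    induction L with
    | nil =>
        show e (γ (wp g []) 1) = (1 : MvPolynomial (Fin m) ℂ)
        rw [wp_nil, map_one γ, Module.End.one_apply, map_one e]
    | cons i L ih =>
        rw [wp_cons, show seq Dv (i :: L) = MvPolynomial.X i * seq Dv L + Dv i (seq Dv L)
          from rfl, ← ih]
        exact hrec i (wp g L)
  -- every element of W is a combination of multiset words
  have hadj : ∀ w : W, w ∈ Algebra.adjoin ℂ (Set.range ιW) := by
    set A := Algebra.adjoin ℂ (Set.range ιW) with hA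
    let f : V →ₗ[ℂ] A := ιW.codRestrict (Subalgebra.toSubmodule A)
      (fun v => Algebra.subset_adjoin ⟨v, rfl⟩)
    have hfrel : ∀ u v : V, f u * f v - f v * f u = algebraMap ℂ A (2 * B u v) := by
      intro u v
      apply Subtype.ext
      push_cast
      rw [← map_mul]
      exact hWrel u v
    obtain ⟨g0, hg0, -⟩ := hWuniv A f hfrel
    obtain ⟨gid, -, huniq⟩ := hWuniv W ιW hWrel
    have h1 : A.val.comp g0 = gid := huniq _ (fun v => by rw [AlgHom.comp_apply, hg0]; rfl)
    have h2 : AlgHom.id ℂ W = gid := huniq _ (fun v => rfl)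
    intro w
    have h3 : (A.val.comp g0) w = w := by rw [h1, ← h2]; rfl
    rw [← h3]
    exact (g0 w).2
  have hword : ∀ w : W, w ∈ Submodule.span ℂ {x : W | ∃ L : List (Fin m), x = wp g L} := by
    intro w
    set Msp := Submodule.span ℂ {x : W | ∃ L : List (Fin m), x = wp g L} with hMsp
    have h1 : (1 : W) ∈ Msp := Submodule.subset_span ⟨[], rfl⟩
    have hmulle : Msp * Msp ≤ Msp := by
      rw [hMsp, Submodule.span_mul_span]
      apply Submodule.span_le.2
      rintro _ ⟨x, ⟨L, rfl⟩, y, ⟨L', rfl⟩, rfl⟩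
      exact Submodule.subset_span ⟨L ++ L', (wp_append g L L').symm⟩
    let SA : Subalgebra ℂ W := Submodule.toSubalgebra Msp h1
      (fun x y hx hy => hmulle (Submodule.mul_mem_mul hx hy))
    have hWle : Set.range ιW ⊆ SA := by
      rintro _ ⟨v, rfl⟩
      have hv : ιW v = ∑ i, b.repr v i • ιW (b i) := by
        conv_lhs => rw [← Module.Basis.sum_repr b v, map_sum]
        simp
      show ιW v ∈ Msp
      rw [hv]
      exact Submodule.sum_mem _ (fun i _ => Submodule.smul_mem _ _
        (Submodule.subset_span ⟨[i], by simp [wp, g]⟩))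
    exact Algebra.adjoin_le hWle (hadj w)
  have hspanW : ∀ w : W,
      w ∈ Submodule.span ℂ (Set.range fun s : Multiset (Fin m) => wp g s.toList) := by
    intro w
    refine Submodule.span_le.2 ?_ (hword w)
    rintro _ ⟨L, rfl⟩
    exact wp_mem_span_multiset g hg L
  -- ### surjectivity
  have hsurj : Function.Surjective (fun w : W => γ w 1) := by
    intro s
    have hp := span_seq Dv hder hXc (e s)
    have hsub : Submodule.span ℂ (Set.range fun t : Multiset (Fin m) => seq Dv t.toList) ≤
        LinearMap.range η'l := by
      rw [Submodule.span_le]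
      rintro _ ⟨t, rfl⟩
      exact ⟨wp g t.toList, hseq t.toList⟩
    obtain ⟨w, hw⟩ := hsub hp
    refine ⟨w, ?_⟩
    have h5 : h (η'l w) = h (e s) := congrArg h hw
    have h6 : η'l w = e (γ w 1) := rfl
    rw [h6, hhe, hhe] at h5
    exact h5
  -- ### injectivity
  have hinj : Function.Injective (fun w : W => γ w 1) := by
    intro w1 w2 h12
    have h0 : η'l (w1 - w2) = 0 := by
      show e (γ (w1 - w2) 1) = 0
      rw [map_sub, LinearMap.sub_apply]
      simp only at h12
      rw [h12, sub_self, map_zero]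
    obtain ⟨c, hcomb⟩ := Finsupp.mem_span_range_iff_exists_finsupp.1 (hspanW (w1 - w2))
    have hζ : (c.sum fun s r => r • seq Dv s.toList) = 0 := by
      have h7 := congrArg η'l hcomb
      rw [map_finsuppSum] at h7
      simp only [map_smul, hseq] at h7
      rw [h7, h0]
    have hc0 := seq_indep Dv hder hXc c hζ
    rw [hc0] at hcomb
    simp only [Finsupp.sum_zero_index] at hcomb
    exact sub_eq_zero.1 hcomb.symm
  exact ⟨hinj, hsurj⟩
end

section
/- The bilinear form B_{S(V)} on S(V) is non-singular; its restriction to S^n(V) is non-singular for every n, is symmetric when n is even, and is alternating when n is odd. -/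
open Finset

lemma aux_exists_perm {n d : ℕ} (j k : Fin n → Fin d)
    (h : ∀ a, (univ.filter fun i => j i = a).card = (univ.filter fun i => k i = a).card) :
    ∃ σ : Equiv.Perm (Fin n), j ∘ σ = k := by
  have fib : ∀ a : Fin d, {i // k i = a} ≃ {i // j i = a} := fun a =>
    Fintype.equivOfCardEq (by simp only [Fintype.card_subtype]; exact (h a).symm)
  refine ⟨(Equiv.sigmaFiberEquiv k).symm.trans
      ((Equiv.sigmaCongrRight fib).trans (Equiv.sigmaFiberEquiv j)), funext fun i => ?_⟩
  show j ((fib (k i) ⟨i, rfl⟩).1) = k i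
  exact (fib (k i) ⟨i, rfl⟩).2

lemma aux_card_perm {n d : ℕ} (j k : Fin n → Fin d) :
    (univ.filter fun σ : Equiv.Perm (Fin n) => k ∘ σ = j).card =
      if (∑ i, Finsupp.single (j i) (1 : ℕ)) = ∑ i, Finsupp.single (k i) 1 then
        (univ.filter fun σ : Equiv.Perm (Fin n) => k ∘ σ = k).card
      else 0 := by
  split_ifs with hm
  · have hcount : ∀ a, (univ.filter fun i => k i = a).card =
        (univ.filter fun i => j i = a).card := by
      intro a
      have h1 := DFunLike.congr_fun hm a
      simpa [Finsupp.finset_sum_apply, Finsupp.single_apply, Finset.sum_boole] using h1.symm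
    obtain ⟨τ, hτ⟩ := aux_exists_perm k j hcount
    refine (Finset.card_bij (fun σ _ => σ * τ) ?_ ?_ ?_).symm
    · intro σ hσ
      simp only [mem_filter, mem_univ, true_and] at hσ ⊢
      funext i
      show k (σ (τ i)) = j i
      rw [show k (σ (τ i)) = k (τ i) from congrFun hσ (τ i)]
      exact congrFun hτ i
    · intro σ1 h1 σ2 h2 hh
      exact mul_right_cancel hh
    · intro σ' hσ'
      simp only [mem_filter, mem_univ, true_and] at hσ' ⊢
      refine ⟨σ' * τ⁻¹, ?_, by group⟩
      funext i
      show k (σ' (τ⁻¹ i)) = k i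
      rw [show k (σ' (τ⁻¹ i)) = j (τ⁻¹ i) from congrFun hσ' (τ⁻¹ i)]
      rw [← congrFun hτ (τ⁻¹ i)]
      simp
  · rw [Finset.card_eq_zero, Finset.filter_eq_empty_iff]
    intro σ _ hσ
    apply hm
    subst hσ
    exact Equiv.sum_comp σ (fun i => Finsupp.single (k i) (1:ℕ))

theorem form_on_S_nondegenerate_symm_alt
    (V : Type) [AddCommGroup V] [Module ℂ V] [FiniteDimensional ℂ V]
    (hdim : Even (Module.finrank ℂ V))
    (B : LinearMap.BilinForm ℂ V)
    (hBalt : ∀ v : V, B v v = 0)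
    (hBnd : B.Nondegenerate)
    -- the symmetric algebra `S(V)`, given by its universal property
    (S : Type) [CommRing S] [Algebra ℂ S]
    (ιS : V →ₗ[ℂ] S)
    (hSuniv : ∀ (A : Type) [CommRing A] [Algebra ℂ A] (f : V →ₗ[ℂ] A),
      ∃! g : S →ₐ[ℂ] A, ∀ v : V, g (ιS v) = f v)
    -- the grading `S(V) = ⊕ₙ Sⁿ(V)`
    (𝒜 : ℕ → Submodule ℂ S) [GradedAlgebra 𝒜]
    (h𝒜 : ∀ n : ℕ, 𝒜 n = LinearMap.range ιS ^ n)
    -- the bilinear form `B_{S(V)}`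
    (BS : LinearMap.BilinForm ℂ S)
    (hBSorth : ∀ m n : ℕ, m ≠ n → ∀ w ∈ 𝒜 m, ∀ z ∈ 𝒜 n, BS w z = 0)
    (hBSperm : ∀ (n : ℕ) (u v : Fin n → V),
      BS (∏ i, ιS (u i)) (∏ i, ιS (v i)) =
        ∑ σ : Equiv.Perm (Fin n), ∏ i, B (u i) (v (σ i))) :
    -- `B_{S(V)}` is non-singular
    (∀ w : S, (∀ z : S, BS w z = 0) → w = 0) ∧
    (∀ z : S, (∀ w : S, BS w z = 0) → z = 0) ∧
    -- its restriction to each `Sⁿ(V)` is non-singular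
    (∀ n : ℕ, ∀ w ∈ 𝒜 n, (∀ z ∈ 𝒜 n, BS w z = 0) → w = 0) ∧
    -- symmetric on `Sⁿ(V)` for `n` even
    (∀ n : ℕ, Even n → ∀ w ∈ 𝒜 n, ∀ z ∈ 𝒜 n, BS w z = BS z w) ∧
    -- alternating on `Sⁿ(V)` for `n` odd
    (∀ n : ℕ, Odd n → ∀ w ∈ 𝒜 n, ∀ z ∈ 𝒜 n, BS w z = - BS z w) := by
  classical
  -- Setup: bases
  set d := Module.finrank ℂ V with hd
  let c : Module.Basis (Fin d) ℂ V := Module.finBasis ℂ V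
  let e : Module.Basis (Fin d) ℂ V := B.dualBasis hBnd c
  have hec : ∀ i i' : Fin d, B (e i) (c i') = if i' = i then 1 else 0 := fun i i' =>
    B.apply_dualBasis_left hBnd c i i'
  -- monomials belong to the grading
  have hmem : ∀ (n : ℕ) (u : Fin n → V), (∏ i, ιS (u i)) ∈ 𝒜 n := by
    intro n u
    rw [h𝒜, Submodule.pow_eq_span_pow_set]
    apply Submodule.subset_span
    rw [Set.mem_pow]
    exact ⟨fun i => ⟨ιS (u i), ⟨u i, rfl⟩⟩, by simp [List.prod_ofFn]⟩
  -- spanning of the graded pieces by basis monomials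
  have hspan : ∀ n : ℕ, 𝒜 n =
      Submodule.span ℂ {x : S | ∃ u : Fin n → Fin d, x = ∏ i, ιS (e (u i))} := by
    intro n
    rw [h𝒜]
    have hr : LinearMap.range ιS = Submodule.span ℂ (Set.range fun i => ιS (e i)) := by
      conv_lhs => rw [LinearMap.range_eq_map, ← e.span_eq, Submodule.map_span]
      congr 1
      ext x
      simp [Set.range_comp]
    rw [hr, Submodule.span_pow]
    congr 1
    ext x
    rw [Set.mem_pow]
    constructor
    · rintro ⟨f, hf⟩
      choose u hu using fun i => (f i).2
      exact ⟨u, by rw [← hf, List.prod_ofFn]; exact (Finset.prod_congr rfl fun i _ => (hu i)).symm⟩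
    · rintro ⟨u, rfl⟩
      exact ⟨fun i => ⟨ιS (e (u i)), ⟨u i, rfl⟩⟩, by simp [List.prod_ofFn]⟩
  -- skew-symmetry of B
  have hskew : ∀ x y : V, B x y = - B y x := by
    intro x y
    have h0 := hBalt (x + y)
    simp only [map_add, LinearMap.add_apply, hBalt] at h0
    linear_combination h0
  -- the flip identity on graded pieces
  have hflip : ∀ (n : ℕ), ∀ w ∈ 𝒜 n, ∀ z ∈ 𝒜 n, BS z w = (-1 : ℂ) ^ n * BS w z := by
    intro n w hw z hz
    rw [hspan n] at hw hz
    induction hw, hz using Submodule.span_induction₂ with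
    | mem_mem x y hx hy =>
      obtain ⟨u, rfl⟩ := hx
      obtain ⟨v, rfl⟩ := hy
      rw [hBSperm, hBSperm, Finset.mul_sum]
      rw [← Equiv.sum_comp (Equiv.inv (Equiv.Perm (Fin n)))
        (fun σ => ∏ i, B (e (v i)) (e (u (σ i))))]
      refine Finset.sum_congr rfl fun σ _ => ?_
      simp only [Equiv.inv_apply]
      have h1 : ∀ i, B (e (v i)) (e (u (σ⁻¹ i))) = -1 * B (e (u (σ⁻¹ i))) (e (v i)) := by
        intro i; rw [hskew]; ring
      calc ∏ i, B (e (v i)) (e (u (σ⁻¹ i)))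
          = ∏ i, (-1 : ℂ) * B (e (u (σ⁻¹ i))) (e (v i)) := Finset.prod_congr rfl fun i _ => h1 i
        _ = (-1 : ℂ) ^ n * ∏ i, B (e (u (σ⁻¹ i))) (e (v i)) := by
            rw [Finset.prod_mul_distrib, Finset.prod_const, Finset.card_univ, Fintype.card_fin]
        _ = (-1 : ℂ) ^ n * ∏ i, B (e (u i)) (e (v (σ i))) := by
            congr 1
            rw [← Equiv.prod_comp σ (fun i => B (e (u (σ⁻¹ i))) (e (v i)))]
            simp
    | zero_left y hy => simp
    | zero_right x hx => simp
    | add_left x y z hx hy hz h1 h2 =>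
      simp only [map_add, LinearMap.add_apply, h1, h2]; ring
    | add_right x y z hx hy hz h1 h2 =>
      simp only [map_add, LinearMap.add_apply, h1, h2]; ring
    | smul_left r x y hx hy h1 =>
      simp only [map_smul, LinearMap.smul_apply, h1, smul_eq_mul]; ring
    | smul_right r x y hx hy h1 =>
      simp only [map_smul, LinearMap.smul_apply, h1, smul_eq_mul]; ring
  -- algebra maps to and from MvPolynomial
  obtain ⟨g0, hg0, hg0uniq⟩ := hSuniv S ιS
  obtain ⟨g, hg, -⟩ := hSuniv (MvPolynomial (Fin d) ℂ) (e.constr ℂ MvPolynomial.X)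
  let h : MvPolynomial (Fin d) ℂ →ₐ[ℂ] S := MvPolynomial.aeval fun i => ιS (e i)
  have hge : ∀ i, g (ιS (e i)) = MvPolynomial.X i := fun i => by
    rw [hg]; exact e.constr_basis ℂ MvPolynomial.X i
  have hhg : ∀ w : S, h (g w) = w := by
    have hlin : (h.toLinearMap ∘ₗ (g.toLinearMap ∘ₗ ιS)) = ιS := by
      apply e.ext
      intro i
      simp only [LinearMap.coe_comp, Function.comp_apply, AlgHom.toLinearMap_apply]
      rw [hge i]
      simp [h]
    have h1 := hg0uniq (h.comp g) (fun v => by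
      have := DFunLike.congr_fun hlin v
      simpa using this)
    have h2 := hg0uniq (AlgHom.id ℂ S) (fun v => rfl)
    intro w
    have heq : h.comp g = AlgHom.id ℂ S := h1.trans h2.symm
    calc h (g w) = (h.comp g) w := rfl
      _ = w := by rw [heq]; rfl
  have hprodX : ∀ (n : ℕ) (f : Fin n → Fin d),
      (∏ i, (MvPolynomial.X (f i) : MvPolynomial (Fin d) ℂ)) =
        MvPolynomial.monomial (∑ i, Finsupp.single (f i) 1) 1 := by
    intro n
    induction n with
    | zero => intro f; simp
    | succ m ih =>
      intro f
      rw [Fin.prod_univ_succ, Fin.sum_univ_succ, ih (fun i => f i.succ)]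
      rw [show (MvPolynomial.X (f 0) : MvPolynomial (Fin d) ℂ) =
          MvPolynomial.monomial (Finsupp.single (f 0) 1) 1 by
        rw [← MvPolynomial.X_pow_eq_monomial, pow_one]]
      rw [MvPolynomial.monomial_mul, one_mul]
  -- key computation: pairing against test monomials extracts coefficients
  have hA : ∀ (n : ℕ) (w : S), w ∈ 𝒜 n → ∀ k : Fin n → Fin d,
      BS w (∏ i, ιS (c (k i))) =
        ((univ.filter fun σ : Equiv.Perm (Fin n) => k ∘ σ = k).card : ℂ) *
          MvPolynomial.coeff (∑ i, Finsupp.single (k i) 1) (g w) := by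
    intro n w hw
    rw [hspan n] at hw
    induction hw using Submodule.span_induction with
    | mem x hx =>
      obtain ⟨j, rfl⟩ := hx
      intro k
      rw [hBSperm]
      have hL : ∀ σ : Equiv.Perm (Fin n),
          (∏ i, B (e (j i)) (c (k (σ i)))) = if k ∘ σ = j then (1:ℂ) else 0 := by
        intro σ
        calc (∏ i, B (e (j i)) (c (k (σ i))))
            = ∏ i, if k (σ i) = j i then (1:ℂ) else 0 :=
              Finset.prod_congr rfl fun i _ => hec (j i) (k (σ i))
          _ = if k ∘ σ = j then 1 else 0 := by
              rw [Fintype.prod_boole]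
              simp [funext_iff, Function.comp]
      rw [Finset.sum_congr rfl fun σ _ => hL σ, Finset.sum_boole]
      rw [map_prod]
      rw [Finset.prod_congr rfl fun i _ => hge (j i), hprodX n j]
      rw [MvPolynomial.coeff_monomial]
      rw [aux_card_perm j k]
      split_ifs <;> push_cast <;> ring
    | zero => intro k; simp
    | add x y hx hy h1 h2 =>
      intro k
      simp only [map_add, LinearMap.add_apply, h1 k, h2 k, MvPolynomial.coeff_add]
      ring
    | smul r x hx h1 =>
      intro k
      simp only [map_smul, LinearMap.smul_apply, h1 k, MvPolynomial.coeff_smul, smul_eq_mul]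
      ring
  -- coefficients not of monomial shape vanish
  have hB0 : ∀ (n : ℕ) (w : S), w ∈ 𝒜 n → ∀ m : Fin d →₀ ℕ,
      (∀ k : Fin n → Fin d, (∑ i, Finsupp.single (k i) 1) ≠ m) →
        MvPolynomial.coeff m (g w) = 0 := by
    intro n w hw
    rw [hspan n] at hw
    induction hw using Submodule.span_induction with
    | mem x hx =>
      obtain ⟨j, rfl⟩ := hx
      intro m hm
      rw [map_prod, Finset.prod_congr rfl fun i _ => hge (j i), hprodX n j]
      rw [MvPolynomial.coeff_monomial, if_neg (hm j)]
    | zero => intro m hm; simp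
    | add x y hx hy h1 h2 =>
      intro m hm
      simp only [map_add, MvPolynomial.coeff_add, h1 m hm, h2 m hm, add_zero]
    | smul r x hx h1 =>
      intro m hm
      simp only [map_smul, MvPolynomial.coeff_smul, h1 m hm, smul_eq_mul, mul_zero]
  -- nondegeneracy on each graded piece
  have hgnd : ∀ (n : ℕ) (w : S), w ∈ 𝒜 n → (∀ z ∈ 𝒜 n, BS w z = 0) → w = 0 := by
    intro n w hw hz
    have hgw : g w = 0 := by
      apply MvPolynomial.ext
      intro m
      rw [MvPolynomial.coeff_zero]
      by_cases hex : ∃ k : Fin n → Fin d, (∑ i, Finsupp.single (k i) 1) = m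
      · obtain ⟨k, rfl⟩ := hex
        have h1 := hA n w hw k
        rw [hz _ (hmem n fun i => c (k i))] at h1
        have hone : (1 : Equiv.Perm (Fin n)) ∈
            univ.filter fun σ : Equiv.Perm (Fin n) => k ∘ σ = k := by
          simp only [Finset.mem_filter, Finset.mem_univ, true_and]
          funext i
          rfl
        have hNk : (((univ.filter fun σ : Equiv.Perm (Fin n) => k ∘ σ = k).card : ℕ) : ℂ) ≠ 0 :=
          Nat.cast_ne_zero.mpr (Finset.card_ne_zero_of_mem hone)
        exact (mul_eq_zero.mp h1.symm).resolve_left hNk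
      · exact hB0 n w hw m (fun k hk => hex ⟨k, hk⟩)
    rw [← hhg w, hgw, map_zero]
  -- assemble everything
  refine ⟨?_, ?_, fun n w hw hz => hgnd n w hw hz, ?_, ?_⟩
  · intro w hzero
    have hdec : ∀ n : ℕ, (DirectSum.decompose 𝒜 w n : S) = 0 := by
      intro n
      apply hgnd n _ (SetLike.coe_mem _)
      intro z hz
      have hsum : ∑ m ∈ (DirectSum.decompose 𝒜 w).support,
          BS (DirectSum.decompose 𝒜 w m : S) z = BS w z := by
        conv_rhs => rw [← DirectSum.sum_support_decompose 𝒜 w]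
        rw [map_sum, LinearMap.sum_apply]
      have h1 : BS (DirectSum.decompose 𝒜 w n : S) z =
          ∑ m ∈ (DirectSum.decompose 𝒜 w).support,
            BS (DirectSum.decompose 𝒜 w m : S) z := by
        refine (Finset.sum_eq_single n
          (fun b _ hb => hBSorth b n hb _ (SetLike.coe_mem _) z hz) (fun hn => ?_)).symm
        rw [DFinsupp.notMem_support_iff.mp hn]
        simp
      rw [h1, hsum, hzero z]
    calc w = ∑ n ∈ (DirectSum.decompose 𝒜 w).support, (DirectSum.decompose 𝒜 w n : S) :=
          (DirectSum.sum_support_decompose 𝒜 w).symm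
      _ = 0 := Finset.sum_eq_zero fun n _ => hdec n
  · intro z hzero
    have hdec : ∀ n : ℕ, (DirectSum.decompose 𝒜 z n : S) = 0 := by
      intro n
      apply hgnd n _ (SetLike.coe_mem _)
      intro z' hz'
      rw [hflip n z' hz' _ (SetLike.coe_mem _)]
      have h2 : BS z' (DirectSum.decompose 𝒜 z n : S) = 0 := by
        have hsum : ∑ m ∈ (DirectSum.decompose 𝒜 z).support,
            BS z' (DirectSum.decompose 𝒜 z m : S) = BS z' z := by
          conv_rhs => rw [← DirectSum.sum_support_decompose 𝒜 z]
          rw [map_sum]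
        have h1 : BS z' (DirectSum.decompose 𝒜 z n : S) =
            ∑ m ∈ (DirectSum.decompose 𝒜 z).support,
              BS z' (DirectSum.decompose 𝒜 z m : S) := by
          refine (Finset.sum_eq_single n
            (fun b _ hb => hBSorth n b (fun hh => hb hh.symm) z' hz' _ (SetLike.coe_mem _))
            (fun hn => ?_)).symm
          rw [DFinsupp.notMem_support_iff.mp hn]
          simp
        rw [h1, hsum, hzero z']
      rw [h2, mul_zero]
    calc z = ∑ n ∈ (DirectSum.decompose 𝒜 z).support, (DirectSum.decompose 𝒜 z n : S) :=
          (DirectSum.sum_support_decompose 𝒜 z).symm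
      _ = 0 := Finset.sum_eq_zero fun n _ => hdec n
  · intro n hn w hw z hz
    rw [hflip n w hw z hz, Even.neg_one_pow hn, one_mul]
  · intro n hn w hw z hz
    rw [hflip n w hw z hz, Odd.neg_one_pow hn]
    ring
end
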